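/- arXiv:math/0508650 — 10 statements merged into one kernel-verified Lean document; each statement's English description precedes it below -/
import Mathlib

section
/- Let 2 ≤ n₀ < ∞ and let S be submultiplicative on [1,n₀]. Then there exists ε₀ > 0 such that for all 0 < ε < ε₀, the extension S_ε of S to [1, n₀²] defined by S_ε(x) = S(x) for 1 ≤ x ≤ n₀ and S_ε(x) = S(n₀) + ε(x − n₀) for n₀ < x ≤ n₀² is submultiplicative on [1, n₀²]. -/
/-- `S` is piecewise linear on `[a,b]`: affine on each interval of some finite
partition `a = t 0 < t 1 < ⋯ < t m = b`. -/
def PiecewiseLinearOn (S : ℝ → ℝ) (a b : ℝ) : Prop :=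
  ∃ m : ℕ, ∃ t : ℕ → ℝ, 0 < m ∧ t 0 = a ∧ t m = b ∧
    (∀ i < m, t i < t (i + 1)) ∧
    ∀ i < m, ∃ c d : ℝ, ∀ x ∈ Set.Icc (t i) (t (i + 1)), S x = c * x + d

/-- `S` is submultiplicative on `[1, n₀]`:
(a) piecewise linear, continuous, strictly increasing and concave on `[1,n₀]`;
(b) `S x = x` for `1 ≤ x ≤ 2`;
(c) `S (x*y) ≤ S x * S y` whenever `1 ≤ x`, `1 ≤ y` and `x*y ≤ n₀`. -/
structure IsSubmultOn (S : ℝ → ℝ) (n₀ : ℝ) : Prop where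
  piecewiseLinear : PiecewiseLinearOn S 1 n₀
  continuousOn : ContinuousOn S (Set.Icc 1 n₀)
  strictMonoOn : StrictMonoOn S (Set.Icc 1 n₀)
  concaveOn : ConcaveOn ℝ (Set.Icc 1 n₀) S
  eq_id : ∀ x : ℝ, 1 ≤ x → x ≤ 2 → S x = x
  submult : ∀ x y : ℝ, 1 ≤ x → 1 ≤ y → x * y ≤ n₀ → S (x * y) ≤ S x * S y

/-!
Let `σ > 0` be the slope of the last linear piece of `S`; by concavity every chord of `S` has
slope at least `σ`. For `ε ≤ σ` the extension is `x ↦ g (min x n₀) + ε * x` with `g = S - ε • id`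
concave and monotone on `[1, n₀]`, so it is continuous, strictly increasing and concave.

Submultiplicativity only needs checking when `n₀ < x * y`. If `x, y ≤ n₀`, put `y' = n₀ / x ≤ y`:
then `S n₀ ≤ S x * S y'`, and `S y - S y' ≥ σ (y - y') ≥ ε (x * y - n₀)` as soon as `ε * n₀ ≤ σ`.
If `x ≤ n₀ < y`, the inequality is elementary once `ε * n₀ ^ 2 ≤ S n₀`, using `S x = x` for
`x ≤ 2` and `S x ≥ 2` otherwise.
-/

open Set

lemma PiecewiseLinearOn.exists_affine_on_last_piece {S : ℝ → ℝ} {a b : ℝ}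
    (h : PiecewiseLinearOn S a b) :
    ∃ p, a ≤ p ∧ p < b ∧ ∃ c d : ℝ, ∀ x ∈ Icc p b, S x = c * x + d := by
  obtain ⟨m, t, hm, ht0, htm, htlt, haff⟩ := h
  have hmono : MonotoneOn t (Iic m) := (strictMonoOn_Iic_of_lt_succ fun i hi => by
    simpa using htlt i hi).monotoneOn
  obtain ⟨k, rfl⟩ : ∃ k, m = k + 1 := Nat.exists_eq_succ_of_ne_zero hm.ne'
  exact ⟨t k, ht0 ▸ hmono (Nat.zero_le _) (by simp) (Nat.zero_le _), htm ▸ htlt k k.lt_succ_self,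
    htm ▸ haff k k.lt_succ_self⟩

lemma ConcaveOn.mul_sub_le_sub_of_affine_on_Icc {S : ℝ → ℝ} {a p b c d : ℝ}
    (hS : ConcaveOn ℝ (Icc a b) S) (hap : a ≤ p) (hpb : p < b)
    (haff : ∀ x ∈ Icc p b, S x = c * x + d) {x y : ℝ} (hx : a ≤ x) (hxy : x ≤ y) (hy : y ≤ b) :
    c * (y - x) ≤ S y - S x := by
  rcases hxy.eq_or_lt with rfl | hxy
  · simp
  have hslope : ∀ u ∈ Icc p b, ∀ v ∈ Icc p b, u ≠ v → slope S u v = c := by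
    intro u hu v hv huv
    rw [slope_def_field, haff u hu, haff v hv]
    field_simp [sub_ne_zero.2 huv.symm]
    ring
  have hxb : slope S x b ≤ slope S x y :=
    hS.antitoneOn_slope_gt ⟨hx, hxy.le.trans hy⟩ ⟨⟨hx.trans hxy.le, hy⟩, hxy⟩
      ⟨⟨hx.trans (hxy.le.trans hy), le_rfl⟩, hxy.trans_le hy⟩ hy
  have hcx : c ≤ slope S x b := by
    rcases le_or_gt x p with hxp | hpx
    · rw [← hslope b ⟨hpb.le, le_rfl⟩ p ⟨le_rfl, hpb.le⟩ hpb.ne', slope_comm S x b]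
      exact hS.slope_anti ⟨hap.trans hpb.le, le_rfl⟩ ⟨⟨hx, hxp.trans hpb.le⟩, (hxp.trans_lt hpb).ne⟩
        ⟨⟨hap, hpb.le⟩, hpb.ne⟩ hxp
    · exact (hslope x ⟨hpx.le, (hxy.trans_le hy).le⟩ b ⟨hpb.le, le_rfl⟩
        (hxy.trans_le hy).ne).ge
  rw [← le_div_iff₀ (sub_pos.2 hxy), ← slope_def_field]
  exact hcx.trans hxb

lemma monotoneOn_sub_mul_of_mul_sub_le {S : ℝ → ℝ} {a b σ ε : ℝ}
    (hchord : ∀ x y, a ≤ x → x ≤ y → y ≤ b → σ * (y - x) ≤ S y - S x) (hεσ : ε ≤ σ) :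
    MonotoneOn (fun x => S x - ε * x) (Icc a b) := fun x hx y hy hxy => by
  have hεσ' : ε * (y - x) ≤ σ * (y - x) := mul_le_mul_of_nonneg_right hεσ (sub_nonneg.2 hxy)
  linarith [hchord x y hx.1 hxy hy.2]

noncomputable def extendAffine (S : ℝ → ℝ) (b ε : ℝ) (x : ℝ) : ℝ :=
  if x ≤ b then S x else S b + ε * (x - b)

section extendAffine

variable {S : ℝ → ℝ} {a b ε x : ℝ}

lemma extendAffine_of_le (h : x ≤ b) : extendAffine S b ε x = S x := if_pos h

lemma extendAffine_of_ge (h : b ≤ x) : extendAffine S b ε x = S b + ε * (x - b) := by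
  rcases h.eq_or_lt with rfl | h
  · simp [extendAffine]
  · exact if_neg h.not_ge

lemma extendAffine_eq_min :
    extendAffine S b ε = fun x => (S (min x b) - ε * min x b) + ε * x := by
  ext x
  rcases le_total x b with h | h
  · rw [extendAffine_of_le h, min_eq_left h]; ring
  · rw [extendAffine_of_ge h, min_eq_right h]; ring

lemma mapsTo_min_Ici_Icc (hab : a ≤ b) : MapsTo (min · b) (Ici a) (Icc a b) :=
  fun _ hx => ⟨le_min hx hab, min_le_right _ _⟩

lemma ConcaveOn.comp_min {g : ℝ → ℝ} (hg : ConcaveOn ℝ (Icc a b) g)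
    (hmono : MonotoneOn g (Icc a b)) (hab : a ≤ b) :
    ConcaveOn ℝ (Ici a) fun x => g (min x b) := by
  refine ⟨convex_Ici a, fun x hx y hy θ η hθ hη hθη => ?_⟩
  have hx' := mapsTo_min_Ici_Icc hab hx
  have hy' := mapsTo_min_Ici_Icc hab hy
  have hcomb := convex_Icc a b hx' hy' hθ hη hθη
  simp only [smul_eq_mul] at hcomb ⊢
  calc θ * g (min x b) + η * g (min y b) ≤ g (θ * min x b + η * min y b) := hg.2 hx' hy' hθ hη hθη
    _ ≤ g (min (θ * x + η * y) b) := by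
      refine hmono hcomb (mapsTo_min_Ici_Icc hab (convex_Ici a hx hy hθ hη hθη)) (le_min ?_ hcomb.2)
      gcongr <;> exact min_le_left _ _

lemma continuousOn_extendAffine (hS : ContinuousOn S (Icc a b)) (hab : a ≤ b) :
    ContinuousOn (extendAffine S b ε) (Ici a) := by
  rw [extendAffine_eq_min]
  have hmin : ContinuousOn (fun x => S (min x b)) (Ici a) :=
    hS.comp (continuous_id.min continuous_const).continuousOn (mapsTo_min_Ici_Icc hab)
  exact (hmin.sub (continuous_const.mul (continuous_id.min continuous_const)).continuousOn).add
    (continuous_const.mul continuous_id).continuousOn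

lemma concaveOn_extendAffine (hS : ConcaveOn ℝ (Icc a b) S) (hab : a ≤ b)
    (hmono : MonotoneOn (fun x => S x - ε * x) (Icc a b)) :
    ConcaveOn ℝ (Ici a) (extendAffine S b ε) := by
  have hg : ConcaveOn ℝ (Icc a b) fun x => S x - ε * x :=
    hS.sub ((LinearMap.mul ℝ ℝ ε).convexOn (convex_Icc a b))
  rw [extendAffine_eq_min]
  exact (hg.comp_min hmono hab).add ((LinearMap.mul ℝ ℝ ε).concaveOn (convex_Ici a))

lemma strictMonoOn_extendAffine (hab : a ≤ b) (hmono : MonotoneOn (fun x => S x - ε * x) (Icc a b))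
    (hε : 0 < ε) : StrictMonoOn (extendAffine S b ε) (Ici a) := by
  rw [extendAffine_eq_min]
  refine MonotoneOn.add_strictMono (fun x hx y hy hxy => ?_)
    ((strictMono_mul_left_of_pos hε).strictMonoOn _)
  exact hmono (mapsTo_min_Ici_Icc hab hx) (mapsTo_min_Ici_Icc hab hy) (min_le_min_right b hxy)

end extendAffine

lemma PiecewiseLinearOn.extendAffine {S : ℝ → ℝ} {a b c : ℝ} (h : PiecewiseLinearOn S a b)
    (hbc : b < c) (ε : ℝ) : PiecewiseLinearOn (extendAffine S b ε) a c := by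
  obtain ⟨m, t, hm, ht0, htm, htlt, haff⟩ := h
  have hmono : MonotoneOn t (Iic m) := (strictMonoOn_Iic_of_lt_succ fun i hi => by
    simpa using htlt i hi).monotoneOn
  refine ⟨m + 1, fun i => if i ≤ m then t i else c, m.succ_pos, by simpa using ht0, by simp,
    fun i hi => ?_, fun i hi => ?_⟩
  · rcases (Nat.lt_succ_iff.1 hi).lt_or_eq with hi | rfl
    · simpa [hi.le, Nat.succ_le_of_lt hi] using htlt i hi
    · simpa [htm] using hbc
  · rcases (Nat.lt_succ_iff.1 hi).lt_or_eq with hi | rfl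
    · obtain ⟨c', d, hcd⟩ := haff i hi
      refine ⟨c', d, fun x hx => ?_⟩
      simp only [hi.le, Nat.succ_le_of_lt hi, if_true] at hx
      have hxb : x ≤ b := hx.2.trans (htm ▸ hmono (Nat.succ_le_of_lt hi) self_mem_Iic
        (Nat.succ_le_of_lt hi))
      rw [extendAffine_of_le hxb]
      exact hcd x hx
    · refine ⟨ε, S b - ε * b, fun x hx => ?_⟩
      simp only [le_rfl, if_true, Nat.not_succ_le_self, if_false, htm] at hx
      rw [extendAffine_of_ge hx.1]
      ring

namespace IsSubmultOn

variable {S : ℝ → ℝ} {n₀ σ ε x y : ℝ}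

lemma exists_pos_mul_sub_le_sub (hS : IsSubmultOn S n₀) :
    ∃ σ > 0, ∀ x y, 1 ≤ x → x ≤ y → y ≤ n₀ → σ * (y - x) ≤ S y - S x := by
  obtain ⟨p, h1p, hpn, c, d, haff⟩ := hS.piecewiseLinear.exists_affine_on_last_piece
  have hc : 0 < c := by
    have := hS.strictMonoOn ⟨h1p, hpn.le⟩ ⟨h1p.trans hpn.le, le_rfl⟩ hpn
    rw [haff p ⟨le_rfl, hpn.le⟩, haff n₀ ⟨hpn.le, le_rfl⟩] at this
    nlinarith
  exact ⟨c, hc, fun x y hx hxy hy => hS.concaveOn.mul_sub_le_sub_of_affine_on_Icc h1p hpn haff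
    hx hxy hy⟩

lemma one_le_apply (hS : IsSubmultOn S n₀) (hx : 1 ≤ x) (hxn : x ≤ n₀) : 1 ≤ S x := by
  simpa [hS.eq_id 1 le_rfl one_le_two] using
    hS.strictMonoOn.monotoneOn ⟨le_rfl, hx.trans hxn⟩ ⟨hx, hxn⟩ hx

lemma add_mul_sub_le_mul (hS : IsSubmultOn S n₀)
    (hchord : ∀ x y, 1 ≤ x → x ≤ y → y ≤ n₀ → σ * (y - x) ≤ S y - S x) (hε : 0 ≤ ε)
    (hεσ : ε * n₀ ≤ σ) (hx : 1 ≤ x) (hxn : x ≤ n₀) (hyn : y ≤ n₀) (hxy : n₀ ≤ x * y) :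
    S n₀ + ε * (x * y - n₀) ≤ S x * S y := by
  have hx0 : 0 < x := by linarith
  set y' := n₀ / x
  have hxy' : x * y' = n₀ := mul_div_cancel₀ _ hx0.ne'
  have hy' : 1 ≤ y' := (one_le_div hx0).2 hxn
  have hy'y : y' ≤ y := (div_le_iff₀' hx0).2 hxy
  have hsub : S n₀ ≤ S x * S y' := hxy' ▸ hS.submult x y' hx hy' hxy'.le
  have hgrowth : ε * (x * y - n₀) ≤ S y - S y' := calc
    ε * (x * y - n₀) = ε * x * (y - y') := by rw [← hxy']; ring
    _ ≤ ε * n₀ * (y - y') := by gcongr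
    _ ≤ σ * (y - y') := by gcongr
    _ ≤ S y - S y' := hchord y' y hy' hy'y hyn
  calc S n₀ + ε * (x * y - n₀) ≤ S x * S y' + (S y - S y') := add_le_add hsub hgrowth
    _ ≤ S x * S y' + S x * (S y - S y') := by
      gcongr
      exact le_mul_of_one_le_left ((mul_nonneg hε (by linarith)).trans hgrowth)
        (hS.one_le_apply hx hxn)
    _ = S x * S y := by ring

lemma add_mul_sub_le_mul_add (hS : IsSubmultOn S n₀) (hε : 0 ≤ ε) (hεS : ε * n₀ ^ 2 ≤ S n₀)
    (hx : 1 ≤ x) (hxn : x ≤ n₀) (hny : n₀ ≤ y) (hxy : x * y ≤ n₀ ^ 2) :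
    S n₀ + ε * (x * y - n₀) ≤ S x * (S n₀ + ε * (y - n₀)) := by
  rcases le_or_gt x 2 with hx2 | hx2
  · have hεn : ε * n₀ ≤ S n₀ := le_trans (mul_le_mul_of_nonneg_left (by nlinarith) hε) hεS
    rw [hS.eq_id x hx hx2]
    nlinarith [mul_nonneg (sub_nonneg.2 hx) (sub_nonneg.2 hεn)]
  · have hSx : 2 ≤ S x := by
      simpa [hS.eq_id 2 one_le_two le_rfl] using
        hS.strictMonoOn.monotoneOn ⟨one_le_two, hx2.le.trans hxn⟩ ⟨hx, hxn⟩ hx2.le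
    have hSn : 0 ≤ S n₀ := zero_le_one.trans (hS.one_le_apply (hx.trans hxn) le_rfl)
    nlinarith [mul_nonneg (sub_nonneg.2 hSx) hSn, mul_nonneg (mul_nonneg hε (by linarith : 0 ≤ S x))
      (sub_nonneg.2 hny), mul_nonneg hε (sub_nonneg.2 hxy), mul_nonneg hε (by linarith : 0 ≤ n₀)]

lemma extendAffine_mul_le (hS : IsSubmultOn S n₀) (hn₀ : 1 ≤ n₀)
    (hchord : ∀ x y, 1 ≤ x → x ≤ y → y ≤ n₀ → σ * (y - x) ≤ S y - S x) (hε : 0 ≤ ε)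
    (hεσ : ε * n₀ ≤ σ) (hεS : ε * n₀ ^ 2 ≤ S n₀) (hx : 1 ≤ x) (hy : 1 ≤ y) (hxy : x * y ≤ n₀ ^ 2) :
    extendAffine S n₀ ε (x * y) ≤ extendAffine S n₀ ε x * extendAffine S n₀ ε y := by
  rcases le_total (x * y) n₀ with hxyn | hnxy
  · have hxn : x ≤ n₀ := (le_mul_of_one_le_right (by linarith) hy).trans hxyn
    have hyn : y ≤ n₀ := (le_mul_of_one_le_left (by linarith) hx).trans hxyn
    rw [extendAffine_of_le hxyn, extendAffine_of_le hxn, extendAffine_of_le hyn]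
    exact hS.submult x y hx hy hxyn
  rw [extendAffine_of_ge hnxy]
  rcases le_total x n₀ with hxn | hnx <;> rcases le_or_gt y n₀ with hyn | hny
  · rw [extendAffine_of_le hxn, extendAffine_of_le hyn]
    exact hS.add_mul_sub_le_mul hchord hε hεσ hx hxn hyn hnxy
  · rw [extendAffine_of_le hxn, extendAffine_of_ge hny.le]
    exact hS.add_mul_sub_le_mul_add hε hεS hx hxn hny.le hxy
  · rw [extendAffine_of_ge hnx, extendAffine_of_le hyn, mul_comm x y, mul_comm (S n₀ + _)]
    exact hS.add_mul_sub_le_mul_add hε hεS hy hyn hnx (mul_comm x y ▸ hxy)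
  · nlinarith [mul_le_mul hnx hny.le (by linarith) (by linarith)]

lemma isSubmultOn_extendAffine (hS : IsSubmultOn S n₀)
    (hn₀ : 2 ≤ n₀) (hchord : ∀ x y, 1 ≤ x → x ≤ y → y ≤ n₀ → σ * (y - x) ≤ S y - S x)
    (hε : 0 < ε) (hεσ : ε * n₀ ≤ σ) (hεS : ε * n₀ ^ 2 ≤ S n₀) :
    IsSubmultOn (extendAffine S n₀ ε) (n₀ ^ 2) := by
  have h1n : (1 : ℝ) ≤ n₀ := by linarith
  have hmono : MonotoneOn (fun x => S x - ε * x) (Icc 1 n₀) :=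
    monotoneOn_sub_mul_of_mul_sub_le hchord (le_trans (by nlinarith) hεσ)
  exact
    { piecewiseLinear := hS.piecewiseLinear.extendAffine (by nlinarith) ε
      continuousOn := (continuousOn_extendAffine hS.continuousOn h1n).mono Icc_subset_Ici_self
      strictMonoOn := (strictMonoOn_extendAffine h1n hmono hε).mono Icc_subset_Ici_self
      concaveOn := (concaveOn_extendAffine hS.concaveOn h1n hmono).subset Icc_subset_Ici_self
        (convex_Icc _ _)
      eq_id := fun x hx hx2 => (extendAffine_of_le (hx2.trans hn₀)).trans (hS.eq_id x hx hx2)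
      submult := fun x y hx hy hxy => hS.extendAffine_mul_le h1n hchord hε.le hεσ hεS hx hy hxy }

end IsSubmultOn

/-- Lemma 2.2. If `S` is submultiplicative on `[1, n₀]` with
`2 ≤ n₀ < ∞`, then there is `ε₀ > 0` such that for all `0 < ε < ε₀`, the extension
`S_ε` (equal to `S` on `[1,n₀]` and to `S n₀ + ε (x - n₀)` for `n₀ < x ≤ n₀²`)
is submultiplicative on `[1, n₀²]`. -/
theorem statement0 (n₀ : ℝ) (hn₀ : 2 ≤ n₀) (S : ℝ → ℝ) (hS : IsSubmultOn S n₀) :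
    ∃ ε₀ > (0 : ℝ), ∀ ε : ℝ, 0 < ε → ε < ε₀ →
      IsSubmultOn (fun x => if x ≤ n₀ then S x else S n₀ + ε * (x - n₀)) (n₀ ^ 2) := by
  obtain ⟨σ, hσ, hchord⟩ := hS.exists_pos_mul_sub_le_sub
  have hn₀pos : 0 < n₀ := by linarith
  have hSn₀ : 0 < S n₀ := by linarith [hS.one_le_apply (by linarith : (1 : ℝ) ≤ n₀) le_rfl]
  refine ⟨min (σ / n₀) (S n₀ / n₀ ^ 2), by positivity, fun ε hε hεlt => ?_⟩
  rw [lt_min_iff, lt_div_iff₀ hn₀pos, lt_div_iff₀ (by positivity)] at hεlt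
  exact hS.isSubmultOn_extendAffine hn₀ hchord hε hεlt.1.le hεlt.2.le
end

section
/- Let 2 ≤ n₀ < ∞ and let S be submultiplicative on [1,n₀]. Then, given ε > 0 and N₀ > n₀, there exists a function S̄ that is submultiplicative on [1,N₀], agrees with S on [1,n₀], and satisfies S̄(N₀) < S(n₀) + ε. -/
set_option maxHeartbeats 4000000 in
/-- Lemma 2.3. A submultiplicative function on `[1,n₀]` extends to a
submultiplicative function on `[1,N₀]` whose value at `N₀` is `< S n₀ + ε`. -/
theorem statement1 (n₀ : ℝ) (hn₀ : 2 ≤ n₀) (S : ℝ → ℝ) (hS : IsSubmultOn S n₀)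
    (ε : ℝ) (hε : 0 < ε) (N₀ : ℝ) (hN₀ : n₀ < N₀) :
    ∃ T : ℝ → ℝ, IsSubmultOn T N₀ ∧ Set.EqOn T S (Set.Icc 1 n₀) ∧ T N₀ < S n₀ + ε := by
  obtain ⟨m, t, hm, ht0, htm, htlt, htaff⟩ := hS.piecewiseLinear
  have h1n : (1:ℝ) ≤ n₀ := by linarith
  have hN0pos : (0:ℝ) < N₀ := by linarith
  -- monotonicity of the partition
  have tmono : ∀ j, j ≤ m → ∀ i, i ≤ j → t i ≤ t j := by
    intro j
    induction j with
    | zero => intro _ i hi; simp [Nat.le_zero.mp hi]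
    | succ k ih =>
      intro hk i hi
      rcases eq_or_lt_of_le hi with h | h
      · exact h ▸ le_rfl
      · exact le_trans (ih (by omega) i (by omega)) (htlt k (by omega)).le
  -- last node
  set u : ℝ := t (m - 1) with hu_def
  have hmm : m - 1 < m := Nat.sub_lt hm one_pos
  have hsucc : m - 1 + 1 = m := Nat.succ_pred_eq_of_pos hm
  have hu_lt : u < n₀ := by
    have := htlt (m-1) hmm
    rwa [hsucc, htm] at this
  have hu_ge1 : 1 ≤ u := by
    have := tmono m le_rfl 0 (Nat.zero_le m) -- not what we need
    have h2 := tmono (m-1) (le_of_lt hmm) 0 (Nat.zero_le _)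
    rwa [ht0] at h2
  obtain ⟨c, d, hcd⟩ := htaff (m-1) hmm
  rw [hsucc, htm] at hcd
  have hu_mem : u ∈ Set.Icc (1:ℝ) n₀ := ⟨hu_ge1, hu_lt.le⟩
  have hn_mem : n₀ ∈ Set.Icc (1:ℝ) n₀ := ⟨h1n, le_rfl⟩
  have hSu : S u = c * u + d := hcd u ⟨le_rfl, hu_lt.le⟩
  have hSn : S n₀ = c * n₀ + d := hcd n₀ ⟨hu_lt.le, le_rfl⟩
  have hc_pos : 0 < c := by
    have h := hS.strictMonoOn hu_mem hn_mem hu_lt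
    rw [hSu, hSn] at h
    nlinarith
  -- concavity in product form
  have key : ∀ x y z : ℝ, x ∈ Set.Icc (1:ℝ) n₀ → z ∈ Set.Icc (1:ℝ) n₀ → x < y → y < z →
      (z - y) * S x + (y - x) * S z ≤ (z - x) * S y := by
    intro x y z hx hz hxy hyz
    have h := hS.concaveOn.neg.secant_mono_aux1 hx hz hxy hyz
    simp only [Pi.neg_apply] at h
    linarith
  -- uniform lower slope bound
  have hslope : ∀ a b : ℝ, 1 ≤ a → a ≤ b → b ≤ n₀ → c * (b - a) ≤ S b - S a := by
    intro a b ha hab hbn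
    rcases eq_or_lt_of_le hab with rfl | hab
    · simp
    by_cases hau : u ≤ a
    · have hSa : S a = c * a + d := hcd a ⟨hau, by linarith⟩
      have hSb : S b = c * b + d := hcd b ⟨le_trans hau hab.le, hbn⟩
      have : S b - S a = c * (b - a) := by rw [hSa, hSb]; ring
      linarith
    · push_neg at hau
      have ha_mem : a ∈ Set.Icc (1:ℝ) n₀ := ⟨ha, by linarith⟩
      have P2 := key a u n₀ ha_mem hn_mem hau hu_lt
      have q2 : (S n₀ - S u) * (n₀ - a) ≤ (S n₀ - S a) * (n₀ - u) := by linarith [P2]; 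
      have q1 : (b - a) * (S n₀ - S a) ≤ (S b - S a) * (n₀ - a) := by
        rcases eq_or_lt_of_le hbn with h | h
        · rw [h]; linarith [le_of_eq (show (n₀ - a) * (S n₀ - S a) = (S n₀ - S a) * (n₀ - a) by ring)]
        · have P1 := key a b n₀ ha_mem hn_mem hab h
          linarith [P1]
      have hcu : c * (n₀ - u) = S n₀ - S u := by rw [hSu, hSn]; ring
      have hba : (0:ℝ) ≤ b - a := by linarith
      have hnu : (0:ℝ) ≤ n₀ - u := by linarith
      have r1 : (b - a) * (S n₀ - S a) * (n₀ - u) ≤ (S b - S a) * (n₀ - a) * (n₀ - u) :=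
        mul_le_mul_of_nonneg_right q1 hnu
      have r2 : (b - a) * ((S n₀ - S u) * (n₀ - a)) ≤ (b - a) * ((S n₀ - S a) * (n₀ - u)) :=
        mul_le_mul_of_nonneg_left q2 hba
      have r3 : c * (b - a) * ((n₀ - u) * (n₀ - a)) ≤ (S b - S a) * ((n₀ - u) * (n₀ - a)) := by
        have e : c * (b - a) * ((n₀ - u) * (n₀ - a)) = (b - a) * ((c * (n₀ - u)) * (n₀ - a)) := by
          ring
        rw [e, hcu]
        calc (b - a) * ((S n₀ - S u) * (n₀ - a)) ≤ (b - a) * ((S n₀ - S a) * (n₀ - u)) := r2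
          _ = (b - a) * (S n₀ - S a) * (n₀ - u) := by ring
          _ ≤ (S b - S a) * (n₀ - a) * (n₀ - u) := r1
          _ = (S b - S a) * ((n₀ - u) * (n₀ - a)) := by ring
      exact le_of_mul_le_mul_right r3 (by nlinarith)
  -- basic values of S
  have hS1 : S 1 = 1 := hS.eq_id 1 le_rfl (by norm_num)
  have hS2 : S 2 = 2 := hS.eq_id 2 (by norm_num) le_rfl
  have hSmono : MonotoneOn S (Set.Icc (1:ℝ) n₀) := hS.strictMonoOn.monotoneOn
  have hSge1 : ∀ a : ℝ, 1 ≤ a → a ≤ n₀ → 1 ≤ S a := by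
    intro a ha han
    have := hSmono ⟨le_rfl, h1n⟩ ⟨ha, han⟩ ha
    rwa [hS1] at this
  have hSn2 : 2 ≤ S n₀ := by
    have := hSmono ⟨by norm_num, hn₀⟩ hn_mem hn₀
    rwa [hS2] at this
  -- the slope δ of the extension
  set δ : ℝ := min (c / N₀) (min 1 ε / (2 * (N₀ - n₀))) with hδ_def
  have hδ_pos : 0 < δ := by
    apply lt_min
    · positivity
    · have h1 : (0:ℝ) < min 1 ε := lt_min one_pos hε
      have h2 : (0:ℝ) < 2 * (N₀ - n₀) := by linarith
      exact div_pos h1 h2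
  have hδN : δ * N₀ ≤ c := by
    have h := min_le_left (c / N₀) (min 1 ε / (2 * (N₀ - n₀)))
    rw [hδ_def]
    calc min (c / N₀) (min 1 ε / (2 * (N₀ - n₀))) * N₀ ≤ (c / N₀) * N₀ :=
          mul_le_mul_of_nonneg_right h hN0pos.le
      _ = c := by field_simp
  have hδn : δ * n₀ ≤ c := le_trans (by nlinarith [hδ_pos]) hδN
  have hδc : δ ≤ c := le_trans (by nlinarith [hδ_pos]) hδN
  have hδe : δ * (N₀ - n₀) ≤ min 1 ε / 2 := by
    have h := min_le_right (c / N₀) (min 1 ε / (2 * (N₀ - n₀)))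
    have hpos : (0:ℝ) < N₀ - n₀ := by linarith
    calc δ * (N₀ - n₀) ≤ (min 1 ε / (2 * (N₀ - n₀))) * (N₀ - n₀) :=
          mul_le_mul_of_nonneg_right h hpos.le
      _ = min 1 ε / 2 := by field_simp
  have hδe1 : δ * (N₀ - n₀) ≤ 1 := le_trans hδe (by
    have := min_le_left (1:ℝ) ε; linarith)
  have hδeε : δ * (N₀ - n₀) < ε := lt_of_le_of_lt hδe (by
    have : min 1 ε ≤ ε := min_le_right 1 ε
    linarith)
  -- the extension
  set T : ℝ → ℝ := fun x => if x ≤ n₀ then S x else S n₀ + δ * (x - n₀) with hT_def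
  have hTeq : ∀ x : ℝ, x ≤ n₀ → T x = S x := fun x hx => if_pos hx
  have hTgt : ∀ x : ℝ, n₀ < x → T x = S n₀ + δ * (x - n₀) := fun x hx => if_neg (not_le.mpr hx)
  -- strict lower bound on T between across the junction
  have hTmono : StrictMonoOn T (Set.Icc 1 N₀) := by
    intro a ha b hb hab
    by_cases hbn : b ≤ n₀
    · rw [hTeq a (le_trans hab.le hbn), hTeq b hbn]
      exact hS.strictMonoOn ⟨ha.1, le_trans hab.le hbn⟩ ⟨hb.1, hbn⟩ hab
    · push_neg at hbn
      rw [hTgt b hbn]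
      by_cases han : a ≤ n₀
      · rw [hTeq a han]
        have : S a ≤ S n₀ := hSmono ⟨ha.1, han⟩ hn_mem han
        nlinarith
      · push_neg at han
        rw [hTgt a han]
        nlinarith
  refine ⟨T, ⟨?_, ?_, hTmono, ?_, ?_, ?_⟩, ?_, ?_⟩
  · -- PiecewiseLinearOn T 1 N₀
    refine ⟨m + 1, fun i => if i ≤ m then t i else N₀, by omega, by simp [ht0], by simp, ?_, ?_⟩
    · intro i hi
      by_cases h : i < m
      · simp only [if_pos (le_of_lt h), if_pos (Nat.succ_le_of_lt h)]
        exact htlt i h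
      · have : i = m := by omega
        subst this
        simp [htm, hN₀]
    · intro i hi
      by_cases h : i < m
      · obtain ⟨ci, di, hcdi⟩ := htaff i h
        refine ⟨ci, di, ?_⟩
        simp only [if_pos (le_of_lt h), if_pos (Nat.succ_le_of_lt h)]
        intro x hx
        have hxn : x ≤ n₀ := le_trans hx.2 (by
          have := tmono m le_rfl (i+1) (Nat.succ_le_of_lt h)
          rw [htm] at this; exact this)
        rw [hTeq x hxn]
        exact hcdi x hx
      · have : i = m := by omega
        subst this
        refine ⟨δ, S n₀ - δ * n₀, ?_⟩
        simp only [if_pos le_rfl, if_neg (Nat.not_succ_le_self _), htm]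
        intro x hx
        by_cases hxn : x ≤ n₀
        · have : x = n₀ := le_antisymm hxn hx.1
          subst this
          rw [hTeq x le_rfl]; ring
        · push_neg at hxn
          rw [hTgt x hxn]; ring
  · -- ContinuousOn T (Icc 1 N₀)
    have hc1 : ContinuousOn T (Set.Icc 1 n₀) :=
      hS.continuousOn.congr (fun x hx => hTeq x hx.2)
    have hc2 : ContinuousOn T (Set.Icc n₀ N₀) := by
      have : ContinuousOn (fun x : ℝ => S n₀ + δ * (x - n₀)) (Set.Icc n₀ N₀) := by
        fun_prop
      refine this.congr ?_
      intro x hx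
      by_cases hxn : x ≤ n₀
      · have : x = n₀ := le_antisymm hxn hx.1
        subst this
        rw [hTeq x le_rfl]; simp
      · exact hTgt x (not_le.mp hxn)
    intro x hx
    have h1 : ContinuousWithinAt T (Set.Icc 1 n₀) x := by
      by_cases h : x ∈ Set.Icc (1:ℝ) n₀
      · exact hc1 x h
      · exact continuousWithinAt_of_notMem_closure (by rwa [isClosed_Icc.closure_eq])
    have h2 : ContinuousWithinAt T (Set.Icc n₀ N₀) x := by
      by_cases h : x ∈ Set.Icc n₀ N₀
      · exact hc2 x h
      · exact continuousWithinAt_of_notMem_closure (by rwa [isClosed_Icc.closure_eq])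
    exact (h1.union h2).mono (by
      intro y hy
      by_cases hyn : y ≤ n₀
      · exact Or.inl ⟨hy.1, hyn⟩
      · exact Or.inr ⟨le_of_not_ge hyn, hy.2⟩)
  · -- ConcaveOn
    apply concaveOn_of_slope_anti_adjacent (convex_Icc 1 N₀)
    intro x y z hx hz hxy hyz
    obtain ⟨hx1, hxN⟩ := hx
    obtain ⟨hz1, hzN⟩ := hz
    rw [div_le_div_iff₀ (show (0:ℝ) < z - y by linarith) (show (0:ℝ) < y - x by linarith)]
    by_cases hzn : z ≤ n₀
    · rw [hTeq x (by linarith), hTeq y (by linarith), hTeq z hzn]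
      have := key x y z ⟨hx1, by linarith⟩ ⟨hz1, hzn⟩ hxy hyz
      linarith
    · push_neg at hzn
      rw [hTgt z hzn]
      by_cases hyn : y ≤ n₀
      · rw [hTeq x (by linarith), hTeq y hyn]
        have hx_mem : x ∈ Set.Icc (1:ℝ) n₀ := ⟨hx1, by linarith⟩
        rcases eq_or_lt_of_le hyn with heq | hyn'
        · -- y = n₀
          rw [heq]
          have h1 := hslope x n₀ hx1 (by linarith) le_rfl
          have A : δ * (n₀ - x) ≤ S n₀ - S x :=
            le_trans (mul_le_mul_of_nonneg_right hδc (by linarith)) h1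
          have C := mul_le_mul_of_nonneg_right A (show (0:ℝ) ≤ z - n₀ by linarith)
          linarith [C]
        · have K1 := key x y n₀ hx_mem hn_mem hxy hyn'
          have K2 := hslope x y hx1 hxy.le hyn
          -- (S n₀ - S y + δ(z-n₀)) (y-x) ≤ (S y - S x)(z - y)
          have c1 : (S n₀ - S y) * (y - x) ≤ (S y - S x) * (n₀ - y) := by linarith [K1]
          have A2 : δ * (y - x) ≤ S y - S x :=
            le_trans (mul_le_mul_of_nonneg_right hδc (by linarith)) K2
          have c2 := mul_le_mul_of_nonneg_right A2 (show (0:ℝ) ≤ z - n₀ by linarith)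
          linarith [c1, c2]
      · push_neg at hyn
        rw [hTgt y hyn]
        by_cases hxn : x ≤ n₀
        · rw [hTeq x hxn]
          have h1 := hslope x n₀ hx1 hxn le_rfl
          have A : δ * (n₀ - x) ≤ S n₀ - S x :=
            le_trans (mul_le_mul_of_nonneg_right hδc (by linarith)) h1
          have B : δ * (y - x) ≤ S n₀ - S x + δ * (y - n₀) := by linarith
          have C := mul_le_mul_of_nonneg_right B (show (0:ℝ) ≤ z - y by linarith)
          linarith [C]
        · push_neg at hxn
          rw [hTgt x hxn]
          exact le_of_eq (by ring)
  · -- eq_id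
    intro x hx1 hx2
    rw [hTeq x (by linarith)]
    exact hS.eq_id x hx1 hx2
  · -- submult
    have hcaseB : ∀ x y : ℝ, 1 ≤ x → 1 ≤ y → x * y ≤ N₀ → x ≤ n₀ → n₀ < y →
        T (x * y) ≤ T x * T y := by
      intro x y hx hy hxyN hxn hny
      have hxy_gt : n₀ < x * y := by nlinarith
      rw [hTgt (x*y) hxy_gt, hTeq x hxn, hTgt y hny]
      have hSx1 : 1 ≤ S x := hSge1 x hx hxn
      have hSxc : c * (x - 1) ≤ S x - 1 := by
        have := hslope 1 x le_rfl hx hxn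
        rwa [hS1] at this
      have hyN : y ≤ N₀ := by nlinarith
      nlinarith [mul_nonneg (mul_nonneg hδ_pos.le (by linarith : (0:ℝ) ≤ S x - 1)) (by linarith : (0:ℝ) ≤ y - n₀),
        mul_nonneg (mul_nonneg hδ_pos.le (by linarith : (0:ℝ) ≤ x - 1)) (by linarith : (0:ℝ) ≤ N₀ - y),
        mul_le_mul_of_nonneg_right hδN (by linarith : (0:ℝ) ≤ x - 1),
        mul_le_mul_of_nonneg_right hSxc (by linarith : (0:ℝ) ≤ S n₀ - 1)]
    intro x y hx hy hxyN
    by_cases hxyn : x * y ≤ n₀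
    · have hxn : x ≤ n₀ := by nlinarith
      have hyn : y ≤ n₀ := by nlinarith
      rw [hTeq (x*y) hxyn, hTeq x hxn, hTeq y hyn]
      exact hS.submult x y hx hy hxyn
    · push_neg at hxyn
      by_cases hxn : x ≤ n₀
      · by_cases hyn : y ≤ n₀
        · -- case A: both ≤ n₀, product > n₀
          rw [hTgt (x*y) hxyn, hTeq x hxn, hTeq y hyn]
          have hx0 : (0:ℝ) < x := by linarith
          set y' : ℝ := n₀ / x with hy'_def
          have hy'1 : 1 ≤ y' := (one_le_div hx0).mpr hxn
          have hx0' : x ≠ 0 := ne_of_gt hx0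
          have hxy' : x * y' = n₀ := by rw [hy'_def]; field_simp
          have hy'y : y' < y := by
            rw [hy'_def, div_lt_iff₀ hx0]; nlinarith
          have hy'n : y' ≤ n₀ := by nlinarith
          have h1 : S n₀ ≤ S x * S y' := by
            have := hS.submult x y' hx hy'1 (le_of_eq hxy')
            rwa [hxy'] at this
          have h2 : c * (y - y') ≤ S y - S y' := hslope y' y hy'1 hy'y.le hyn
          have hSx1 : 1 ≤ S x := hSge1 x hx hxn
          have hSy'1 : 1 ≤ S y' := hSge1 y' hy'1 hy'n
          have hxyy' : x * (y - y') = x * y - n₀ := by rw [← hxy']; ring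
          -- δ(xy - n₀) = δ x (y - y') ≤ δ n₀ (y-y') ≤ c (y-y') ≤ S y - S y' ≤ S x (S y - S y')
          have hδx : δ * x ≤ c :=
            le_trans (mul_le_mul_of_nonneg_left hxn hδ_pos.le) hδn
          have e1 : δ * (x * y - n₀) ≤ c * (y - y') := by
            rw [← hxyy']
            calc δ * (x * (y - y')) = (δ * x) * (y - y') := by ring
              _ ≤ c * (y - y') := mul_le_mul_of_nonneg_right hδx (by linarith)
          have h3 : (0:ℝ) ≤ S y - S y' :=
            le_trans (mul_nonneg hc_pos.le (by linarith)) h2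
          have e2 : S y - S y' ≤ S x * (S y - S y') := by
            nlinarith [mul_nonneg (show (0:ℝ) ≤ S x - 1 by linarith) h3]
          linarith [e1, h2, e2, h1]
        · exact hcaseB x y hx hy hxyN hxn (not_le.mp hyn)
      · push_neg at hxn
        by_cases hyn : y ≤ n₀
        · have := hcaseB y x hy hx (by linarith [hxyN]) hyn hxn
          rw [mul_comm y x] at this
          rw [mul_comm (T x) (T y)]
          exact this
        · push_neg at hyn
          rw [hTgt (x*y) hxyn, hTgt x hxn, hTgt y hyn]
          have h1 : δ * (x*y - n₀) ≤ δ * (N₀ - n₀) := by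
            apply mul_le_mul_of_nonneg_left (by linarith) hδ_pos.le
          nlinarith [mul_nonneg (mul_nonneg hδ_pos.le (by linarith : (0:ℝ) ≤ x - n₀)) (mul_nonneg hδ_pos.le (by linarith : (0:ℝ) ≤ y - n₀)),
            mul_nonneg hδ_pos.le (by linarith : (0:ℝ) ≤ x - n₀),
            mul_nonneg hδ_pos.le (by linarith : (0:ℝ) ≤ y - n₀)]
  · -- EqOn
    intro x hx
    exact hTeq x hx.2
  · -- value at N₀
    rw [hTgt N₀ hN₀]
    linarith
end

section
/- Let 2 ≤ n₀ < ∞, let S be submultiplicative on [1,n₀], and suppose S(n₀) = K where K ≥ 2. Then there exist N₀ > n₀ and a function S̄ that is submultiplicative on [1,N₀], agrees with S on [1,n₀], and satisfies S̄(N₀) ≥ 3K/2. -/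
set_option maxHeartbeats 3200000 in
/-- Lemma 2.4. If `S` is submultiplicative on `[1,n₀]` with
`S n₀ = K ≥ 2`, then there are `N₀ > n₀` and a submultiplicative extension of `S`
to `[1,N₀]` with value at least `3K/2` at `N₀`. -/
theorem statement2 (n₀ : ℝ) (hn₀ : 2 ≤ n₀) (S : ℝ → ℝ) (hS : IsSubmultOn S n₀)
    (K : ℝ) (hK : S n₀ = K) (hK2 : 2 ≤ K) :
    ∃ N₀ : ℝ, n₀ < N₀ ∧ ∃ T : ℝ → ℝ, IsSubmultOn T N₀ ∧ Set.EqOn T S (Set.Icc 1 n₀) ∧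
      3 * K / 2 ≤ T N₀ := by
  classical
  obtain ⟨m, t, hm, ht0, htm, hinc, haff⟩ := hS.piecewiseLinear
  -- monotonicity of the partition
  have tmono : ∀ i j, i ≤ j → j ≤ m → t i ≤ t j := by
    intro i j hij hjm
    induction j with
    | zero => simp [Nat.le_zero.mp hij]
    | succ k ih =>
      rcases Nat.eq_or_lt_of_le hij with h | h
      · rw [h]
      · have hik : i ≤ k := Nat.lt_succ_iff.mp h
        exact le_trans (ih hik (Nat.le_of_succ_le hjm)) (le_of_lt (hinc k hjm))
  set u := t (m - 1) with hu_def
  clear_value u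
  have hmm : m - 1 + 1 = m := Nat.succ_pred_eq_of_pos hm
  have hu_lt : u < n₀ := by
    have h := hinc (m - 1) (by omega)
    rw [hmm, htm] at h; rwa [← hu_def] at h
  have hu_ge : 1 ≤ u := by
    have h := tmono 0 (m - 1) (Nat.zero_le _) (by omega)
    rw [ht0] at h; rwa [← hu_def] at h
  obtain ⟨c₀, d₀, haffl⟩ := haff (m - 1) (by omega)
  rw [hmm, htm] at haffl
  rw [← hu_def] at haffl
  have hn0pos : (0 : ℝ) < n₀ := by linarith
  have hS1 : S 1 = 1 := hS.eq_id 1 le_rfl one_le_two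
  have hS2 : S 2 = 2 := hS.eq_id 2 one_le_two le_rfl
  set s : ℝ := (K - S u) / (n₀ - u) with hs_def
  clear_value s
  have hSu_lt : S u < K := by
    rw [← hK]
    exact hS.strictMonoOn ⟨hu_ge, hu_lt.le⟩ ⟨by linarith, le_rfl⟩ hu_lt
  have hs_pos : 0 < s := by rw [hs_def]; exact div_pos (by linarith) (by linarith)
  have hsu : K - S u = s * (n₀ - u) := by
    rw [hs_def, div_mul_cancel₀ _ (ne_of_gt (by linarith : (0:ℝ) < n₀ - u))]
  have hc₀ : c₀ = s := by
    have h1 := haffl u ⟨le_rfl, hu_lt.le⟩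
    have h2 := haffl n₀ ⟨hu_lt.le, le_rfl⟩
    rw [hK] at h2
    rw [hs_def, h1, h2, eq_div_iff (ne_of_gt (by linarith : (0:ℝ) < n₀ - u))]
    ring
  have conc := hS.concaveOn
  -- chord slopes are at least `s`
  have hA3 : ∀ a, 1 ≤ a → a ≤ u → s * (u - a) ≤ S u - S a := by
    intro a ha1 hau
    rcases eq_or_lt_of_le hau with h | h
    · rw [h]; simp
    · have hsl := conc.slope_anti_adjacent (x := a) (y := u) (z := n₀)
        ⟨ha1, by linarith⟩ ⟨by linarith, le_rfl⟩ h hu_lt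
      rw [hK] at hsl
      have hs' : s ≤ (S u - S a) / (u - a) := by
        rw [hs_def]; exact hsl
      calc s * (u - a) ≤ ((S u - S a) / (u - a)) * (u - a) :=
            mul_le_mul_of_nonneg_right hs' (by linarith)
        _ = S u - S a := div_mul_cancel₀ _ (ne_of_gt (by linarith : (0:ℝ) < u - a))
  have hAu : ∀ a b, 1 ≤ a → a ≤ b → b ≤ u → s * (b - a) ≤ S b - S a := by
    intro a b ha hab hbu
    rcases eq_or_lt_of_le hab with h | hab'
    · rw [h]; simp
    rcases eq_or_lt_of_le hbu with h | hbu'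
    · rw [h]; exact hA3 a ha (h ▸ hab)
    · have h1 := conc.slope_anti_adjacent (x := b) (y := u) (z := n₀)
        ⟨by linarith, by linarith⟩ ⟨by linarith, le_rfl⟩ hbu' hu_lt
      have h2 := conc.slope_anti_adjacent (x := a) (y := b) (z := u)
        ⟨ha, by linarith⟩ ⟨by linarith, hu_lt.le⟩ hab' hbu'
      rw [hK] at h1
      have hs' : s ≤ (S b - S a) / (b - a) := by
        rw [hs_def]; exact le_trans h1 h2
      calc s * (b - a) ≤ ((S b - S a) / (b - a)) * (b - a) :=
            mul_le_mul_of_nonneg_right hs' (by linarith)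
        _ = S b - S a := div_mul_cancel₀ _ (ne_of_gt (by linarith : (0:ℝ) < b - a))
  have hA2 : ∀ a b, u ≤ a → a ≤ b → b ≤ n₀ → S b - S a = s * (b - a) := by
    intro a b hua hab hbn
    rw [haffl a ⟨hua, le_trans hab hbn⟩, haffl b ⟨le_trans hua hab, hbn⟩, hc₀]
    ring
  have hA : ∀ a b, 1 ≤ a → a ≤ b → b ≤ n₀ → s * (b - a) ≤ S b - S a := by
    intro a b ha hab hbn
    rcases le_total b u with h | h
    · exact hAu a b ha hab h
    · rcases le_total a u with h2 | h2
      · have e1 := hAu a u ha h2 le_rfl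
        have e2 := hA2 u b le_rfl h hbn
        linarith only [e1, e2]
      · linarith [hA2 a b h2 hab hbn]
  have hs1 : s ≤ 1 := by
    have h := hA 1 2 le_rfl one_le_two hn₀
    rw [hS1, hS2] at h; linarith
  have hsn : s * n₀ ≤ K := by
    have h := hA 1 n₀ le_rfl (by linarith) le_rfl
    rw [hS1, hK] at h; linarith only [h, hs1]
  have hSge : ∀ x, 1 ≤ x → x ≤ n₀ → 1 + s * (x - 1) ≤ S x := by
    intro x h1 h2
    have h := hA 1 x le_rfl h1 h2
    rw [hS1] at h; linarith
  have hSge1 : ∀ x, 1 ≤ x → x ≤ n₀ → 1 ≤ S x := by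
    intro x h1 h2
    linarith only [hSge x h1 h2, mul_nonneg hs_pos.le (by linarith : (0:ℝ) ≤ x - 1)]
  have hSleK : ∀ x, 1 ≤ x → x ≤ n₀ → S x ≤ K := by
    intro x h1 h2
    have := hS.strictMonoOn.monotoneOn ⟨h1, h2⟩ ⟨by linarith, le_rfl⟩ h2
    rwa [hK] at this
  set c : ℝ := s ^ 2 / 2 with hc_def
  clear_value c
  have hc_pos : 0 < c := by rw [hc_def]; positivity
  have hcs : c ≤ s := by
    linarith only [hc_def, hs_pos, mul_nonneg hs_pos.le (by linarith : (0:ℝ) ≤ 1 - s)]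
  have hcK : c * n₀ ≤ s * K / 2 := by
    have h1 : s * (s * n₀) ≤ s * K := mul_le_mul_of_nonneg_left hsn hs_pos.le
    have h2 : c * n₀ = s * (s * n₀) / 2 := by rw [hc_def]; ring
    linarith only [h1, h2]
  have hcKK : c * n₀ ≤ K := by
    linarith only [hcK, hK2, mul_nonneg (by linarith : (0:ℝ) ≤ 1 - s) (by linarith : (0:ℝ) ≤ K)]
  set N₀ : ℝ := n₀ + K / s ^ 2 with hN_def
  clear_value N₀
  have hnN : n₀ < N₀ := by
    have : 0 < K / s ^ 2 := by positivity
    rw [hN_def]; linarith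
  have hcN : c * (N₀ - n₀) = K / 2 := by
    have hs2 : s ^ 2 ≠ 0 := by positivity
    rw [hN_def, hc_def]
    field_simp
    ring
  have hcN' : c * N₀ = c * n₀ + K / 2 := by linear_combination hcN
  set T : ℝ → ℝ := fun z => if z ≤ n₀ then S z else K + c * (z - n₀) with hT_def
  clear_value T
  have hTS : ∀ z, z ≤ n₀ → T z = S z := by
    intro z h
    simp only [hT_def, if_pos h]
  have hTr : ∀ z, n₀ ≤ z → T z = K + c * (z - n₀) := by
    intro z h
    rcases eq_or_lt_of_le h with h' | h'
    · rw [hT_def]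
      simp only [← h', le_refl, if_pos]
      rw [hK]; ring
    · rw [hT_def]
      simp only [if_neg (not_le.mpr h')]
  have hTN : T N₀ = K + K / 2 := by rw [hTr N₀ hnN.le, hcN]
  -- the key submultiplicativity estimate, with `x ≤ y`
  have key : ∀ x y : ℝ, 1 ≤ x → 1 ≤ y → x ≤ y → x * y ≤ N₀ →
      T (x * y) ≤ T x * T y := by
    intro x y hx hy hxy hxyN
    rcases le_or_gt (x * y) n₀ with hxyn | hxyn
    · have hxn : x ≤ n₀ := le_trans (le_mul_of_one_le_right (by linarith) hy) hxyn
      have hyn : y ≤ n₀ := le_trans (le_mul_of_one_le_left (by linarith) hx) hxyn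
      rw [hTS _ hxyn, hTS x hxn, hTS y hyn]
      exact hS.submult x y hx hy hxyn
    · rw [hTr _ hxyn.le]
      rcases le_or_gt y n₀ with hyn | hyn
      · -- both `x, y ≤ n₀`
        have hxn : x ≤ n₀ := le_trans hxy hyn
        rw [hTS x hxn, hTS y hyn]
        have hxpos : (0 : ℝ) < x := by linarith
        have hx1 : 1 < x := by
          nlinarith only [mul_le_mul_of_nonneg_left hyn hxpos.le, hxyn, hn0pos]
        set a := n₀ / x with ha_def
        have hxa : x * a = n₀ := by rw [ha_def]; field_simp
        have ha1 : 1 ≤ a := (one_le_div hxpos).mpr hxn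
        have hay : a < y := by
          rw [ha_def, div_lt_iff₀ hxpos]
          linarith only [hxyn, mul_comm x y]
        have k1 : K ≤ S x * S a := by
          have h := hS.submult x a hx ha1 (by rw [hxa])
          rwa [hxa, hK] at h
        have k2 : s * (y - a) ≤ S y - S a := hA a y ha1 hay.le hyn
        have k3 : s * x ≤ S x := by linarith only [hSge x hx hxn, hs1]
        have k4 : (s * x) * (s * (y - a)) ≤ S x * (S y - S a) :=
          mul_le_mul k3 k2 (mul_nonneg hs_pos.le (by linarith))
            (le_trans (mul_nonneg hs_pos.le (by linarith)) k3)
        have k4' : s ^ 2 * (x * y - n₀) ≤ S x * (S y - S a) := by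
          rw [← hxa]; linarith only [k4]
        have hcc : c * (x * y - n₀) ≤ s ^ 2 * (x * y - n₀) :=
          mul_le_mul_of_nonneg_right (by linarith only [hc_def, hc_pos] : c ≤ s ^ 2)
            (by linarith : (0:ℝ) ≤ x * y - n₀)
        linarith only [k1, k4', hcc]
      · -- `y > n₀`
        rw [hTr y hyn.le]
        rcases le_or_gt x n₀ with hxn | hxn
        · rw [hTS x hxn]
          rcases le_or_gt x 2 with hx2 | hx2
          · rw [hS.eq_id x hx hx2]
            linarith only [mul_nonneg (by linarith : (0:ℝ) ≤ x - 1)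
              (by linarith only [hcKK] : (0:ℝ) ≤ K - c * n₀)]
          · have hS2x : 2 + s * (x - 2) ≤ S x := by
              have h := hA 2 x one_le_two hx2.le hxn
              rw [hS2] at h; linarith
            have hSx2 : 2 ≤ S x := by
              linarith only [hS2x, mul_nonneg hs_pos.le (by linarith : (0:ℝ) ≤ x - 2)]
            have hxS : x - S x ≤ (1 - s) * (x - 2) := by linarith only [hS2x]
            have hcy : 0 ≤ c * y := mul_nonneg hc_pos.le (by linarith)
            have e1 : c * y * (x - S x) ≤ c * y * ((1 - s) * (x - 2)) :=
              mul_le_mul_of_nonneg_left hxS hcy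
            have e2 : c * y * ((1 - s) * (x - 2)) ≤ (1 - s) * (c * (x * y)) := by
              linarith only [mul_nonneg (by linarith : (0:ℝ) ≤ 1 - s) hcy]
            have e3 : c * (x * y) ≤ c * N₀ := mul_le_mul_of_nonneg_left hxyN hc_pos.le
            have e35 : (1 - s) * (c * (x * y)) ≤ (1 - s) * (c * n₀ + K / 2) := by
              rw [← hcN']
              exact mul_le_mul_of_nonneg_left e3 (by linarith)
            have e4 : (1 - s) * (c * n₀ + K / 2) ≤ (1 - s) * (s * K / 2 + K / 2) :=
              mul_le_mul_of_nonneg_left (by linarith) (by linarith)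
            have f1 : c * y * (x - S x) ≤ (1 - s) * (s * K / 2 + K / 2) := by
              linarith
            have h6 : 0 ≤ (S x - 2) * (K - c * n₀) :=
              mul_nonneg (by linarith) (by linarith)
            -- RHS - LHS = (Sx - 1)(K - c n₀) + c y (Sx - x)
            have hKs : 0 ≤ K * (1 - s + s ^ 2) :=
              mul_nonneg (by linarith : (0:ℝ) ≤ K)
                (by nlinarith only [sq_nonneg (s - 1/2)] : (0:ℝ) ≤ 1 - s + s ^ 2)
            linarith only [f1, h6, hcK, hKs]
        · -- both `x, y > n₀`
          rw [hTr x hxn.le]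
          have b1 : c * (x * y - n₀) ≤ K / 2 := by
            have e3 : c * (x * y) ≤ c * N₀ := mul_le_mul_of_nonneg_left hxyN hc_pos.le
            linarith only [e3, hcN']
          have b2 : K ≤ K + c * (x - n₀) := by
            linarith only [mul_nonneg hc_pos.le (by linarith : (0:ℝ) ≤ x - n₀)]
          have b3 : K ≤ K + c * (y - n₀) := by
            linarith only [mul_nonneg hc_pos.le (by linarith : (0:ℝ) ≤ y - n₀)]
          have b4 : K * K ≤ (K + c * (x - n₀)) * (K + c * (y - n₀)) :=
            mul_le_mul b2 b3 (by linarith) (by linarith)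
          linarith only [b1, b4, hK2,
            mul_nonneg (by linarith : (0:ℝ) ≤ K - 2) (by linarith : (0:ℝ) ≤ K)]
  refine ⟨N₀, hnN, T, ⟨?_, ?_, ?_, ?_, ?_, ?_⟩, fun x hx => hTS x hx.2, by rw [hTN]; linarith⟩
  · -- piecewise linear
    refine ⟨m + 1, fun i => if i ≤ m then t i else N₀, by omega, ?_, ?_, ?_, ?_⟩
    · simp [ht0]
    · simp
    · intro i hi
      rcases Nat.lt_or_ge i m with h | h
      · simp only [if_pos (le_of_lt h), if_pos (Nat.succ_le_of_lt h)]
        exact hinc i h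
      · have hi' : i = m := by omega
        rw [hi']
        simp only [if_pos le_rfl, if_neg (by omega : ¬ (m + 1 ≤ m))]
        rw [htm]; exact hnN
    · intro i hi
      rcases Nat.lt_or_ge i m with h | h
      · obtain ⟨ci, di, hcd⟩ := haff i h
        refine ⟨ci, di, ?_⟩
        simp only [if_pos (le_of_lt h), if_pos (Nat.succ_le_of_lt h)]
        intro x hx
        have hxn : x ≤ n₀ := by
          have := tmono (i + 1) m (Nat.succ_le_of_lt h) le_rfl
          rw [htm] at this
          exact le_trans hx.2 this
        rw [hTS x hxn]
        exact hcd x hx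
      · have hi' : i = m := by omega
        rw [hi']
        refine ⟨c, K - c * n₀, ?_⟩
        simp only [if_pos le_rfl, if_neg (by omega : ¬ (m + 1 ≤ m))]
        rw [htm]
        intro x hx
        rw [hTr x hx.1]; ring
  · -- continuity
    have h1 : ContinuousOn T (Set.Icc 1 n₀) :=
      hS.continuousOn.congr (fun x hx => hTS x hx.2)
    have h2 : ContinuousOn T (Set.Icc n₀ N₀) := by
      have hcont : ContinuousOn (fun z : ℝ => K + c * (z - n₀)) (Set.Icc n₀ N₀) := by
        fun_prop
      exact hcont.congr (fun x hx => hTr x hx.1)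
    intro x hx
    have hsub : Set.Icc (1:ℝ) N₀ ⊆ Set.Icc 1 n₀ ∪ Set.Icc n₀ N₀ := by
      intro z hz
      rcases le_total z n₀ with h | h
      · exact Or.inl ⟨hz.1, h⟩
      · exact Or.inr ⟨h, hz.2⟩
    refine ContinuousWithinAt.mono ?_ hsub
    refine ContinuousWithinAt.union ?_ ?_
    · by_cases hxm : x ∈ Set.Icc (1:ℝ) n₀
      · exact h1 x hxm
      · exact continuousWithinAt_of_notMem_closure (by rwa [isClosed_Icc.closure_eq])
    · by_cases hxm : x ∈ Set.Icc n₀ N₀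
      · exact h2 x hxm
      · exact continuousWithinAt_of_notMem_closure (by rwa [isClosed_Icc.closure_eq])
  · -- strict monotonicity
    intro a ha b hb hab
    rcases le_or_gt b n₀ with h | h
    · rw [hTS a (le_trans hab.le h), hTS b h]
      exact hS.strictMonoOn ⟨ha.1, le_trans hab.le h⟩ ⟨le_trans ha.1 hab.le, h⟩ hab
    · rw [hTr b h.le]
      rcases le_or_gt a n₀ with h2 | h2
      · rw [hTS a h2]
        have hK' : S a ≤ K := hSleK a ha.1 h2
        linarith only [hK', mul_pos hc_pos (show (0:ℝ) < b - n₀ by linarith)]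
      · rw [hTr a h2.le]
        linarith only [mul_lt_mul_of_pos_left hab hc_pos]
  · -- concavity
    apply concaveOn_of_slope_anti_adjacent (convex_Icc 1 N₀)
    intro x y z hx hz hxy hyz
    have hy1 : 1 ≤ y := le_trans hx.1 hxy.le
    have hyN : y ≤ N₀ := le_trans hyz.le hz.2
    rcases le_or_gt z n₀ with hzn | hzn
    · rw [hTS x (by linarith [hx.1] : x ≤ n₀), hTS y (by linarith : y ≤ n₀), hTS z hzn]
      exact conc.slope_anti_adjacent ⟨hx.1, by linarith⟩ ⟨by linarith [hx.1], hzn⟩ hxy hyz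
    · rcases le_or_gt n₀ y with hny | hny
      · have e1 : T z - T y = c * (z - y) := by
          rw [hTr z (by linarith), hTr y hny]; ring
        rw [e1, mul_div_assoc, div_self (ne_of_gt (by linarith : (0:ℝ) < z - y)), mul_one]
        rw [le_div_iff₀ (by linarith : (0:ℝ) < y - x)]
        rcases le_or_gt x n₀ with hxn | hxn
        · rw [hTS x hxn, hTr y hny]
          have h := hA x n₀ hx.1 hxn le_rfl
          rw [hK] at h
          linarith only [h, mul_le_mul_of_nonneg_right hcs (by linarith : (0:ℝ) ≤ n₀ - x)]
        · have e2 : T y - T x = c * (y - x) := by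
            rw [hTr y hny, hTr x hxn.le]; ring
          rw [e2]
      · -- y < n₀ < z
        have hxn : x < n₀ := lt_trans hxy hny
        have hsL : s * (n₀ - y) ≤ K - S y := by
          have h := hA y n₀ hy1 hny.le le_rfl
          rw [hK] at h; linarith
        have hkey : c * (n₀ - y) ≤ K - S y := by
          linarith only [hsL, mul_le_mul_of_nonneg_right hcs (by linarith : (0:ℝ) ≤ n₀ - y)]
        have e2 : T z - T y = (K - S y) + c * (z - n₀) := by
          rw [hTr z hzn.le, hTS y hny.le]; ring
        have step1 : (T z - T y) / (z - y) ≤ (K - S y) / (n₀ - y) := by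
          rw [div_le_div_iff₀ (by linarith) (by linarith), e2]
          linarith only [mul_le_mul_of_nonneg_left hkey (by linarith : (0:ℝ) ≤ z - n₀)]
        have step2 : (K - S y) / (n₀ - y) ≤ (T y - T x) / (y - x) := by
          rw [hTS y hny.le, hTS x hxn.le]
          have h := conc.slope_anti_adjacent (x := x) (y := y) (z := n₀)
            ⟨hx.1, by linarith⟩ ⟨by linarith [hx.1], le_rfl⟩ hxy hny
          rwa [hK] at h
        exact le_trans step1 step2
  · -- identity on [1,2]
    intro x h1 h2
    rw [hTS x (le_trans h2 hn₀)]
    exact hS.eq_id x h1 h2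
  · -- submultiplicativity
    intro x y hx hy hxyN
    rcases le_total x y with h | h
    · exact key x y hx hy h hxyN
    · have := key y x hy hx h (by rwa [mul_comm])
      rw [mul_comm y x] at this
      rw [mul_comm (T x) (T y)]
      exact this
end

section
/- Let 2 ≤ n₀ < ∞ and let S be submultiplicative on [1,n₀]. Then, for every M > 0, there exist N₀ > n₀ and a function S̄ that is submultiplicative on [1,N₀], agrees with S on [1,n₀], and satisfies S̄(N₀) > M. -/
lemma continuousOn_union_closed {f : ℝ → ℝ} {s t : Set ℝ} (hs : IsClosed s) (ht : IsClosed t)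
    (hfs : ContinuousOn f s) (hft : ContinuousOn f t) : ContinuousOn f (s ∪ t) := by
  intro x hx
  have h1 : ContinuousWithinAt f s x := by
    by_cases h : x ∈ s
    · exact hfs x h
    · exact continuousWithinAt_of_notMem_closure (by rwa [hs.closure_eq])
  have h2 : ContinuousWithinAt f t x := by
    by_cases h : x ∈ t
    · exact hft x h
    · exact continuousWithinAt_of_notMem_closure (by rwa [ht.closure_eq])
  exact h1.union h2

set_option maxHeartbeats 1000000 in
/-- One extension step: extend a submultiplicative function, gaining `1/2` in value. -/
lemma extend_half (n₀ : ℝ) (hn₀ : 2 ≤ n₀) (S : ℝ → ℝ) (hS : IsSubmultOn S n₀) :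
    ∃ N₀ : ℝ, n₀ < N₀ ∧ ∃ T : ℝ → ℝ, IsSubmultOn T N₀ ∧ Set.EqOn T S (Set.Icc 1 n₀) ∧
      T N₀ = S n₀ + 1/2 := by
  obtain ⟨m, t, hm, ht0, htm, htlt, hpc⟩ := hS.piecewiseLinear
  have hn₀0 : (0:ℝ) < n₀ := by linarith
  have hn₀1 : (1:ℝ) < n₀ := by linarith
  -- monotonicity of the partition
  have ht_le_aux : ∀ k, ∀ i, i + k ≤ m → t i ≤ t (i + k) := by
    intro k
    induction k with
    | zero => intro i _; simp
    | succ n ih =>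
      intro i h
      have h1 := ih i (by omega)
      have h2 := htlt (i + n) (by omega)
      have : i + (n + 1) = i + n + 1 := by omega
      rw [this]; linarith
  have ht_le : ∀ i j : ℕ, i ≤ j → j ≤ m → t i ≤ t j := by
    intro i j hij hjm
    have := ht_le_aux (j - i) i (by omega)
    rwa [show i + (j - i) = j by omega] at this
  have ht1 : ∀ i, i ≤ m → 1 ≤ t i := by
    intro i hi
    have := ht_le 0 i (Nat.zero_le _) hi
    rwa [ht0] at this
  have htn₀ : ∀ i, i ≤ m → t i ≤ n₀ := by
    intro i hi
    have := ht_le i m hi le_rfl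
    rwa [htm] at this
  -- the last piece
  obtain ⟨c, d, hcd⟩ := hpc (m - 1) (by omega)
  have hm1 : m - 1 + 1 = m := by omega
  rw [hm1, htm] at hcd
  set t' : ℝ := t (m - 1) with ht'def
  have ht'1 : 1 ≤ t' := ht1 (m - 1) (by omega)
  have ht'lt : t' < n₀ := by
    have := htlt (m - 1) (by omega)
    rwa [hm1, htm] at this
  have hmemt' : t' ∈ Set.Icc (1:ℝ) n₀ := ⟨ht'1, le_of_lt ht'lt⟩
  have hmemn₀ : n₀ ∈ Set.Icc (1:ℝ) n₀ := ⟨by linarith, le_rfl⟩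
  have hSt' : S t' = c * t' + d := hcd t' ⟨le_rfl, le_of_lt ht'lt⟩
  have hSn₀lin : S n₀ = c * n₀ + d := hcd n₀ ⟨le_of_lt ht'lt, le_rfl⟩
  have hc : 0 < c := by
    have h := hS.strictMonoOn hmemt' hmemn₀ ht'lt
    rw [hSt', hSn₀lin] at h
    nlinarith
  -- uniform slope lower bound
  have L1 : ∀ y, 1 ≤ y → y ≤ n₀ → c * (n₀ - y) ≤ S n₀ - S y := by
    intro y hy1 hyn
    rcases le_or_gt t' y with h | h
    · have := hcd y ⟨h, hyn⟩
      rw [this, hSn₀lin]; ring_nf; nlinarith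
    · have hsl := hS.concaveOn.slope_anti_adjacent (x := y) (y := t') (z := n₀)
        ⟨hy1, hyn⟩ hmemn₀ h ht'lt
      rw [div_le_div_iff₀ (by linarith) (by linarith)] at hsl
      have hc' : S n₀ - S t' = c * (n₀ - t') := by rw [hSt', hSn₀lin]; ring
      nlinarith
  have F1 : ∀ a b, 1 ≤ a → a ≤ b → b ≤ n₀ → c * (b - a) ≤ S b - S a := by
    intro a b ha hab hbn
    rcases eq_or_lt_of_le hab with rfl | hab'
    · simp
    rcases eq_or_lt_of_le hbn with rfl | hbn'
    · exact L1 a ha hab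
    have hsl := hS.concaveOn.slope_anti_adjacent (x := a) (y := b) (z := n₀)
      ⟨ha, by linarith⟩ hmemn₀ hab' hbn'
    rw [div_le_div_iff₀ (by linarith) (by linarith)] at hsl
    have := L1 b (by linarith) hbn
    nlinarith
  -- basic values of S
  have hS1 : S 1 = 1 := hS.eq_id 1 le_rfl (by norm_num)
  have hS2 : S 2 = 2 := hS.eq_id 2 (by norm_num) le_rfl
  have monoS : ∀ a b, 1 ≤ a → a ≤ b → b ≤ n₀ → S a ≤ S b := by
    intro a b ha hab hbn
    rcases eq_or_lt_of_le hab with rfl | h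
    · exact le_rfl
    · exact le_of_lt (hS.strictMonoOn ⟨ha, by linarith⟩ ⟨by linarith, hbn⟩ h)
  have hSge1 : ∀ x, 1 ≤ x → x ≤ n₀ → 1 ≤ S x := by
    intro x hx hxn
    have := monoS 1 x le_rfl hx hxn
    rwa [hS1] at this
  have hSge2 : ∀ x, 2 ≤ x → x ≤ n₀ → 2 ≤ S x := by
    intro x hx hxn
    have := monoS 2 x (by norm_num) hx hxn
    rwa [hS2] at this
  have hSn₀2 : 2 ≤ S n₀ := hSge2 n₀ hn₀ le_rfl
  -- the slope and endpoint of the extension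
  set μ : ℝ := min c 1 with hμdef
  have hμpos : 0 < μ := lt_min hc one_pos
  have hμc : μ ≤ c := min_le_left _ _
  have hμ1 : μ ≤ 1 := min_le_right _ _
  set ε : ℝ := μ / (2 * n₀) with hεdef
  have hε : 0 < ε := div_pos hμpos (by linarith)
  have hεn₀ : ε * n₀ = μ / 2 := by
    rw [hεdef, div_mul_eq_mul_div, div_eq_div_iff (by positivity) (by norm_num)]
    ring
  have hεc : ε ≤ c := by
    have : ε ≤ μ := by
      rw [hεdef]
      apply div_le_self hμpos.le (by linarith)
    linarith
  have hεn₀c : ε * n₀ ≤ c := by rw [hεn₀]; linarith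
  have hεn₀half : ε * n₀ ≤ 1/2 := by rw [hεn₀]; linarith
  set N₀ : ℝ := n₀ + 1 / (2 * ε) with hN₀def
  have hN₀gt : n₀ < N₀ := by
    rw [hN₀def]
    have : 0 < 1 / (2 * ε) := by positivity
    linarith
  have hεN₀ : ε * N₀ ≤ 1 := by
    rw [hN₀def, mul_add]
    have : ε * (1 / (2 * ε)) = 1 / 2 := by
      rw [mul_one_div, div_eq_div_iff (by positivity) (by norm_num)]
      ring
    rw [this]
    linarith
  -- the extension
  set T : ℝ → ℝ := fun x => if x ≤ n₀ then S x else S n₀ + ε * (x - n₀) with hTdef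
  have hTS : ∀ x, x ≤ n₀ → T x = S x := by intro x hx; simp [hTdef, hx]
  have hTL : ∀ x, n₀ < x → T x = S n₀ + ε * (x - n₀) := by
    intro x hx; simp [hTdef, not_le.mpr hx]
  have hTn₀ : T n₀ = S n₀ := hTS n₀ le_rfl
  have hTN₀ : T N₀ = S n₀ + 1/2 := by
    have h1 : ε * (N₀ - n₀) = 1/2 := by
      rw [hN₀def]
      have h0 : n₀ + 1 / (2 * ε) - n₀ = 1 / (2 * ε) := by ring
      rw [h0, mul_one_div, div_eq_div_iff (by positivity) (by norm_num)]
      ring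
    rw [hTL N₀ hN₀gt]
    linarith
  clear hεn₀ hμc hμ1 hμpos hεdef hμdef hN₀def
  clear_value μ ε N₀
  clear μ
  clear hTdef
  clear_value T
  refine ⟨N₀, hN₀gt, T, ?_, ?_, hTN₀⟩
  swap
  · intro x hx; exact hTS x hx.2
  have hmemN₀ : ∀ x, 1 ≤ x → x ≤ N₀ → x ∈ Set.Icc (1:ℝ) N₀ := fun x h1 h2 => ⟨h1, h2⟩
  refine ⟨?_, ?_, ?_, ?_, ?_, ?_⟩
  -- piecewise linear
  · refine ⟨m + 1, fun i => if i ≤ m then t i else N₀, by omega, by simp [ht0], by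
      simp, ?_, ?_⟩
    · intro i hi
      show (if i ≤ m then t i else N₀) < (if i + 1 ≤ m then t (i + 1) else N₀)
      rcases lt_or_ge i m with h | h
      · rw [if_pos h.le, if_pos (show i + 1 ≤ m by omega)]
        exact htlt i h
      · have hieq : i = m := by omega
        subst hieq
        rw [if_pos le_rfl, if_neg (show ¬ i + 1 ≤ i by omega), htm]
        exact hN₀gt
    · intro i hi
      rcases lt_or_ge i m with h | h
      · obtain ⟨ci, di, hci⟩ := hpc i h
        refine ⟨ci, di, ?_⟩
        have e1 : (if i ≤ m then t i else N₀) = t i := if_pos h.le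
        have e2 : (if i + 1 ≤ m then t (i + 1) else N₀) = t (i + 1) :=
          if_pos (show i + 1 ≤ m by omega)
        simp only [e1, e2]
        intro x hx
        have hxn : x ≤ n₀ := le_trans hx.2 (htn₀ (i + 1) (by omega))
        rw [hTS x hxn]
        exact hci x hx
      · have hieq : i = m := by omega
        subst hieq
        refine ⟨ε, S n₀ - ε * n₀, ?_⟩
        have e1 : (if i ≤ i then t i else N₀) = t i := if_pos le_rfl
        have e2 : (if i + 1 ≤ i then t (i + 1) else N₀) = N₀ :=
          if_neg (by omega)
        simp only [e1, e2, htm]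
        intro x hx
        rcases le_or_gt x n₀ with h' | h'
        · have hxn : x = n₀ := le_antisymm h' (by simpa using hx.1)
          rw [hTS x h', hxn]; ring
        · rw [hTL x h']; ring
  -- continuity
  · have h1 : ContinuousOn T (Set.Icc 1 n₀) :=
      hS.continuousOn.congr (fun x hx => hTS x hx.2)
    have h2 : ContinuousOn T (Set.Icc n₀ N₀) := by
      have : ContinuousOn (fun x => S n₀ + ε * (x - n₀)) (Set.Icc n₀ N₀) := by
        fun_prop
      apply this.congr
      intro x hx
      rcases le_or_gt x n₀ with h' | h'
      · have hxn : x = n₀ := le_antisymm h' hx.1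
        rw [hTS x h', hxn]; ring
      · rw [hTL x h']
    have := continuousOn_union_closed isClosed_Icc isClosed_Icc h1 h2
    exact this.mono (Set.Icc_subset_Icc_union_Icc)
  -- strict monotonicity
  · intro a ha b hb hab
    have ha1 : 1 ≤ a := ha.1
    have hb1 : 1 ≤ b := hb.1
    have haN : a ≤ N₀ := ha.2
    have hbN : b ≤ N₀ := hb.2
    rcases le_or_gt b n₀ with hbn | hbn
    · rw [hTS a (by linarith), hTS b hbn]
      exact hS.strictMonoOn ⟨ha.1, by linarith⟩ ⟨by linarith, hbn⟩ hab
    · rw [hTL b hbn]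
      rcases le_or_gt a n₀ with han | han
      · rw [hTS a han]
        have := monoS a n₀ ha.1 han le_rfl
        nlinarith
      · rw [hTL a han]
        nlinarith
  -- concavity
  · apply concaveOn_of_slope_anti_adjacent (convex_Icc 1 N₀)
    intro x y z hx hz hxy hyz
    have hx1 : 1 ≤ x := hx.1
    have hzN : z ≤ N₀ := hz.2
    rw [div_le_div_iff₀ (by linarith) (by linarith)]
    rcases le_or_gt z n₀ with hzn | hzn
    · -- all in S region
      rw [hTS x (by linarith), hTS y (by linarith), hTS z hzn]
      have hsl := hS.concaveOn.slope_anti_adjacent (x := x) (y := y) (z := z)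
        ⟨hx1, by linarith⟩ ⟨by linarith, hzn⟩ hxy hyz
      rw [div_le_div_iff₀ (by linarith) (by linarith)] at hsl
      linarith
    · rcases le_or_gt x n₀ with hxn | hxn
      · rcases le_or_gt y n₀ with hyn | hyn
        · -- x, y ≤ n₀ < z
          rw [hTS x hxn, hTS y hyn, hTL z hzn]
          have h2 : ε * (y - x) ≤ S y - S x := by
            have := F1 x y hx1 hxy.le hyn
            nlinarith
          have h1 : (S n₀ - S y) * (y - x) ≤ (S y - S x) * (n₀ - y) := by
            rcases eq_or_lt_of_le hyn with rfl | hyn'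
            · simp
            have hsl := hS.concaveOn.slope_anti_adjacent (x := x) (y := y) (z := n₀)
              ⟨hx1, hxn⟩ hmemn₀ hxy hyn'
            rw [div_le_div_iff₀ (by linarith) (by linarith)] at hsl
            linarith
          nlinarith
        · -- x ≤ n₀ < y < z
          rw [hTS x hxn, hTL y hyn, hTL z hzn]
          have h1 : c * (n₀ - x) ≤ S n₀ - S x := F1 x n₀ hx1 hxn le_rfl
          have h2 : 0 ≤ S n₀ - S x - ε * (n₀ - x) := by nlinarith
          nlinarith [mul_nonneg (by linarith : (0:ℝ) ≤ z - y) h2]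
      · -- n₀ < x < y < z
        rw [hTL x hxn, hTL y (by linarith), hTL z hzn]
        nlinarith
  -- eq_id
  · intro x hx1 hx2
    rw [hTS x (by linarith)]
    exact hS.eq_id x hx1 hx2
  -- submultiplicativity
  · clear_value t'
    clear hm ht0 htm htlt hpc ht_le_aux ht_le ht1 htn₀ hcd hm1 ht'1 ht'lt hmemt'
      hmemn₀ hSt' hSn₀lin L1 hS1 hS2 monoS hTn₀ hTN₀ hmemN₀ ht'def
    clear t' d t m
    have key : ∀ a b : ℝ, 1 ≤ a → 1 ≤ b → a ≤ n₀ → n₀ < a * b → a * b ≤ N₀ →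
        T (a * b) ≤ T a * T b := by
      intro a b ha hb han hab habN
      have ha0 : (0:ℝ) < a := by linarith
      have hb0 : (0:ℝ) < b := by linarith
      rw [hTL (a * b) hab, hTS a han]
      rcases le_or_gt b n₀ with hbn | hbn
      · -- both ≤ n₀
        rw [hTS b hbn]
        have hdiv1 : 1 ≤ n₀ / a := (one_le_div ha0).mpr han
        have hdivb : n₀ / a ≤ b := by
          rw [div_le_iff₀ ha0]; nlinarith
        have hprod : a * (n₀ / a) = n₀ := by
          rw [mul_comm]; exact div_mul_cancel₀ _ (ne_of_gt ha0)
        have hsm : S n₀ ≤ S a * S (n₀ / a) := by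
          have := hS.submult a (n₀ / a) ha hdiv1 (by rw [hprod])
          rwa [hprod] at this
        have hF : c * (b - n₀ / a) ≤ S b - S (n₀ / a) := F1 (n₀ / a) b hdiv1 hdivb hbn
        have hSa1 : 1 ≤ S a := hSge1 a ha han
        have hdiff0 : 0 ≤ S b - S (n₀ / a) := by nlinarith
        have hεle : ε * (a * b - n₀) ≤ c * (b - n₀ / a) := by
          have h : n₀ / a * a = n₀ := div_mul_cancel₀ _ ha0.ne'
          have heq : c * (b - n₀ / a) * a = c * (a * b - n₀) := by
            linear_combination (-c) * h
          have hεa : ε * a ≤ c := by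
            nlinarith [mul_le_mul_of_nonneg_left han hε.le]
          have h2 : ε * (a * b - n₀) * a ≤ c * (b - n₀ / a) * a := by
            rw [heq]
            nlinarith [mul_nonneg (sub_nonneg.mpr hεa) (show (0:ℝ) ≤ a * b - n₀ by linarith)]
          exact le_of_mul_le_mul_right h2 ha0
        nlinarith [mul_nonneg (sub_nonneg.mpr hSa1) hdiff0]
      · -- a ≤ n₀ < b
        rw [hTL b hbn]
        rcases le_or_gt a 2 with ha2 | ha2
        · rw [hS.eq_id a ha ha2]
          nlinarith
        · have hSa2 : 2 ≤ S a := hSge2 a ha2.le han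
          have hεab : ε * (a * b) ≤ 1 := by nlinarith
          have h3 : (3:ℝ)/2 ≤ (S a - 1) * (S n₀ - ε * n₀) := by
            nlinarith [mul_le_mul (show (1:ℝ) ≤ S a - 1 by linarith)
              (show (3:ℝ)/2 ≤ S n₀ - ε * n₀ by linarith) (by norm_num) (by linarith)]
          rcases le_or_gt a (S a) with haS | haS
          · nlinarith [mul_nonneg (mul_nonneg hε.le hb0.le) (sub_nonneg.mpr haS), h3]
          · have h1 : ε * b * (a - S a) ≤ ε * (a * b) := by
              nlinarith [mul_nonneg (mul_nonneg hε.le hb0.le)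
                (show (0:ℝ) ≤ S a by linarith)]
            nlinarith [h1, hεab, h3]
    intro x y hx hy hxyN
    rcases le_or_gt (x * y) n₀ with hxy | hxy
    · have hxn : x ≤ n₀ := le_trans (le_mul_of_one_le_right (by linarith) hy) hxy
      have hyn : y ≤ n₀ := le_trans (le_mul_of_one_le_left (by linarith) hx) hxy
      rw [hTS x hxn, hTS y hyn, hTS (x * y) hxy]
      exact hS.submult x y hx hy hxy
    · rcases le_or_gt x n₀ with hxn | hxn
      · exact key x y hx hy hxn hxy hxyN
      · rcases le_or_gt y n₀ with hyn | hyn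
        · have h := key y x hy hx hyn (by rw [mul_comm]; exact hxy)
            (by rw [mul_comm]; exact hxyN)
          rw [mul_comm y x] at h
          linarith [h]
        · -- both > n₀
          rw [hTL (x * y) hxy, hTL x hxn, hTL y hyn]
          have hεxy : ε * (x * y) ≤ 1 := by nlinarith
          have hA : 2 * S n₀ ≤ S n₀ * S n₀ := by nlinarith
          have hB : 0 ≤ ε * S n₀ * (x - n₀) :=
            mul_nonneg (mul_nonneg hε.le (by linarith)) (by linarith)
          have hC : 0 ≤ ε * S n₀ * (y - n₀) :=
            mul_nonneg (mul_nonneg hε.le (by linarith)) (by linarith)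
          have hD : 0 ≤ (ε * (x - n₀)) * (ε * (y - n₀)) :=
            mul_nonneg (mul_nonneg hε.le (by linarith)) (mul_nonneg hε.le (by linarith))
          nlinarith [hεxy, hA, hB, hC, hD, mul_nonneg hε.le hn₀0.le]

/-- Lemma 2.5. If `S` is submultiplicative on `[1,n₀]`, then for every
`M > 0` there are `N₀ > n₀` and a submultiplicative extension of `S` to `[1,N₀]` whose
value at `N₀` exceeds `M`. -/
theorem statement3 (n₀ : ℝ) (hn₀ : 2 ≤ n₀) (S : ℝ → ℝ) (hS : IsSubmultOn S n₀)
    (M : ℝ) (hM : 0 < M) :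
    ∃ N₀ : ℝ, n₀ < N₀ ∧ ∃ T : ℝ → ℝ, IsSubmultOn T N₀ ∧ Set.EqOn T S (Set.Icc 1 n₀) ∧
      M < T N₀ := by
  have hSn₀ : 2 ≤ S n₀ := by
    have h2 : S 2 = 2 := hS.eq_id 2 (by norm_num) le_rfl
    rcases eq_or_lt_of_le hn₀ with rfl | h
    · linarith
    · have := hS.strictMonoOn ⟨by norm_num, hn₀⟩ ⟨by linarith, le_rfl⟩ h
      linarith
  have main : ∀ k : ℕ, ∃ N : ℝ, n₀ < N ∧ ∃ T : ℝ → ℝ, IsSubmultOn T N ∧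
      Set.EqOn T S (Set.Icc 1 n₀) ∧ S n₀ + (k + 1) / 2 ≤ T N := by
    intro k
    induction k with
    | zero =>
      obtain ⟨N, hN, T, hT, heq, hval⟩ := extend_half n₀ hn₀ S hS
      exact ⟨N, hN, T, hT, heq, by rw [hval]; norm_num⟩
    | succ k ih =>
      obtain ⟨N, hN, T, hT, heq, hval⟩ := ih
      obtain ⟨N', hN', T', hT', heq', hval'⟩ := extend_half N (by linarith) T hT
      refine ⟨N', by linarith, T', hT', ?_, ?_⟩
      · intro x hx
        have h1 : x ∈ Set.Icc (1:ℝ) N := ⟨hx.1, le_trans hx.2 (by linarith)⟩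
        rw [heq' h1]
        exact heq hx
      · rw [hval']
        push_cast
        linarith
  obtain ⟨k, hk⟩ := exists_nat_gt (2 * M)
  obtain ⟨N, hN, T, hT, heq, hval⟩ := main k
  refine ⟨N, hN, T, hT, heq, ?_⟩
  have : (k : ℝ) + 1 > 2 * M := by linarith
  linarith
end

section
/- There exists a sequence (S_i)_{i=1}^∞ of functions, each submultiplicative on [1,∞), such that for every nonempty finite set A ⊂ ℕ and every j ∈ ℕ \ A, we have sup_{n ≥ 1, n ∈ ℕ} S_j(n) / (max_{i ∈ A} S_i(n)) = ∞; that is, for every real number N there exists a positive integer n with S_j(n) > N · max_{i ∈ A} S_i(n). -/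
/-!
Each `Sᵢ` is the concave polygon through `(1, 1)`, `(2, 2)` and the points `(2 ^ 4 ^ m, vᵢ m)`,
where `vᵢ m = 2 ∏_{k < m} fᵢ k` and every factor `fᵢ k` is either `√2` or `1 + 2⁻¹ ^ (k + 2)`.
The knots grow so fast that the slopes decrease, and `x ≤ 2 ^ 4 ^ m` gives
`x² ≤ 2 ^ 4 ^ (m + 1)`; as two consecutive factors multiply to at most `2`, `S (x²) ≤ 2 S x`.
Together with `S (τ x) ≤ τ S x` for `τ ≥ 1` (all chords have nonnegative intercept) this yields
submultiplicativity.

The indices `k ∈ [4 ^ b, 4 ^ (b + 1))` form block `b`, in which only `i = (unpair b).1` gets the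
factor `√2`. At the end of block `b` this `vᵢ` has gained `√2 ^ (3 · 4 ^ b)`, while every other
`vᵢ` is at most `4 · √2 ^ 4 ^ b`. Every `j` owns blocks with `b` arbitrarily large, so
`S_j / max_{i ∈ A} Sᵢ` is unbounded.
-/

/-- `S` is piecewise linear on `[1,∞)`: affine on each interval of a locally finite
partition `1 = t 0 < t 1 < ⋯` with `t i → ∞`. -/
def PiecewiseLinearOnInf (S : ℝ → ℝ) : Prop :=
  ∃ t : ℕ → ℝ, t 0 = 1 ∧ StrictMono t ∧ Filter.Tendsto t Filter.atTop Filter.atTop ∧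
    ∀ i : ℕ, ∃ c d : ℝ, ∀ x ∈ Set.Icc (t i) (t (i + 1)), S x = c * x + d

/-- `S` is submultiplicative on `[1,∞)`:
(a) piecewise linear, continuous, strictly increasing and concave on `[1,∞)`;
(b) `S x = x` for `1 ≤ x ≤ 2`;
(c) `S (x*y) ≤ S x * S y` whenever `1 ≤ x` and `1 ≤ y`. -/
structure IsSubmultOnInf (S : ℝ → ℝ) : Prop where
  piecewiseLinear : PiecewiseLinearOnInf S
  continuousOn : ContinuousOn S (Set.Ici 1)
  strictMonoOn : StrictMonoOn S (Set.Ici 1)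
  concaveOn : ConcaveOn ℝ (Set.Ici 1) S
  eq_id : ∀ x : ℝ, 1 ≤ x → x ≤ 2 → S x = x
  submult : ∀ x y : ℝ, 1 ≤ x → 1 ≤ y → S (x * y) ≤ S x * S y

open Filter

lemma submult_of_sq_le_two_mul {S : ℝ → ℝ} (hmono : MonotoneOn S (Set.Ici 1))
    (hid : ∀ x, 1 ≤ x → x ≤ 2 → S x = x) (hhom : ∀ τ x, 1 ≤ τ → 1 ≤ x → S (τ * x) ≤ τ * S x)
    (hsq : ∀ x, 2 ≤ x → S (x ^ 2) ≤ 2 * S x) {x y : ℝ} (hx : 1 ≤ x) (hy : 1 ≤ y) :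
    S (x * y) ≤ S x * S y := by
  wlog hyx : y ≤ x generalizing x y
  · rw [mul_comm x, mul_comm (S x)]
    exact this hy hx (le_of_not_ge hyx)
  rcases le_total y 2 with hy₂ | hy₂
  · calc S (x * y) = S (y * x) := by rw [mul_comm]
      _ ≤ y * S x := hhom y x hy hx
      _ = S x * S y := by rw [hid y hy hy₂, mul_comm]
  · have hSx : 1 ≤ S x := hid 1 le_rfl one_le_two ▸ hmono (Set.mem_Ici.2 le_rfl) hx hx
    have hSy : 2 ≤ S y := hid 2 one_le_two le_rfl ▸ hmono (Set.mem_Ici.2 one_le_two) hy hy₂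
    calc S (x * y) ≤ S (x ^ 2) :=
          hmono (Set.mem_Ici.2 (by nlinarith)) (Set.mem_Ici.2 (by nlinarith)) (by nlinarith)
      _ ≤ 2 * S x := hsq x (hy₂.trans hyx)
      _ ≤ S x * S y := by nlinarith

section Polyline

open Set

variable {t V : ℕ → ℝ}

noncomputable def chordSlope (t V : ℕ → ℝ) (k : ℕ) : ℝ :=
  (V (k + 1) - V k) / (t (k + 1) - t k)

noncomputable def chordLine (t V : ℕ → ℝ) (k : ℕ) (x : ℝ) : ℝ :=
  V k + chordSlope t V k * (x - t k)

/-- When the chord slopes decrease, this infimum is the piecewise linear interpolation of the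
points `(t k, V k)` on `[t 0, ∞)` (see `polyline_eq_chordLine`). -/
noncomputable def polyline (t V : ℕ → ℝ) (x : ℝ) : ℝ :=
  ⨅ k, chordLine t V k x

lemma chordLine_self (k : ℕ) : chordLine t V k (t k) = V k := by
  simp [chordLine]

lemma chordLine_eq_add (k : ℕ) (x : ℝ) :
    chordLine t V k x = chordLine t V k 0 + chordSlope t V k * x := by
  simp only [chordLine]; ring

lemma chordSlope_pos (ht : StrictMono t) (hV : StrictMono V) (k : ℕ) : 0 < chordSlope t V k :=
  div_pos (sub_pos.2 (hV k.lt_succ_self)) (sub_pos.2 (ht k.lt_succ_self))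

lemma chordLine_sub_chordLine_succ (ht : StrictMono t) (k : ℕ) (x : ℝ) :
    chordLine t V k x - chordLine t V (k + 1) x =
      (chordSlope t V k - chordSlope t V (k + 1)) * (x - t (k + 1)) := by
  have hgap : t (k + 1) - t k ≠ 0 := (sub_pos.2 (ht k.lt_succ_self)).ne'
  simp only [chordLine, chordSlope]
  field_simp
  ring

lemma chordLine_le_chordLine_of_le_knot (ht : StrictMono t) (hs : Antitone (chordSlope t V))
    {a b : ℕ} (hab : a ≤ b) {x : ℝ} (hx : x ≤ t (a + 1)) :
    chordLine t V a x ≤ chordLine t V b x := by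
  induction b, hab using Nat.le_induction with
  | base => exact le_rfl
  | succ n hn ih =>
    have hxn : x ≤ t (n + 1) := hx.trans (ht.monotone (by omega))
    have := mul_nonpos_of_nonneg_of_nonpos (sub_nonneg.2 (hs n.le_succ)) (sub_nonpos.2 hxn)
    linarith [chordLine_sub_chordLine_succ (V := V) ht n x]

lemma chordLine_le_chordLine_of_knot_le (ht : StrictMono t) (hs : Antitone (chordSlope t V))
    {a b : ℕ} (hab : a ≤ b) {x : ℝ} (hx : t b ≤ x) :
    chordLine t V b x ≤ chordLine t V a x := by
  induction b, hab using Nat.le_induction with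
  | base => exact le_rfl
  | succ n hn ih =>
    have hxn : t n ≤ x := (ht n.lt_succ_self).le.trans hx
    have := mul_nonneg (sub_nonneg.2 (hs n.le_succ)) (sub_nonneg.2 hx)
    linarith [chordLine_sub_chordLine_succ (V := V) ht n x, ih hxn]

lemma chordLine_le_chordLine (ht : StrictMono t) (hs : Antitone (chordSlope t V)) {j : ℕ}
    {x : ℝ} (h₁ : t j ≤ x) (h₂ : x ≤ t (j + 1)) (k : ℕ) :
    chordLine t V j x ≤ chordLine t V k x :=
  (le_total k j).elim (chordLine_le_chordLine_of_knot_le ht hs · h₁)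
    (chordLine_le_chordLine_of_le_knot ht hs · h₂)

lemma polyline_eq_chordLine (ht : StrictMono t) (hs : Antitone (chordSlope t V)) {k : ℕ}
    {x : ℝ} (h₁ : t k ≤ x) (h₂ : x ≤ t (k + 1)) : polyline t V x = chordLine t V k x :=
  have hle := chordLine_le_chordLine ht hs h₁ h₂
  le_antisymm (ciInf_le ⟨_, forall_mem_range.2 hle⟩ k) (le_ciInf hle)

lemma polyline_knot (ht : StrictMono t) (hs : Antitone (chordSlope t V)) (k : ℕ) :
    polyline t V (t k) = V k := by
  rw [polyline_eq_chordLine ht hs le_rfl (ht k.lt_succ_self).le, chordLine_self]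

lemma exists_knot_le_le (ht : StrictMono t) (htop : Tendsto t atTop atTop) {x : ℝ}
    (hx : t 0 ≤ x) : ∃ k, t k ≤ x ∧ x ≤ t (k + 1) := by
  rcases hx.eq_or_lt with rfl | hx
  · exact ⟨0, le_rfl, (ht zero_lt_one).le⟩
  · obtain ⟨k, hk₁, hk₂⟩ := ht.exists_between_of_tendsto_atTop htop hx
    exact ⟨k, hk₁.le, hk₂⟩

lemma polyline_le_chordLine (ht : StrictMono t) (hs : Antitone (chordSlope t V))
    (htop : Tendsto t atTop atTop) {x : ℝ} (hx : t 0 ≤ x) (k : ℕ) :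
    polyline t V x ≤ chordLine t V k x := by
  obtain ⟨j, hj₁, hj₂⟩ := exists_knot_le_le ht htop hx
  rw [polyline_eq_chordLine ht hs hj₁ hj₂]
  exact chordLine_le_chordLine ht hs hj₁ hj₂ k

lemma concaveOn_polyline (ht : StrictMono t) (hs : Antitone (chordSlope t V))
    (htop : Tendsto t atTop atTop) : ConcaveOn ℝ (Ici (t 0)) (polyline t V) := by
  refine ⟨convex_Ici _, fun x hx y hy a b ha hb hab => le_ciInf fun k => ?_⟩
  have hline : chordLine t V k (a • x + b • y) = a * chordLine t V k x + b * chordLine t V k y := by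
    simp only [chordLine, smul_eq_mul]
    linear_combination (V k - chordSlope t V k * t k) * hab.symm
  rw [hline, smul_eq_mul, smul_eq_mul]
  gcongr
  · exact polyline_le_chordLine ht hs htop hx k
  · exact polyline_le_chordLine ht hs htop hy k

lemma strictMonoOn_polyline (ht : StrictMono t) (hV : StrictMono V)
    (hs : Antitone (chordSlope t V)) (htop : Tendsto t atTop atTop) :
    StrictMonoOn (polyline t V) (Ici (t 0)) := by
  intro x hx y hy hxy
  obtain ⟨k, hk₁, hk₂⟩ := exists_knot_le_le ht htop hy
  rw [polyline_eq_chordLine ht hs hk₁ hk₂]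
  calc polyline t V x ≤ chordLine t V k x := polyline_le_chordLine ht hs htop hx k
    _ < chordLine t V k y := by
      simp only [chordLine]
      gcongr
      exact chordSlope_pos ht hV k

lemma polyline_le_add_mul (ht : StrictMono t) (hs : Antitone (chordSlope t V))
    (htop : Tendsto t atTop atTop) {x y : ℝ} (hx : t 0 ≤ x) (hxy : x ≤ y) :
    polyline t V y ≤ polyline t V x + chordSlope t V 0 * (y - x) := by
  obtain ⟨k, hk₁, hk₂⟩ := exists_knot_le_le ht htop hx
  calc polyline t V y ≤ chordLine t V k y := polyline_le_chordLine ht hs htop (hx.trans hxy) k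
    _ = chordLine t V k x + chordSlope t V k * (y - x) := by simp only [chordLine]; ring
    _ ≤ polyline t V x + chordSlope t V 0 * (y - x) := by
      rw [polyline_eq_chordLine ht hs hk₁ hk₂]
      exact add_le_add_right (mul_le_mul_of_nonneg_right (hs k.zero_le) (sub_nonneg.2 hxy)) _

lemma continuousOn_polyline (ht : StrictMono t) (hV : StrictMono V)
    (hs : Antitone (chordSlope t V)) (htop : Tendsto t atTop atTop) :
    ContinuousOn (polyline t V) (Ici (t 0)) := by
  refine (LipschitzOnWith.of_le_add_mul' (chordSlope t V 0) fun x hx y hy => ?_).continuousOn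
  rcases le_total x y with hxy | hyx
  · exact ((strictMonoOn_polyline ht hV hs htop).monotoneOn hx hy hxy).trans
      (le_add_of_nonneg_right (mul_nonneg (chordSlope_pos ht hV 0).le dist_nonneg))
  · rw [Real.dist_eq, abs_of_nonneg (sub_nonneg.2 hyx)]
    exact polyline_le_add_mul ht hs htop hy hyx

lemma polyline_mul_le (ht : StrictMono t) (hs : Antitone (chordSlope t V))
    (htop : Tendsto t atTop atTop) (hint : ∀ k, 0 ≤ chordLine t V k 0) {τ x : ℝ} (hτ : 1 ≤ τ)
    (hx : t 0 ≤ x) (hx₀ : 0 ≤ x) : polyline t V (τ * x) ≤ τ * polyline t V x := by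
  have hτ₀ : 0 < τ := by linarith
  rw [mul_comm τ (polyline t V x), ← div_le_iff₀ hτ₀]
  refine le_ciInf fun k => (div_le_iff₀ hτ₀).2 ?_
  calc polyline t V (τ * x) ≤ chordLine t V k (τ * x) :=
        polyline_le_chordLine ht hs htop (by nlinarith) k
    _ ≤ chordLine t V k x * τ := by
      rw [chordLine_eq_add k x, chordLine_eq_add k (τ * x)]
      nlinarith [mul_le_mul_of_nonneg_left hτ (hint k)]

lemma piecewiseLinearOnInf_polyline (ht : StrictMono t) (hs : Antitone (chordSlope t V))
    (ht₀ : t 0 = 1) (htop : Tendsto t atTop atTop) : PiecewiseLinearOnInf (polyline t V) :=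
  ⟨t, ht₀, ht, htop, fun k => ⟨chordSlope t V k, chordLine t V k 0, fun x hx => by
    rw [polyline_eq_chordLine ht hs hx.1 hx.2, chordLine_eq_add]; ring⟩⟩

lemma polyline_sq_le (ht : StrictMono t) (hV : StrictMono V) (hs : Antitone (chordSlope t V))
    (htop : Tendsto t atTop atTop) (ht₀ : t 0 = 1) (ht₁ : t 1 = 2)
    (hsq : ∀ m, t (m + 2) ^ 2 ≤ t (m + 3)) (hV₂ : ∀ m, V (m + 3) ≤ 2 * V (m + 1)) {x : ℝ}
    (hx : 2 ≤ x) : polyline t V (x ^ 2) ≤ 2 * polyline t V x := by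
  obtain ⟨m, hm₁, hm₂⟩ : ∃ m, t (m + 1) ≤ x ∧ x ≤ t (m + 1 + 1) :=
    exists_knot_le_le (t := fun k => t (k + 1)) (ht.comp (strictMono_id.add_const 1))
      (htop.comp (tendsto_add_atTop_nat 1)) (ht₁ ▸ hx)
  have hmono := (strictMonoOn_polyline ht hV hs htop).monotoneOn
  have hknot (k : ℕ) : t k ∈ Ici (t 0) := ht.monotone k.zero_le
  have hx₀ : x ∈ Ici (t 0) := (hknot (m + 1)).trans hm₁
  calc polyline t V (x ^ 2) ≤ polyline t V (t (m + 3)) := by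
        refine hmono (mem_Ici.2 (by rw [ht₀]; nlinarith)) (hknot _) ?_
        exact (pow_le_pow_left₀ (by linarith) hm₂ 2).trans (hsq m)
    _ = V (m + 3) := polyline_knot ht hs _
    _ ≤ 2 * V (m + 1) := hV₂ m
    _ = 2 * polyline t V (t (m + 1)) := by rw [polyline_knot ht hs]
    _ ≤ 2 * polyline t V x := by gcongr; exact hmono (hknot _) hx₀ hm₁

theorem isSubmultOnInf_polyline (ht : StrictMono t) (hV : StrictMono V)
    (hs : Antitone (chordSlope t V)) (htop : Tendsto t atTop atTop) (ht₀ : t 0 = 1)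
    (ht₁ : t 1 = 2) (hV₀ : V 0 = 1) (hV₁ : V 1 = 2) (hsq : ∀ m, t (m + 2) ^ 2 ≤ t (m + 3))
    (hV₂ : ∀ m, V (m + 3) ≤ 2 * V (m + 1)) : IsSubmultOnInf (polyline t V) := by
  have hdom : Ici (t 0) = Ici 1 := by rw [ht₀]
  have hid : ∀ x, 1 ≤ x → x ≤ 2 → polyline t V x = x := fun x h₁ h₂ => by
    rw [polyline_eq_chordLine ht hs (ht₀ ▸ h₁) (ht₁ ▸ h₂)]
    norm_num [chordLine, chordSlope, ht₀, ht₁, hV₀, hV₁]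
  have hint (k : ℕ) : 0 ≤ chordLine t V k 0 := by
    refine le_trans ?_ (chordLine_le_chordLine_of_le_knot ht hs k.zero_le (by linarith))
    norm_num [chordLine, chordSlope, ht₀, ht₁, hV₀, hV₁]
  have hmono := (strictMonoOn_polyline ht hV hs htop).monotoneOn
  rw [hdom] at hmono
  refine ⟨piecewiseLinearOnInf_polyline ht hs ht₀ htop, hdom ▸ continuousOn_polyline ht hV hs htop,
    hdom ▸ strictMonoOn_polyline ht hV hs htop, hdom ▸ concaveOn_polyline ht hs htop, hid,
    fun x y hx hy => submult_of_sq_le_two_mul hmono hid ?_ ?_ hx hy⟩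
  · exact fun τ x hτ hx => polyline_mul_le ht hs htop hint hτ (ht₀ ▸ hx) (by linarith)
  · exact fun x hx => polyline_sq_le ht hV hs htop ht₀ ht₁ hsq hV₂ hx

end Polyline

namespace SeparatedSubmult

open Finset

def owner (k : ℕ) : ℕ := (Nat.unpair (Nat.log 4 k)).1

noncomputable def factor (i k : ℕ) : ℝ := if owner k = i then √2 else 1 + 2⁻¹ ^ (k + 2)

noncomputable def knot : ℕ → ℝ
  | 0 => 1
  | k + 1 => 2 ^ 4 ^ k

noncomputable def knotValue (i : ℕ) : ℕ → ℝ
  | 0 => 1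
  | m + 1 => 2 * ∏ k ∈ range m, factor i k

lemma five_fourths_le_sqrt_two : 5 / 4 ≤ √2 :=
  Real.le_sqrt_of_sq_le (by norm_num)

lemma sqrt_two_le_three_halves : √2 ≤ 3 / 2 :=
  Real.sqrt_le_iff.2 ⟨by norm_num, by norm_num⟩

lemma inv_two_pow_add_two_le (k : ℕ) : (2⁻¹ : ℝ) ^ (k + 2) ≤ 4⁻¹ :=
  (pow_le_pow_of_le_one (by norm_num) (by norm_num) (by omega : 2 ≤ k + 2)).trans_eq (by norm_num)

lemma one_add_le_factor (i k : ℕ) : 1 + 2⁻¹ ^ (k + 2) ≤ factor i k := by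
  unfold factor
  split_ifs
  · linarith [five_fourths_le_sqrt_two, inv_two_pow_add_two_le k]
  · exact le_rfl

lemma one_lt_factor (i k : ℕ) : 1 < factor i k :=
  (lt_add_of_pos_right 1 (by positivity)).trans_le (one_add_le_factor i k)

lemma factor_le_sqrt_two (i k : ℕ) : factor i k ≤ √2 := by
  unfold factor
  split_ifs
  · exact le_rfl
  · linarith [five_fourths_le_sqrt_two, inv_two_pow_add_two_le k]

lemma factor_mul_factor_le_two (i k l : ℕ) : factor i k * factor i l ≤ 2 :=
  calc factor i k * factor i l ≤ √2 * √2 :=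
        mul_le_mul (factor_le_sqrt_two i k) (factor_le_sqrt_two i l)
          (zero_lt_one.trans (one_lt_factor i l)).le (Real.sqrt_nonneg 2)
    _ = 2 := Real.mul_self_sqrt zero_le_two

lemma knotValue_succ_succ (i m : ℕ) : knotValue i (m + 2) = knotValue i (m + 1) * factor i m := by
  simp only [knotValue, prod_range_succ]; ring

lemma knotValue_strictMono (i : ℕ) : StrictMono (knotValue i) := by
  refine strictMono_nat_of_lt_succ fun m => ?_
  cases m with
  | zero => norm_num [knotValue]
  | succ m =>
    have hpos : 0 < knotValue i (m + 1) := mul_pos two_pos (prod_pos fun k _ => by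
      linarith [one_lt_factor i k])
    rw [knotValue_succ_succ]
    exact lt_mul_of_one_lt_right hpos (one_lt_factor i m)

lemma knotValue_pos (i m : ℕ) : 0 < knotValue i m :=
  zero_lt_one.trans_le ((knotValue_strictMono i).monotone (Nat.zero_le m))

lemma knot_succ_succ (k : ℕ) : knot (k + 2) = knot (k + 1) ^ 4 := by
  rw [knot, knot, pow_succ 4 k, pow_mul]

lemma two_le_knot_succ (k : ℕ) : 2 ≤ knot (k + 1) :=
  le_self_pow₀ one_le_two (by positivity)

lemma knot_strictMono : StrictMono knot := by
  refine strictMono_nat_of_lt_succ fun k => ?_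
  cases k with
  | zero => norm_num [knot]
  | succ k =>
    rw [knot_succ_succ]
    exact lt_self_pow₀ (by linarith [two_le_knot_succ k]) (by norm_num)

lemma tendsto_knot : Tendsto knot atTop atTop := by
  refine tendsto_atTop_mono (fun k => ?_) tendsto_natCast_atTop_atTop
  cases k with
  | zero => norm_num [knot]
  | succ k =>
    have : k + 1 < 2 ^ 4 ^ k :=
      (Nat.succ_le_of_lt (Nat.lt_pow_self (by norm_num))).trans_lt Nat.lt_two_pow_self
    show ((k + 1 : ℕ) : ℝ) ≤ 2 ^ 4 ^ k
    exact_mod_cast this.le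

lemma two_pow_mul_knot_gap_le (m : ℕ) :
    2 ^ (m + 2) * (knot (m + 2) - knot (m + 1)) ≤ knot (m + 3) - knot (m + 2) := by
  have hpow : (2 : ℝ) ^ (m + 2) ≤ knot (m + 2) :=
    pow_le_pow_right₀ one_le_two (Nat.succ_le_of_lt (Nat.lt_pow_self (by norm_num)))
  have hgap : 0 ≤ knot (m + 2) - knot (m + 1) := sub_nonneg.2 (knot_strictMono (by omega)).le
  have h₂ := two_le_knot_succ (m + 1)
  calc 2 ^ (m + 2) * (knot (m + 2) - knot (m + 1)) ≤ knot (m + 2) * knot (m + 2) := by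
        gcongr
        linarith [two_le_knot_succ m]
    _ ≤ knot (m + 3) - knot (m + 2) := by
      rw [knot_succ_succ (m + 1)]
      nlinarith [mul_le_mul h₂ h₂ zero_le_two (by linarith)]

lemma chordSlope_knot_succ (i m : ℕ) : chordSlope knot (knotValue i) (m + 1) =
    knotValue i (m + 1) * (factor i m - 1) / (knot (m + 2) - knot (m + 1)) := by
  rw [chordSlope, knotValue_succ_succ]; ring

lemma antitone_chordSlope_knot (i : ℕ) : Antitone (chordSlope knot (knotValue i)) := by
  refine antitone_nat_of_succ_le fun k => ?_
  cases k with
  | zero =>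
    have h₀ : chordSlope knot (knotValue i) 0 = 1 := by norm_num [chordSlope, knot, knotValue]
    rw [h₀, chordSlope_knot_succ, div_le_one (sub_pos.2 (knot_strictMono (by omega)))]
    norm_num [knotValue, knot]
    linarith [factor_le_sqrt_two i 0, sqrt_two_le_three_halves]
  | succ m =>
    have hV₀ := knotValue_pos i (m + 1)
    have hgap : 0 < knot (m + 2) - knot (m + 1) := sub_pos.2 (knot_strictMono (by omega))
    have hfactors : factor i m * (factor i (m + 1) - 1) ≤ 1 := by
      nlinarith [factor_le_sqrt_two i m, factor_le_sqrt_two i (m + 1), sqrt_two_le_three_halves,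
        one_lt_factor i m, one_lt_factor i (m + 1)]
    rw [chordSlope_knot_succ, chordSlope_knot_succ, knotValue_succ_succ, mul_assoc]
    calc knotValue i (m + 1) * (factor i m * (factor i (m + 1) - 1)) / (knot (m + 3) - knot (m + 2))
        ≤ knotValue i (m + 1) / (2 ^ (m + 2) * (knot (m + 2) - knot (m + 1))) :=
          div_le_div₀ hV₀.le (mul_le_of_le_one_right hV₀.le hfactors) (by positivity)
            (two_pow_mul_knot_gap_le m)
      _ = knotValue i (m + 1) * 2⁻¹ ^ (m + 2) / (knot (m + 2) - knot (m + 1)) := by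
          rw [inv_pow]; field_simp
      _ ≤ knotValue i (m + 1) * (factor i m - 1) / (knot (m + 2) - knot (m + 1)) := by
          gcongr
          linarith [one_add_le_factor i m]

theorem isSubmultOnInf_polyline_knot (i : ℕ) : IsSubmultOnInf (polyline knot (knotValue i)) := by
  refine isSubmultOnInf_polyline knot_strictMono (knotValue_strictMono i)
    (antitone_chordSlope_knot i) tendsto_knot rfl (by norm_num [knot]) rfl (by norm_num [knotValue])
    (fun m => ?_) (fun m => ?_)
  · rw [knot_succ_succ (m + 1)]
    exact pow_le_pow_right₀ (by linarith [two_le_knot_succ (m + 1)]) (by norm_num)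
  · rw [knotValue_succ_succ, knotValue_succ_succ, mul_assoc]
    exact mul_le_mul_of_nonneg_left (factor_mul_factor_le_two i m (m + 1))
      (knotValue_pos i (m + 1)).le |>.trans_eq (mul_comm _ _)

lemma owner_eq_of_mem_Ico {b k : ℕ} (hk : k ∈ Ico (4 ^ b) (4 ^ (b + 1))) :
    owner k = (Nat.unpair b).1 := by
  rw [owner, Nat.log_eq_of_pow_le_of_lt_pow (mem_Ico.1 hk).1 (mem_Ico.1 hk).2]

lemma prod_one_add_inv_two_pow_le (K : ℕ) :
    ∏ k ∈ range K, (1 + 2⁻¹ ^ (k + 2) : ℝ) ≤ 2 - 2⁻¹ ^ K := by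
  induction K with
  | zero => norm_num
  | succ K ih =>
    have hK₀ : (0 : ℝ) ≤ 2⁻¹ ^ K := by positivity
    rw [prod_range_succ, show (2⁻¹ : ℝ) ^ (K + 2) = 2⁻¹ ^ K / 4 by ring,
      show (2⁻¹ : ℝ) ^ (K + 1) = 2⁻¹ ^ K / 2 by ring]
    nlinarith [mul_le_mul_of_nonneg_right ih (by positivity : (0 : ℝ) ≤ 1 + 2⁻¹ ^ K / 4)]

lemma knotValue_eq_mul_prod_Ico (i b : ℕ) : knotValue i (4 ^ (b + 1) + 1) =
    2 * (∏ k ∈ range (4 ^ b), factor i k) * ∏ k ∈ Ico (4 ^ b) (4 ^ (b + 1)), factor i k := by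
  rw [knotValue, mul_assoc,
    prod_range_mul_prod_Ico _ (Nat.pow_le_pow_right (by norm_num) b.le_succ)]

lemma knotValue_owner_ge (b : ℕ) :
    2 * 2 ^ 4 ^ b * √2 ^ 4 ^ b ≤ knotValue (Nat.unpair b).1 (4 ^ (b + 1) + 1) := by
  have hblock :
      ∏ k ∈ Ico (4 ^ b) (4 ^ (b + 1)), factor (Nat.unpair b).1 k = 2 ^ 4 ^ b * √2 ^ 4 ^ b := by
    rw [prod_congr rfl fun k hk => by rw [factor, if_pos (owner_eq_of_mem_Ico hk)], prod_const,
      Nat.card_Ico, show 4 ^ (b + 1) - 4 ^ b = 2 * 4 ^ b + 4 ^ b by rw [pow_succ]; omega,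
      pow_add, pow_mul, Real.sq_sqrt zero_le_two]
  have hprefix : 1 ≤ ∏ k ∈ range (4 ^ b), factor (Nat.unpair b).1 k :=
    one_le_prod fun k _ => (one_lt_factor _ k).le
  rw [knotValue_eq_mul_prod_Ico, hblock]
  have : (0 : ℝ) < 2 ^ 4 ^ b * √2 ^ 4 ^ b := by positivity
  nlinarith

lemma knotValue_le_of_ne_owner {i b : ℕ} (hi : (Nat.unpair b).1 ≠ i) :
    knotValue i (4 ^ (b + 1) + 1) ≤ 4 * √2 ^ 4 ^ b := by
  have hprefix : ∏ k ∈ range (4 ^ b), factor i k ≤ √2 ^ 4 ^ b :=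
    (prod_le_prod (fun k _ => (zero_lt_one.trans (one_lt_factor i k)).le)
      fun k _ => factor_le_sqrt_two i k).trans_eq (by rw [prod_const, card_range])
  have hblock : ∏ k ∈ Ico (4 ^ b) (4 ^ (b + 1)), factor i k ≤ 2 :=
    calc ∏ k ∈ Ico (4 ^ b) (4 ^ (b + 1)), factor i k
        = ∏ k ∈ Ico (4 ^ b) (4 ^ (b + 1)), (1 + 2⁻¹ ^ (k + 2) : ℝ) :=
          prod_congr rfl fun k hk => by rw [factor, if_neg (owner_eq_of_mem_Ico hk ▸ hi)]
      _ ≤ ∏ k ∈ range (4 ^ (b + 1)), (1 + 2⁻¹ ^ (k + 2) : ℝ) :=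
          prod_le_prod_of_subset_of_one_le
            (by rw [range_eq_Ico]; exact Ico_subset_Ico_left (Nat.zero_le _))
            (fun k _ => by positivity) fun k _ _ => le_add_of_nonneg_right (by positivity)
      _ ≤ 2 := (prod_one_add_inv_two_pow_le _).trans (sub_le_self 2 (by positivity))
  rw [knotValue_eq_mul_prod_Ico]
  calc 2 * (∏ k ∈ range (4 ^ b), factor i k) * ∏ k ∈ Ico (4 ^ b) (4 ^ (b + 1)), factor i k
      ≤ 2 * √2 ^ 4 ^ b * 2 := by
        gcongr
        exact prod_nonneg fun k _ => (zero_lt_one.trans (one_lt_factor i k)).le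
    _ = 4 * √2 ^ 4 ^ b := by ring

lemma polyline_knot_natCast (i M : ℕ) :
    polyline knot (knotValue i) ((2 ^ 4 ^ M : ℕ) : ℝ) = knotValue i (M + 1) := by
  rw [← polyline_knot knot_strictMono (antitone_chordSlope_knot i)]
  push_cast
  rfl

end SeparatedSubmult

open SeparatedSubmult

/-- Proposition 2.6. There is a sequence `(Sᵢ)` of submultiplicative
functions on `[1,∞)` such that for every nonempty finite `A ⊆ ℕ` and every `j ∉ A`,
`sup_{n ≥ 1} S_j(n) / max_{i ∈ A} S_i(n) = ∞`, i.e. for every real `N` there is a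
positive integer `n` with `S_j(n) > N · max_{i ∈ A} S_i(n)`. -/
theorem statement4 :
    ∃ S : ℕ → ℝ → ℝ, (∀ i : ℕ, IsSubmultOnInf (S i)) ∧
      ∀ A : Finset ℕ, ∀ hA : A.Nonempty, ∀ j : ℕ, j ∉ A → ∀ N : ℝ,
        ∃ n : ℕ, 1 ≤ n ∧ N * (A.sup' hA fun i => S i (n : ℝ)) < S j (n : ℝ) := by
  refine ⟨fun i => polyline knot (knotValue i), isSubmultOnInf_polyline_knot, ?_⟩
  intro A hA j hj N
  obtain ⟨K, hK⟩ := exists_nat_gt (2 * |N|)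
  set b := Nat.pair j K
  have hb : (Nat.unpair b).1 = j := by simp [b]
  refine ⟨2 ^ 4 ^ 4 ^ (b + 1), Nat.one_le_two_pow, ?_⟩
  simp only [polyline_knot_natCast]
  set R := √2 ^ 4 ^ b
  have hmax : A.sup' hA (fun i => knotValue i (4 ^ (b + 1) + 1)) ≤ 4 * R :=
    Finset.sup'_le _ _ fun i hi => knotValue_le_of_ne_owner (hb ▸ fun h => hj (h ▸ hi))
  have hmax₀ : 0 ≤ A.sup' hA (fun i => knotValue i (4 ^ (b + 1) + 1)) :=
    Finset.le_sup'_of_le _ hA.choose_spec (knotValue_pos _ _).le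
  have hN : 2 * |N| < 2 ^ 4 ^ b := hK.trans_le <| by
    exact_mod_cast ((Nat.right_le_pair j K).trans (Nat.lt_pow_self (by norm_num)).le).trans
      Nat.lt_two_pow_self.le
  have hR : 0 < R := by positivity
  calc N * A.sup' hA (fun i => knotValue i (4 ^ (b + 1) + 1)) ≤ |N| * (4 * R) :=
        (mul_le_mul_of_nonneg_right (le_abs_self N) hmax₀).trans (by gcongr)
    _ < 2 * 2 ^ 4 ^ b * R := by nlinarith
    _ ≤ knotValue j (4 ^ (b + 1) + 1) := hb ▸ knotValue_owner_ge b
end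

section
/- Fix 0 < τ < 1 and r > 1. There exists δ > 0 such that for all p with r < p < r + δ and for every sequence η : {1,2,3,…} → {0,1}, the function M_η is convex, continuous and non-decreasing on [0,1] with M_η(0) = 0 and M_η(1) = 1, and M_η satisfies the Δ₂-condition at zero: there exists a constant C > 0 such that M_η(2t) ≤ C·M_η(t) for all 0 ≤ t ≤ 1/2. -/
open Finset in
/-- `M` is the Orlicz function `M_η` of Lindenstrauss–Tzafriri associated to
`0 < τ < 1`, `1 < r < p < ∞` and a 0-1 sequence `η`: the continuous piecewise-linear
function on `[0,1]` with `M 0 = 0`, `M (τ^k) = τ^(rk + (p-r)·Σ_{n=1}^k η n)` for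
`k ≥ 0` (in particular `M 1 = 1`), affine on each interval `[τ^(k+1), τ^k]`. -/
def IsMeta (τ r p : ℝ) (η : ℕ → ℝ) (M : ℝ → ℝ) : Prop :=
  M 0 = 0 ∧
  (∀ k : ℕ, M (τ ^ k) = τ ^ (r * (k : ℝ) + (p - r) * ∑ n ∈ Finset.Icc 1 k, η n)) ∧
  (∀ k : ℕ, ∀ x ∈ Set.Icc (τ ^ (k + 1)) (τ ^ k),
    M x = M (τ ^ (k + 1)) +
      (x - τ ^ (k + 1)) * (M (τ ^ k) - M (τ ^ (k + 1))) / (τ ^ k - τ ^ (k + 1)))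

namespace St6

noncomputable def ee (r p : ℝ) (η : ℕ → ℝ) (k : ℕ) : ℝ :=
  r * (k : ℝ) + (p - r) * ∑ n ∈ Finset.Icc 1 k, η n

noncomputable def aa (τ r p : ℝ) (η : ℕ → ℝ) (k : ℕ) : ℝ := τ ^ (ee r p η k)

noncomputable def dd (r p : ℝ) (η : ℕ → ℝ) (k : ℕ) : ℝ := r + (p - r) * η (k + 1)

noncomputable def ss (τ r p : ℝ) (η : ℕ → ℝ) (k : ℕ) : ℝ :=
  (aa τ r p η k - aa τ r p η (k + 1)) / (τ ^ k - τ ^ (k + 1))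

structure Ctx (τ r p : ℝ) (η : ℕ → ℝ) (M : ℝ → ℝ) : Prop where
  hτ0 : 0 < τ
  hτ1 : τ < 1
  hr : 1 < r
  hp : r < p
  hkey : τ ^ (r - 1) * (1 - τ ^ p) ≤ 1 - τ ^ r
  hη : ∀ n, η n = 0 ∨ η n = 1
  hM0 : M 0 = 0
  hMk : ∀ k : ℕ, M (τ ^ k) = τ ^ (r * (k : ℝ) + (p - r) * ∑ n ∈ Finset.Icc 1 k, η n)
  hMaff : ∀ k : ℕ, ∀ x ∈ Set.Icc (τ ^ (k + 1)) (τ ^ k),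
    M x = M (τ ^ (k + 1)) +
      (x - τ ^ (k + 1)) * (M (τ ^ k) - M (τ ^ (k + 1))) / (τ ^ k - τ ^ (k + 1))

variable {τ r p : ℝ} {η : ℕ → ℝ} {M : ℝ → ℝ}

theorem Ctx.hMa (c : Ctx τ r p η M) (k : ℕ) : M (τ ^ k) = aa τ r p η k := c.hMk k

theorem Ctx.apos (c : Ctx τ r p η M) (k : ℕ) : 0 < aa τ r p η k :=
  Real.rpow_pos_of_pos c.hτ0 _

theorem Ctx.dd_r (c : Ctx τ r p η M) (k : ℕ) : r ≤ dd r p η k := by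
  rcases c.hη (k + 1) with h | h <;> unfold dd <;> rw [h] <;> nlinarith [c.hp]

theorem Ctx.dd_p (c : Ctx τ r p η M) (k : ℕ) : dd r p η k ≤ p := by
  rcases c.hη (k + 1) with h | h <;> unfold dd <;> rw [h] <;> nlinarith [c.hp]

theorem Ctx.ee_succ (c : Ctx τ r p η M) (k : ℕ) :
    ee r p η (k + 1) = ee r p η k + dd r p η k := by
  unfold ee dd
  rw [Finset.sum_Icc_succ_top (Nat.le_add_left 1 k)]
  push_cast
  ring

theorem Ctx.arec (c : Ctx τ r p η M) (k : ℕ) :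
    aa τ r p η (k + 1) = aa τ r p η k * τ ^ (dd r p η k) := by
  unfold aa
  rw [c.ee_succ k, Real.rpow_add c.hτ0]

theorem Ctx.alt (c : Ctx τ r p η M) (k : ℕ) : aa τ r p η (k + 1) ≤ τ * aa τ r p η k := by
  have h1 : τ ^ (dd r p η k) ≤ τ ^ (1 : ℝ) :=
    Real.rpow_le_rpow_of_exponent_ge c.hτ0 c.hτ1.le (by linarith [c.dd_r k, c.hr])
  rw [Real.rpow_one] at h1
  have := c.apos k
  rw [c.arec k]
  nlinarith

theorem Ctx.alt' (c : Ctx τ r p η M) (k : ℕ) : aa τ r p η (k + 1) < aa τ r p η k := by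
  have := c.alt k
  have := c.apos k
  nlinarith [c.hτ1]

theorem Ctx.amono (c : Ctx τ r p η M) : Antitone (aa τ r p η) :=
  antitone_nat_of_succ_le fun n => (c.alt' n).le

theorem Ctx.gap_pos (c : Ctx τ r p η M) (k : ℕ) : 0 < τ ^ k - τ ^ (k + 1) := by
  have h := pow_pos c.hτ0 k
  rw [pow_succ]
  nlinarith [c.hτ1]

theorem Ctx.spos (c : Ctx τ r p η M) (k : ℕ) : 0 < ss τ r p η k :=
  div_pos (sub_pos.mpr (c.alt' k)) (c.gap_pos k)

theorem Ctx.he (c : Ctx τ r p η M) (k : ℕ) :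
    aa τ r p η (k + 1) + (τ ^ k - τ ^ (k + 1)) * ss τ r p η k = aa τ r p η k := by
  unfold ss
  rw [mul_comm, div_mul_cancel₀ _ (c.gap_pos k).ne']
  ring

theorem Ctx.sformula (c : Ctx τ r p η M) (k : ℕ) {x : ℝ}
    (hx : x ∈ Set.Icc (τ ^ (k + 1)) (τ ^ k)) :
    M x = aa τ r p η (k + 1) + (x - τ ^ (k + 1)) * ss τ r p η k := by
  have h := c.hMaff k x hx
  rw [c.hMa, c.hMa] at h
  rw [h]
  unfold ss
  rw [mul_div_assoc]

theorem Ctx.sstep (c : Ctx τ r p η M) (k : ℕ) : ss τ r p η (k + 1) ≤ ss τ r p η k := by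
  have hτ0 := c.hτ0
  have hτ1 := c.hτ1
  set d0 := dd r p η k with hd0
  set d1 := dd r p η (k + 1) with hd1
  -- main scalar inequality
  have h1 : τ ^ (d0 - 1) ≤ τ ^ (r - 1) :=
    Real.rpow_le_rpow_of_exponent_ge hτ0 hτ1.le (by linarith [c.dd_r k])
  have h2 : τ ^ p ≤ τ ^ d1 :=
    Real.rpow_le_rpow_of_exponent_ge hτ0 hτ1.le (c.dd_p (k + 1))
  have h3 : τ ^ d0 ≤ τ ^ r :=
    Real.rpow_le_rpow_of_exponent_ge hτ0 hτ1.le (c.dd_r k)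
  have h4 : τ ^ d1 ≤ 1 := Real.rpow_le_one hτ0.le hτ1.le (by linarith [c.dd_r (k+1), c.hr])
  have h5 : (0:ℝ) ≤ τ ^ (r - 1) := (Real.rpow_pos_of_pos hτ0 _).le
  have hsplit : τ ^ d0 = τ * τ ^ (d0 - 1) := by
    rw [show τ * τ ^ (d0 - 1) = τ ^ (1:ℝ) * τ ^ (d0 - 1) by rw [Real.rpow_one],
      ← Real.rpow_add hτ0]
    norm_num
  have hmain : τ ^ d0 * (1 - τ ^ d1) ≤ τ * (1 - τ ^ d0) := by
    have hA : τ ^ (d0 - 1) * (1 - τ ^ d1) ≤ τ ^ (r - 1) * (1 - τ ^ p) :=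
      mul_le_mul h1 (by linarith) (by linarith) h5
    have hB : τ ^ (r - 1) * (1 - τ ^ p) ≤ 1 - τ ^ d0 := le_trans c.hkey (by linarith)
    calc τ ^ d0 * (1 - τ ^ d1) = τ * (τ ^ (d0 - 1) * (1 - τ ^ d1)) := by rw [hsplit]; ring
      _ ≤ τ * (1 - τ ^ d0) := by
          apply mul_le_mul_of_nonneg_left _ hτ0.le
          linarith
  -- now cross-multiply
  unfold ss
  rw [div_le_div_iff₀ (c.gap_pos (k + 1)) (c.gap_pos k)]
  have e1 : aa τ r p η (k + 1) = aa τ r p η k * τ ^ d0 := c.arec k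
  have e2 : aa τ r p η (k + 2) = aa τ r p η k * τ ^ d0 * τ ^ d1 := by
    rw [c.arec (k + 1), c.arec k]
  have hP : (0:ℝ) < τ ^ k := pow_pos hτ0 k
  have hfac : (0:ℝ) ≤ aa τ r p η k * τ ^ k * (1 - τ) :=
    mul_nonneg (mul_nonneg (c.apos k).le hP.le) (by linarith)
  have h := mul_le_mul_of_nonneg_left hmain hfac
  rw [e1, e2, pow_succ τ (k + 1), pow_succ τ k]
  nlinarith [h]

theorem Ctx.smono (c : Ctx τ r p η M) : Antitone (ss τ r p η) :=
  antitone_nat_of_succ_le fun n => c.sstep n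

theorem Ctx.pow_mem (c : Ctx τ r p η M) (k : ℕ) : (τ : ℝ) ^ k ∈ Set.Icc (0:ℝ) 1 :=
  ⟨(pow_pos c.hτ0 k).le, pow_le_one₀ c.hτ0.le c.hτ1.le⟩

theorem Ctx.LBaux (c : Ctx τ r p η M) :
    ∀ n k : ℕ, ∀ x : ℝ, τ ^ (k + n) ≤ x → x ≤ τ ^ k →
      aa τ r p η k - M x ≤ ss τ r p η k * (τ ^ k - x) := by
  intro n
  induction n with
  | zero =>
    intro k x h1 h2
    have hx : x = τ ^ k := le_antisymm h2 h1
    rw [hx, c.hMa k]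
    simp
  | succ n IH =>
    intro k x h1 h2
    by_cases hc : τ ^ (k + 1) ≤ x
    · have hf := c.sformula k ⟨hc, h2⟩
      have he := c.he k
      rw [hf]
      nlinarith [he]
    · push_neg at hc
      have h1' : τ ^ (k + 1 + n) ≤ x := by
        rw [show k + 1 + n = k + (n + 1) by omega]; exact h1
      have hIH := IH (k + 1) x h1' hc.le
      have hstep : ss τ r p η (k + 1) * (τ ^ (k + 1) - x) ≤ ss τ r p η k * (τ ^ (k + 1) - x) :=
        mul_le_mul_of_nonneg_right (c.sstep k) (by linarith)
      have he' : aa τ r p η k - aa τ r p η (k + 1) = ss τ r p η k * (τ ^ k - τ ^ (k + 1)) := by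
        have := c.he k; linarith
      calc aa τ r p η k - M x
          = (aa τ r p η k - aa τ r p η (k + 1)) + (aa τ r p η (k + 1) - M x) := by ring
        _ ≤ ss τ r p η k * (τ ^ k - τ ^ (k + 1)) + ss τ r p η k * (τ ^ (k + 1) - x) := by
            exact add_le_add (le_of_eq he') (hIH.trans hstep)
        _ = ss τ r p η k * (τ ^ k - x) := by ring

theorem Ctx.LB (c : Ctx τ r p η M) (k : ℕ) {x : ℝ} (hx0 : 0 ≤ x) (hxk : x ≤ τ ^ k) :
    aa τ r p η k - M x ≤ ss τ r p η k * (τ ^ k - x) := by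
  rcases eq_or_lt_of_le hx0 with h0 | h0
  · rw [← h0, c.hM0]
    have hτa := c.alt k
    have hP : (0:ℝ) < τ ^ k := pow_pos c.hτ0 k
    unfold ss
    rw [sub_zero, sub_zero, div_mul_eq_mul_div, le_div_iff₀ (c.gap_pos k)]
    have := mul_le_mul_of_nonneg_right hτa hP.le
    rw [pow_succ]
    nlinarith
  · obtain ⟨n, hn⟩ := exists_pow_lt_of_lt_one h0 c.hτ1
    have hkn : τ ^ (k + n) ≤ x := le_trans (pow_le_pow_of_le_one c.hτ0.le c.hτ1.le (by omega)) hn.le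
    exact c.LBaux n k x hkn hxk

theorem Ctx.UB (c : Ctx τ r p η M) :
    ∀ k : ℕ, ∀ y : ℝ, τ ^ k < y → y ≤ 1 →
      ss τ r p η k * (y - τ ^ k) ≤ M y - aa τ r p η k := by
  intro k
  induction k with
  | zero => intro y h1 h2; rw [pow_zero] at h1; linarith
  | succ k IH =>
    intro y h1 h2
    by_cases hc : y ≤ τ ^ k
    · have hf := c.sformula k ⟨h1.le, hc⟩
      have hstep : ss τ r p η (k + 1) * (y - τ ^ (k + 1)) ≤ ss τ r p η k * (y - τ ^ (k + 1)) :=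
        mul_le_mul_of_nonneg_right (c.sstep k) (by linarith)
      rw [hf]
      nlinarith [hstep]
    · push_neg at hc
      have hIH := IH y hc h2
      have he' : aa τ r p η k - aa τ r p η (k + 1) = ss τ r p η k * (τ ^ k - τ ^ (k + 1)) := by
        have := c.he k; linarith
      have hstep : ss τ r p η (k + 1) * (y - τ ^ (k + 1)) ≤ ss τ r p η k * (y - τ ^ (k + 1)) := by
        apply mul_le_mul_of_nonneg_right (c.sstep k)
        have : τ ^ (k + 1) < τ ^ k := by have := c.gap_pos k; linarith
        linarith
      calc ss τ r p η (k + 1) * (y - τ ^ (k + 1))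
          ≤ ss τ r p η k * (y - τ ^ (k + 1)) := hstep
        _ = ss τ r p η k * (y - τ ^ k) + ss τ r p η k * (τ ^ k - τ ^ (k + 1)) := by ring
        _ ≤ (M y - aa τ r p η k) + (aa τ r p η k - aa τ r p η (k + 1)) := by
            exact add_le_add hIH (le_of_eq he'.symm)
        _ = M y - aa τ r p η (k + 1) := by ring

theorem piecefind (hτ0 : 0 < τ) (hτ1 : τ < 1) {x : ℝ} (hx0 : 0 < x) (hx1 : x ≤ 1) :
    ∃ k : ℕ, τ ^ (k + 1) ≤ x ∧ x ≤ τ ^ k := by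
  obtain ⟨n, hn⟩ := exists_pow_lt_of_lt_one hx0 hτ1
  clear hx0
  induction n with
  | zero => rw [pow_zero] at hn; linarith
  | succ n IH =>
    by_cases h : x ≤ τ ^ n
    · exact ⟨n, hn.le, h⟩
    · exact IH (lt_of_not_ge h)

theorem Ctx.chordA (c : Ctx τ r p η M) (k : ℕ) {x y : ℝ} (hx0 : 0 ≤ x) (hxy : x < y)
    (hy : y ∈ Set.Icc (τ ^ (k + 1)) (τ ^ k)) :
    M y - M x ≤ ss τ r p η k * (y - x) := by
  have ey := c.sformula k hy
  by_cases hc : τ ^ (k + 1) ≤ x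
  · have ex := c.sformula k ⟨hc, le_trans hxy.le hy.2⟩
    rw [ex, ey]; ring_nf; nlinarith [le_refl (0:ℝ)]
  · push_neg at hc
    have hLB := c.LB (k + 1) hx0 hc.le
    have hstep : ss τ r p η (k + 1) * (τ ^ (k + 1) - x) ≤ ss τ r p η k * (τ ^ (k + 1) - x) :=
      mul_le_mul_of_nonneg_right (c.sstep k) (by linarith)
    have ey' : M y - aa τ r p η (k + 1) = ss τ r p η k * (y - τ ^ (k + 1)) := by
      rw [ey]; ring
    calc M y - M x = (M y - aa τ r p η (k + 1)) + (aa τ r p η (k + 1) - M x) := by ring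
      _ ≤ ss τ r p η k * (y - τ ^ (k + 1)) + ss τ r p η k * (τ ^ (k + 1) - x) :=
          add_le_add (le_of_eq ey') (hLB.trans hstep)
      _ = ss τ r p η k * (y - x) := by ring

theorem Ctx.chordB (c : Ctx τ r p η M) (k : ℕ) {y z : ℝ}
    (hy : y ∈ Set.Icc (τ ^ (k + 1)) (τ ^ k)) (hyz : y < z) (hz1 : z ≤ 1) :
    ss τ r p η k * (z - y) ≤ M z - M y := by
  have ey := c.sformula k hy
  by_cases hc : z ≤ τ ^ k
  · have ez := c.sformula k ⟨le_trans hy.1 hyz.le, hc⟩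
    rw [ez, ey]; ring_nf; nlinarith [le_refl (0:ℝ)]
  · push_neg at hc
    have hUB := c.UB k z hc hz1
    have hy' : aa τ r p η k - M y = ss τ r p η k * (τ ^ k - y) := by
      have := c.he k
      rw [ey]; linarith [show (τ ^ k - τ ^ (k+1)) * ss τ r p η k - (y - τ ^ (k+1)) * ss τ r p η k
        = ss τ r p η k * (τ ^ k - y) from by ring]
    calc ss τ r p η k * (z - y)
        = ss τ r p η k * (z - τ ^ k) + ss τ r p η k * (τ ^ k - y) := by ring
      _ ≤ (M z - aa τ r p η k) + (aa τ r p η k - M y) := add_le_add hUB (le_of_eq hy'.symm)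
      _ = M z - M y := by ring

theorem Ctx.convex (c : Ctx τ r p η M) : ConvexOn ℝ (Set.Icc 0 1) M := by
  apply convexOn_of_slope_mono_adjacent (convex_Icc 0 1)
  intro x y z hx hz hxy hyz
  obtain ⟨k, hk1, hk2⟩ := piecefind c.hτ0 c.hτ1 (lt_of_le_of_lt hx.1 hxy) (le_trans hyz.le hz.2)
  have hA := c.chordA k hx.1 hxy ⟨hk1, hk2⟩
  have hB := c.chordB k ⟨hk1, hk2⟩ hyz hz.2
  have h1 : (M y - M x) / (y - x) ≤ ss τ r p η k := (div_le_iff₀ (by linarith)).mpr hA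
  have h2 : ss τ r p η k ≤ (M z - M y) / (z - y) := (le_div_iff₀ (by linarith)).mpr hB
  exact h1.trans h2

theorem Ctx.Mle (c : Ctx τ r p η M) (k : ℕ) {x : ℝ}
    (hx : x ∈ Set.Icc (τ ^ (k + 1)) (τ ^ k)) : M x ≤ aa τ r p η k := by
  rw [c.sformula k hx]
  have h1 : (x - τ ^ (k + 1)) * ss τ r p η k ≤ (τ ^ k - τ ^ (k + 1)) * ss τ r p η k :=
    mul_le_mul_of_nonneg_right (by linarith [hx.2]) (c.spos k).le
  linarith [c.he k]

theorem Ctx.mono (c : Ctx τ r p η M) : MonotoneOn M (Set.Icc 0 1) := by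
  intro x hx y hy hxy
  rcases eq_or_lt_of_le hxy with rfl | hlt
  · exact le_rfl
  rcases eq_or_lt_of_le hx.1 with h0 | h0
  · rw [← h0, c.hM0]
    obtain ⟨k, hk1, hk2⟩ := piecefind c.hτ0 c.hτ1 (h0 ▸ hlt) hy.2
    rw [c.sformula k ⟨hk1, hk2⟩]
    have := c.apos (k + 1)
    have := mul_nonneg (by linarith : (0:ℝ) ≤ y - τ ^ (k + 1)) (c.spos k).le
    linarith
  · obtain ⟨k, hk1, hk2⟩ := piecefind c.hτ0 c.hτ1 h0 hx.2
    by_cases hyk : y ≤ τ ^ k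
    · have ex := c.sformula k ⟨hk1, hk2⟩
      have ey := c.sformula k ⟨le_trans hk1 hxy, hyk⟩
      rw [ex, ey]
      have := mul_le_mul_of_nonneg_right (by linarith : x - τ ^ (k + 1) ≤ y - τ ^ (k + 1))
        (c.spos k).le
      linarith
    · push_neg at hyk
      have hUB := c.UB k y hyk hy.2
      have hMx := c.Mle k ⟨hk1, hk2⟩
      have := mul_nonneg (c.spos k).le (by linarith : (0:ℝ) ≤ y - τ ^ k)
      linarith

theorem aa0 : aa τ r p η 0 = 1 := by
  have h : ee r p η 0 = 0 := by
    unfold ee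
    rw [show Finset.Icc 1 0 = ∅ from Finset.Icc_eq_empty (by omega)]
    simp
  unfold aa
  rw [h, Real.rpow_zero]

theorem Ctx.M1 (c : Ctx τ r p η M) : M 1 = 1 := by
  have h := c.hMa 0
  rw [pow_zero] at h
  rw [h, aa0]

theorem Ctx.Mnonneg (c : Ctx τ r p η M) (a : ℝ) (ha : a ∈ Set.Icc (0:ℝ) 1) : 0 ≤ M a := by
  have h := c.mono (Set.left_mem_Icc.mpr zero_le_one) ha ha.1
  rwa [c.hM0] at h

theorem Ctx.Mpos (c : Ctx τ r p η M) {x : ℝ} (hx0 : 0 < x) (hx1 : x ≤ 1) : 0 < M x := by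
  obtain ⟨k, hk1, hk2⟩ := piecefind c.hτ0 c.hτ1 hx0 hx1
  rw [c.sformula k ⟨hk1, hk2⟩]
  have h1 := c.apos (k + 1)
  have h2 := mul_nonneg (by linarith : (0:ℝ) ≤ x - τ ^ (k + 1)) (c.spos k).le
  linarith

theorem Ctx.Mlt1 (c : Ctx τ r p η M) {a : ℝ} (ha0 : 0 ≤ a) (ha1 : a < 1) : M a < 1 := by
  rcases eq_or_lt_of_le ha0 with h0 | h0
  · rw [← h0, c.hM0]; norm_num
  obtain ⟨k, hk1, hk2⟩ := piecefind c.hτ0 c.hτ1 h0 ha1.le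
  match k with
  | 0 =>
    have hf := c.sformula 0 ⟨hk1, hk2⟩
    have he := c.he 0
    have hs := c.spos 0
    have h00 : (τ:ℝ) ^ (0:ℕ) = 1 := pow_zero τ
    have ha0' : aa τ r p η 0 = 1 := aa0
    rw [hf]
    nlinarith
  | k + 1 =>
    have h1 := c.Mle (k + 1) ⟨hk1, hk2⟩
    have h2 : aa τ r p η (k + 1) ≤ aa τ r p η 1 := c.amono (by omega)
    have h3 := c.alt' 0
    have h4 : aa τ r p η 0 = 1 := aa0
    linarith

theorem Ctx.surj (c : Ctx τ r p η M) : Set.SurjOn M (Set.Icc 0 1) (Set.Icc 0 1) := by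
  intro cc hcc
  rcases eq_or_lt_of_le hcc.1 with h0 | h0
  · exact ⟨0, Set.left_mem_Icc.mpr zero_le_one, by rw [c.hM0]; exact h0⟩
  · have haux : ∀ n : ℕ, aa τ r p η n < cc →
        ∃ k : ℕ, aa τ r p η (k + 1) < cc ∧ cc ≤ aa τ r p η k := by
      intro n
      induction n with
      | zero => intro h; rw [aa0] at h; have := hcc.2; linarith
      | succ n IH =>
        intro h
        by_cases h2 : cc ≤ aa τ r p η n
        · exact ⟨n, h, h2⟩
        · exact IH (lt_of_not_ge h2)
    obtain ⟨n, hn⟩ := exists_pow_lt_of_lt_one h0 c.hτ1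
    have hSn : (0:ℝ) ≤ ∑ m ∈ Finset.Icc 1 n, η m :=
      Finset.sum_nonneg fun i _ => by rcases c.hη i with h | h <;> rw [h] <;> norm_num
    have hen : (n:ℝ) ≤ ee r p η n := by
      unfold ee
      nlinarith [Nat.cast_nonneg (α := ℝ) n, c.hr, c.hp]
    have han : aa τ r p η n ≤ τ ^ n := by
      calc aa τ r p η n ≤ τ ^ ((n:ℝ)) :=
            Real.rpow_le_rpow_of_exponent_ge c.hτ0 c.hτ1.le hen
        _ = τ ^ n := Real.rpow_natCast τ n
    obtain ⟨k, hk1, hk2⟩ := haux n (lt_of_le_of_lt han hn)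
    have hcontf : ContinuousOn
        (fun x => aa τ r p η (k + 1) + (x - τ ^ (k + 1)) * ss τ r p η k)
        (Set.Icc (τ ^ (k + 1)) (τ ^ k)) := by
      apply Continuous.continuousOn
      continuity
    have hcont : ContinuousOn M (Set.Icc (τ ^ (k + 1)) (τ ^ k)) :=
      ContinuousOn.congr hcontf fun x hx => c.sformula k hx
    have hsub := intermediate_value_Icc
      (pow_le_pow_of_le_one c.hτ0.le c.hτ1.le (Nat.le_succ k)) hcont
    have hmem : cc ∈ Set.Icc (M (τ ^ (k + 1))) (M (τ ^ k)) := by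
      rw [c.hMa, c.hMa]; exact ⟨hk1.le, hk2⟩
    obtain ⟨x, hxmem, hMx⟩ := hsub hmem
    exact ⟨x, ⟨le_trans (pow_pos c.hτ0 (k + 1)).le hxmem.1,
      le_trans hxmem.2 (pow_le_one₀ c.hτ0.le c.hτ1.le)⟩, hMx⟩

theorem Ctx.cont (c : Ctx τ r p η M) : ContinuousOn M (Set.Icc 0 1) := by
  intro a ha
  have hR : a < 1 → ContinuousWithinAt M (Set.Ici a) a := by
    intro ha1
    apply continuousWithinAt_right_of_monotoneOn_of_image_mem_nhdsWithin
      (s := Set.Icc a 1) (c.mono.mono (Set.Icc_subset_Icc ha.1 le_rfl))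
      (Icc_mem_nhdsGE_of_mem ⟨le_rfl, ha1⟩)
    apply Filter.mem_of_superset (Icc_mem_nhdsGE_of_mem
      (Set.mem_Ico.mpr ⟨le_rfl, c.Mlt1 ha.1 ha1⟩))
    rintro cc ⟨hcc1, hcc2⟩
    have hcc0 : (0:ℝ) ≤ cc := le_trans (c.Mnonneg a ha) hcc1
    obtain ⟨x, hxmem, hMx⟩ := c.surj ⟨hcc0, hcc2⟩
    by_cases hax : a ≤ x
    · exact ⟨x, ⟨hax, hxmem.2⟩, hMx⟩
    · have h1 : M x ≤ M a := c.mono hxmem ha (le_of_not_ge hax)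
      have h2 : cc = M a := le_antisymm (hMx ▸ h1) hcc1
      exact ⟨a, ⟨le_rfl, ha.2⟩, h2.symm⟩
  have hL : 0 < a → ContinuousWithinAt M (Set.Iic a) a := by
    intro ha0
    apply continuousWithinAt_left_of_monotoneOn_of_image_mem_nhdsWithin
      (s := Set.Icc 0 a) (c.mono.mono (Set.Icc_subset_Icc le_rfl ha.2))
      (Icc_mem_nhdsLE_of_mem ⟨ha0, le_rfl⟩)
    apply Filter.mem_of_superset (Icc_mem_nhdsLE_of_mem
      (Set.mem_Ioc.mpr ⟨c.Mpos ha0 ha.2, le_rfl⟩))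
    rintro cc ⟨hcc1, hcc2⟩
    have hMa1 : M a ≤ 1 := by
      have h := c.mono ha (Set.right_mem_Icc.mpr zero_le_one) ha.2
      rwa [c.M1] at h
    obtain ⟨x, hxmem, hMx⟩ := c.surj ⟨hcc1, le_trans hcc2 hMa1⟩
    by_cases hax : x ≤ a
    · exact ⟨x, ⟨hxmem.1, hax⟩, hMx⟩
    · have h1 : M a ≤ M x := c.mono ha hxmem (le_of_not_ge hax)
      have h2 : cc = M a := le_antisymm hcc2 (hMx ▸ h1)
      exact ⟨a, ⟨ha.1, le_rfl⟩, h2.symm⟩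
  rcases eq_or_lt_of_le ha.1 with h0 | h0
  · exact (hR (by rw [← h0]; norm_num)).mono fun t ht => Set.mem_Ici.mpr (h0 ▸ ht.1)
  · rcases eq_or_lt_of_le ha.2 with h1 | h1
    · exact (hL h0).mono fun t ht => Set.mem_Iic.mpr (h1 ▸ ht.2)
    · exact ((hL h0).union (hR h1)).mono fun t ht => (le_total t a).elim Or.inl Or.inr

theorem Ctx.ageom (c : Ctx τ r p η M) (j : ℕ) :
    ∀ i : ℕ, aa τ r p η j * τ ^ (p * (i:ℝ)) ≤ aa τ r p η (j + i) := by
  intro i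
  induction i with
  | zero => simp
  | succ i IH =>
    have harec := c.arec (j + i)
    have hdp : τ ^ p ≤ τ ^ (dd r p η (j + i)) :=
      Real.rpow_le_rpow_of_exponent_ge c.hτ0 c.hτ1.le (c.dd_p _)
    have hsplit : τ ^ (p * ((i:ℝ) + 1)) = τ ^ (p * (i:ℝ)) * τ ^ p := by
      rw [← Real.rpow_add c.hτ0]; ring_nf
    have hpp : (0:ℝ) < τ ^ p := Real.rpow_pos_of_pos c.hτ0 _
    push_cast
    calc aa τ r p η j * τ ^ (p * ((i:ℝ) + 1))
        = (aa τ r p η j * τ ^ (p * (i:ℝ))) * τ ^ p := by rw [hsplit]; ring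
      _ ≤ aa τ r p η (j + i) * τ ^ p := mul_le_mul_of_nonneg_right IH hpp.le
      _ ≤ aa τ r p η (j + i) * τ ^ (dd r p η (j + i)) :=
          mul_le_mul_of_nonneg_left hdp (c.apos _).le
      _ = aa τ r p η (j + i + 1) := harec.symm

theorem Ctx.delta2 (c : Ctx τ r p η M) :
    ∃ C > (0:ℝ), ∀ t : ℝ, 0 ≤ t → t ≤ 1 / 2 → M (2 * t) ≤ C * M t := by
  obtain ⟨m, hm⟩ := exists_pow_lt_of_lt_one (by norm_num : (0:ℝ) < 1/2) c.hτ1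
  set q : ℝ := τ ^ (p * (m:ℝ)) * τ ^ p with hq
  have hq0 : 0 < q := mul_pos (Real.rpow_pos_of_pos c.hτ0 _) (Real.rpow_pos_of_pos c.hτ0 _)
  refine ⟨q⁻¹, inv_pos.mpr hq0, ?_⟩
  intro t ht0 ht12
  rcases eq_or_lt_of_le ht0 with h0 | h0
  · rw [← h0, mul_zero, c.hM0, mul_zero]
  · obtain ⟨k, hk1, hk2⟩ := piecefind c.hτ0 c.hτ1 h0 (by linarith)
    have h2t1 : 2 * t ≤ 1 := by linarith
    have h2t0 : (0:ℝ) ≤ 2 * t := by linarith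
    have hτk := pow_pos c.hτ0 k
    have hkm : 2 * t ≤ τ ^ (k - m) := by
      by_cases hmk : m ≤ k
      · have hkk : τ ^ k = τ ^ (k - m) * τ ^ m := by rw [← pow_add]; congr 1; omega
        have h1 : (0:ℝ) ≤ τ ^ (k - m) := (pow_pos c.hτ0 _).le
        nlinarith [hm.le, hk2]
      · have hz : k - m = 0 := by omega
        rw [hz, pow_zero]; linarith
    have h1 : M (2 * t) ≤ aa τ r p η (k - m) := by
      have h := c.mono ⟨h2t0, h2t1⟩ (c.pow_mem (k - m)) hkm
      rwa [c.hMa] at h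
    have hile : (k - (k - m) : ℕ) ≤ m := by omega
    have hgeom := c.ageom (k - m) (k - (k - m))
    rw [show (k - m) + (k - (k - m)) = k from by omega] at hgeom
    have hmm : τ ^ (p * (m:ℝ)) ≤ τ ^ (p * ((k - (k - m) : ℕ):ℝ)) := by
      apply Real.rpow_le_rpow_of_exponent_ge c.hτ0 c.hτ1.le
      have hcast : ((k - (k - m) : ℕ):ℝ) ≤ (m:ℝ) := Nat.cast_le.mpr hile
      nlinarith [c.hp, c.hr]
    have h2 : aa τ r p η (k - m) * τ ^ (p * (m:ℝ)) ≤ aa τ r p η k :=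
      le_trans (mul_le_mul_of_nonneg_left hmm (c.apos _).le) hgeom
    have h3 : aa τ r p η k * τ ^ p ≤ aa τ r p η (k + 1) := by
      rw [c.arec k]
      exact mul_le_mul_of_nonneg_left
        (Real.rpow_le_rpow_of_exponent_ge c.hτ0 c.hτ1.le (c.dd_p k)) (c.apos k).le
    have h4 : aa τ r p η (k + 1) ≤ M t := by
      have h := c.mono (c.pow_mem (k + 1)) ⟨ht0, by linarith⟩ hk1
      rwa [c.hMa] at h
    have hpp : (0:ℝ) < τ ^ p := Real.rpow_pos_of_pos c.hτ0 _
    have hqM : q * M (2 * t) ≤ M t := by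
      calc q * M (2 * t) ≤ q * aa τ r p η (k - m) :=
            mul_le_mul_of_nonneg_left h1 hq0.le
        _ = (aa τ r p η (k - m) * τ ^ (p * (m:ℝ))) * τ ^ p := by rw [hq]; ring
        _ ≤ aa τ r p η k * τ ^ p := mul_le_mul_of_nonneg_right h2 hpp.le
        _ ≤ aa τ r p η (k + 1) := h3
        _ ≤ M t := h4
    have hfin := (le_div_iff₀ hq0).mpr (by linarith : M (2 * t) * q ≤ M t)
    rwa [div_eq_inv_mul] at hfin

end St6

/-- Lemma 3.4. For fixed `0 < τ < 1` and `r > 1`, if `p - r` is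
sufficiently small then, for every 0-1 sequence `η`, `M_η` is an Orlicz function
(convex, continuous, non-decreasing on `[0,1]`, `M 0 = 0`, `M 1 = 1`) satisfying the
`Δ₂`-condition at zero. -/
theorem statement6 (τ r : ℝ) (hτ0 : 0 < τ) (hτ1 : τ < 1) (hr : 1 < r) :
    ∃ δ > (0 : ℝ), ∀ p : ℝ, r < p → p < r + δ →
      ∀ η : ℕ → ℝ, (∀ n, η n = 0 ∨ η n = 1) →
        ∀ M : ℝ → ℝ, IsMeta τ r p η M →
          ConvexOn ℝ (Set.Icc 0 1) M ∧ ContinuousOn M (Set.Icc 0 1) ∧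
            MonotoneOn M (Set.Icc 0 1) ∧ M 0 = 0 ∧ M 1 = 1 ∧
            ∃ C > (0 : ℝ), ∀ t : ℝ, 0 ≤ t → t ≤ 1 / 2 → M (2 * t) ≤ C * M t := by
  have hcont : ContinuousAt (fun q : ℝ => τ ^ (r - 1) * (1 - τ ^ q)) r :=
    ContinuousAt.mul continuousAt_const
      (ContinuousAt.sub continuousAt_const (Real.continuousAt_const_rpow hτ0.ne'))
  have hτr1 : τ ^ (r - 1) < 1 := Real.rpow_lt_one hτ0.le hτ1 (by linarith)
  have hτr : τ ^ r < 1 := Real.rpow_lt_one hτ0.le hτ1 (by linarith)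
  have h5 : (0:ℝ) ≤ τ ^ (r - 1) := (Real.rpow_pos_of_pos hτ0 _).le
  have hlt : τ ^ (r - 1) * (1 - τ ^ r) < 1 - τ ^ r := by nlinarith
  have hev : (fun q : ℝ => τ ^ (r - 1) * (1 - τ ^ q)) ⁻¹' Set.Iio (1 - τ ^ r) ∈ nhds r :=
    hcont (IsOpen.mem_nhds isOpen_Iio hlt)
  obtain ⟨δ, hδ0, hball⟩ := Metric.mem_nhds_iff.mp hev
  refine ⟨δ, hδ0, ?_⟩
  intro p hp1 hp2 η hη M hM
  obtain ⟨hM0, hMk, hMaff⟩ := hM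
  have hkey : τ ^ (r - 1) * (1 - τ ^ p) ≤ 1 - τ ^ r := by
    have hmem : p ∈ Metric.ball r δ := by
      rw [Metric.mem_ball, Real.dist_eq, abs_of_pos (by linarith)]
      linarith
    exact le_of_lt (hball hmem)
  have c : St6.Ctx τ r p η M := ⟨hτ0, hτ1, hr, hp1, hkey, hη, hM0, hMk, hMaff⟩
  exact ⟨c.convex, c.cont, c.mono, hM0, c.M1, c.delta2⟩
end

section
/- Fix 0 < τ < 1 and 1 < r < p < ∞, and assume that τ^{r−1}(1 − τ^p) ≤ 1 − τ^r and τ^{p−1}(1 − τ^r) ≤ 1 − τ^p. Then for every sequence η : {1,2,3,…} → {0,1}, the function M_η is convex on [0,1]; equivalently, for every n ≥ 1 the chord slope (M_η(τ^n) − M_η(τ^{n+1}))/(τ^n − τ^{n+1}) is at most (M_η(τ^{n−1}) − M_η(τ^n))/(τ^{n−1} − τ^n). -/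
open Set Filter Topology

theorem convexOn_Icc_of_supporting_lines {f : ℝ → ℝ} {a b : ℝ}
    (h : ∀ y ∈ Ioo a b, ∃ m : ℝ, ∀ z ∈ Icc a b, f y + m * (z - y) ≤ f z) :
    ConvexOn ℝ (Icc a b) f := by
  refine convexOn_of_slope_mono_adjacent (convex_Icc a b) fun {x y z} hx hz hxy hyz => ?_
  obtain ⟨m, hm⟩ := h y ⟨hx.1.trans_lt hxy, hyz.trans_le hz.2⟩
  have hmx := hm x hx
  have hmz := hm z hz
  calc (f y - f x) / (y - x) ≤ m := by rw [div_le_iff₀ (sub_pos.2 hxy)]; linarith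
    _ ≤ (f z - f y) / (z - y) := by rw [le_div_iff₀ (sub_pos.2 hyz)]; linarith

theorem exists_mem_Icc_succ_of_tendsto_zero {x : ℕ → ℝ} (hx0 : Tendsto x atTop (𝓝 0)) {y : ℝ}
    (hy : 0 < y) (hyx : y ≤ x 0) : ∃ k, y ∈ Icc (x (k + 1)) (x k) := by
  classical
  have hex : ∃ n, x n < y := (hx0.eventually_lt_const hy).exists
  obtain ⟨k, hk⟩ : ∃ k, Nat.find hex = k + 1 :=
    Nat.exists_eq_succ_of_ne_zero fun h => (Nat.find_spec hex).not_ge (h ▸ hyx)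
  exact ⟨k, hk ▸ (Nat.find_spec hex).le, not_lt.1 (Nat.find_min hex (by omega))⟩

section PiecewiseAffine

variable {x : ℕ → ℝ} {f : ℝ → ℝ}

theorem line_le_node (hx : Antitone x) (hs : Antitone fun k => slope f (x (k + 1)) (x k))
    (j k : ℕ) : f (x k) + slope f (x (k + 1)) (x k) * (x j - x k) ≤ f (x j) := by
  set m := slope f (x (k + 1)) (x k)
  let g i := f (x i) - m * x i
  have hg : ∀ i, g (i + 1) - g i = (m - slope f (x (i + 1)) (x i)) * (x i - x (i + 1)) := by
    intro i
    have hi : (x i - x (i + 1)) * slope f (x (i + 1)) (x i) = f (x i) - f (x (i + 1)) :=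
      sub_smul_slope f _ _
    linear_combination hi
  -- `g` decreases while the slopes exceed `m`, i.e. up to `k`, and increases afterwards.
  suffices g k ≤ g j by linarith
  rcases le_total k j with hkj | hjk
  · refine Nat.rel_of_forall_rel_succ_of_le_of_le (· ≤ ·) (fun i hki => ?_) le_rfl hkj
    nlinarith [hg i, hs hki, hx (Nat.le_succ i)]
  · refine Nat.decreasingInduction (motive := fun i _ => g k ≤ g i) (fun i hik ih => ?_) le_rfl hjk
    nlinarith [hg i, hs hik.le, hx (Nat.le_succ i)]

theorem line_le_of_mem_Icc (hx : Antitone x) (hs : Antitone fun k => slope f (x (k + 1)) (x k))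
    (hf : ∀ k, ∀ y ∈ Icc (x (k + 1)) (x k),
      f y = f (x (k + 1)) + (y - x (k + 1)) * slope f (x (k + 1)) (x k))
    {j : ℕ} {y : ℝ} (hy : y ∈ Icc (x (j + 1)) (x j)) (k : ℕ) :
    f (x k) + slope f (x (k + 1)) (x k) * (y - x k) ≤ f y := by
  have hj := line_le_node hx hs j k
  have hj' := line_le_node hx hs (j + 1) k
  have hnode : (x j - x (j + 1)) * slope f (x (j + 1)) (x j) = f (x j) - f (x (j + 1)) :=
    sub_smul_slope f _ _
  rw [hf j y hy]
  rcases le_total (slope f (x (j + 1)) (x j)) (slope f (x (k + 1)) (x k)) with h | h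
  · nlinarith [mul_nonneg (sub_nonneg.2 hy.2) (sub_nonneg.2 h)]
  · nlinarith [mul_nonneg (sub_nonneg.2 hy.1) (sub_nonneg.2 h)]

theorem line_le_at_zero (hx : Antitone x) (hs : Antitone fun k => slope f (x (k + 1)) (x k))
    (hx0 : Tendsto x atTop (𝓝 0))
    (hfx : Tendsto (fun k => f (x k)) atTop (𝓝 (f 0))) (k : ℕ) :
    f (x k) + slope f (x (k + 1)) (x k) * (0 - x k) ≤ f 0 :=
  le_of_tendsto_of_tendsto' (((hx0.sub_const (x k)).const_mul _).const_add _) hfx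
    fun j => line_le_node hx hs j k

theorem convexOn_Icc_of_antitone_slope (hx : Antitone x) (hx0 : Tendsto x atTop (𝓝 0))
    (hfx : Tendsto (fun k => f (x k)) atTop (𝓝 (f 0)))
    (hs : Antitone fun k => slope f (x (k + 1)) (x k))
    (hf : ∀ k, ∀ y ∈ Icc (x (k + 1)) (x k),
      f y = f (x (k + 1)) + (y - x (k + 1)) * slope f (x (k + 1)) (x k)) :
    ConvexOn ℝ (Icc 0 (x 0)) f := by
  refine convexOn_Icc_of_supporting_lines fun y hy => ?_
  obtain ⟨k, hk⟩ := exists_mem_Icc_succ_of_tendsto_zero hx0 hy.1 hy.2.le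
  refine ⟨slope f (x (k + 1)) (x k), fun z hz => ?_⟩
  have hnode : (x k - x (k + 1)) * slope f (x (k + 1)) (x k) = f (x k) - f (x (k + 1)) :=
    sub_smul_slope f _ _
  calc f y + slope f (x (k + 1)) (x k) * (z - y)
      = f (x k) + slope f (x (k + 1)) (x k) * (z - x k) := by
        rw [hf k y hk]; linear_combination hnode
    _ ≤ f z := by
      rcases hz.1.eq_or_lt with rfl | hz0
      · exact line_le_at_zero hx hs hx0 hfx k
      · obtain ⟨j, hj⟩ := exists_mem_Icc_succ_of_tendsto_zero hx0 hz0 hz.2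
        exact line_le_of_mem_Icc hx hs hf hj k

end PiecewiseAffine

theorem add_sub_mul_eq_or_eq {r p e : ℝ} (he : e = 0 ∨ e = 1) :
    r + (p - r) * e = r ∨ r + (p - r) * e = p := by
  rcases he with rfl | rfl <;> simp

theorem rpow_sub_one_mul_one_sub_rpow_le {τ r p a b : ℝ} (hτ0 : 0 < τ) (hτ1 : τ < 1)
    (hr : 1 ≤ r) (hp : 1 ≤ p)
    (h1 : τ ^ (r - 1) * (1 - τ ^ p) ≤ 1 - τ ^ r)
    (h2 : τ ^ (p - 1) * (1 - τ ^ r) ≤ 1 - τ ^ p)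
    (ha : a = r ∨ a = p) (hb : b = r ∨ b = p) :
    τ ^ (a - 1) * (1 - τ ^ b) ≤ 1 - τ ^ a := by
  have hdiag : ∀ q : ℝ, 1 ≤ q → τ ^ (q - 1) * (1 - τ ^ q) ≤ 1 - τ ^ q := fun q hq =>
    mul_le_of_le_one_left (sub_nonneg.2 (Real.rpow_le_one hτ0.le hτ1.le (by linarith)))
      (Real.rpow_le_one hτ0.le hτ1.le (by linarith))
  rcases ha with ha | ha <;> rcases hb with hb | hb <;> rw [ha, hb]
  exacts [hdiag r hr, h1, h2, hdiag p hp]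

namespace IsMeta

variable {τ r p : ℝ} {η : ℕ → ℝ} {M : ℝ → ℝ}

theorem node_succ (hτ0 : 0 < τ) (hM : IsMeta τ r p η M) (k : ℕ) :
    M (τ ^ (k + 1)) = M (τ ^ k) * τ ^ (r + (p - r) * η (k + 1)) := by
  rw [hM.2.1, hM.2.1, ← Real.rpow_add hτ0, Finset.sum_Icc_succ_top (by omega)]
  congr 1
  push_cast
  ring

theorem node_pos (hτ0 : 0 < τ) (hM : IsMeta τ r p η M) (k : ℕ) : 0 < M (τ ^ k) := by
  rw [hM.2.1]
  exact Real.rpow_pos_of_pos hτ0 _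

theorem node_le_pow (hτ0 : 0 < τ) (hτ1 : τ < 1) (hr : 1 ≤ r) (hp : 1 ≤ p)
    (hη : ∀ n, η n = 0 ∨ η n = 1) (hM : IsMeta τ r p η M) (k : ℕ) : M (τ ^ k) ≤ τ ^ k := by
  induction k with
  | zero => simpa using (hM.2.1 0).le
  | succ k ih =>
    have hτc : τ ^ (r + (p - r) * η (k + 1)) ≤ τ := by
      refine Real.rpow_le_self_of_le_one hτ0.le hτ1.le ?_
      rcases add_sub_mul_eq_or_eq (hη (k + 1)) with h | h <;> rw [h] <;> assumption
    rw [hM.node_succ hτ0, pow_succ]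
    exact mul_le_mul ih hτc (Real.rpow_nonneg hτ0.le _) (pow_nonneg hτ0.le k)

theorem tendsto_node (hτ0 : 0 < τ) (hτ1 : τ < 1) (hr : 1 ≤ r) (hp : 1 ≤ p)
    (hη : ∀ n, η n = 0 ∨ η n = 1) (hM : IsMeta τ r p η M) :
    Tendsto (fun k => M (τ ^ k)) atTop (𝓝 (M 0)) := by
  rw [hM.1]
  exact tendsto_of_tendsto_of_tendsto_of_le_of_le tendsto_const_nhds
    (tendsto_pow_atTop_nhds_zero_of_lt_one hτ0.le hτ1) (fun k => (hM.node_pos hτ0 k).le)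
    (hM.node_le_pow hτ0 hτ1 hr hp hη)

theorem slope_eq (hτ0 : 0 < τ) (hτ1 : τ < 1) (hM : IsMeta τ r p η M) (k : ℕ) :
    slope M (τ ^ (k + 1)) (τ ^ k) =
      M (τ ^ k) / (τ ^ k * (1 - τ)) * (1 - τ ^ (r + (p - r) * η (k + 1))) := by
  have hden : τ ^ k * (1 - τ) ≠ 0 := mul_ne_zero (pow_ne_zero k hτ0.ne') (sub_ne_zero.2 hτ1.ne')
  rw [slope_def_field, hM.node_succ hτ0, pow_succ, show τ ^ k - τ ^ k * τ = τ ^ k * (1 - τ) by ring]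
  field_simp

theorem antitone_slope (hτ0 : 0 < τ) (hτ1 : τ < 1) (hr : 1 ≤ r) (hp : 1 ≤ p)
    (h1 : τ ^ (r - 1) * (1 - τ ^ p) ≤ 1 - τ ^ r)
    (h2 : τ ^ (p - 1) * (1 - τ ^ r) ≤ 1 - τ ^ p)
    (hη : ∀ n, η n = 0 ∨ η n = 1) (hM : IsMeta τ r p η M) :
    Antitone fun k => slope M (τ ^ (k + 1)) (τ ^ k) := by
  refine antitone_nat_of_succ_le fun k => ?_
  set c := fun k : ℕ => r + (p - r) * η (k + 1)
  have hA : M (τ ^ (k + 1)) / (τ ^ (k + 1) * (1 - τ)) =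
      M (τ ^ k) / (τ ^ k * (1 - τ)) * τ ^ (c k - 1) := by
    rw [hM.node_succ hτ0, Real.rpow_sub_one hτ0.ne', pow_succ]
    simp only [c]
    field_simp
  have hA0 : 0 ≤ M (τ ^ k) / (τ ^ k * (1 - τ)) :=
    div_nonneg (hM.node_pos hτ0 k).le (mul_pos (pow_pos hτ0 k) (sub_pos.2 hτ1)).le
  calc slope M (τ ^ (k + 1 + 1)) (τ ^ (k + 1))
      = M (τ ^ k) / (τ ^ k * (1 - τ)) * (τ ^ (c k - 1) * (1 - τ ^ c (k + 1))) := by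
        rw [hM.slope_eq hτ0 hτ1, hA, mul_assoc]
    _ ≤ M (τ ^ k) / (τ ^ k * (1 - τ)) * (1 - τ ^ c k) :=
        mul_le_mul_of_nonneg_left (rpow_sub_one_mul_one_sub_rpow_le hτ0 hτ1 hr hp h1 h2
          (add_sub_mul_eq_or_eq (hη (k + 1))) (add_sub_mul_eq_or_eq (hη (k + 2)))) hA0
    _ = slope M (τ ^ (k + 1)) (τ ^ k) := (hM.slope_eq hτ0 hτ1 k).symm

theorem eq_add_mul_slope (hM : IsMeta τ r p η M) (k : ℕ) :
    ∀ y ∈ Icc (τ ^ (k + 1)) (τ ^ k),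
      M y = M (τ ^ (k + 1)) + (y - τ ^ (k + 1)) * slope M (τ ^ (k + 1)) (τ ^ k) := by
  intro y hy
  rw [hM.2.2 k y hy, slope_def_field, mul_div_assoc]

end IsMeta

/-- proof of Lemma 3.4. If `τ^(r-1)(1-τ^p) ≤ 1-τ^r` and
`τ^(p-1)(1-τ^r) ≤ 1-τ^p`, then `M_η` is convex on `[0,1]` for every 0-1 sequence `η`;
equivalently, the chord slopes are non-increasing. -/
theorem statement7 (τ r p : ℝ) (hτ0 : 0 < τ) (hτ1 : τ < 1) (hr : 1 < r) (hrp : r < p)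
    (h1 : τ ^ (r - 1) * (1 - τ ^ p) ≤ 1 - τ ^ r)
    (h2 : τ ^ (p - 1) * (1 - τ ^ r) ≤ 1 - τ ^ p)
    (η : ℕ → ℝ) (hη : ∀ n, η n = 0 ∨ η n = 1)
    (M : ℝ → ℝ) (hM : IsMeta τ r p η M) :
    ConvexOn ℝ (Set.Icc 0 1) M ∧
      ∀ n : ℕ, 1 ≤ n →
        (M (τ ^ n) - M (τ ^ (n + 1))) / (τ ^ n - τ ^ (n + 1)) ≤
          (M (τ ^ (n - 1)) - M (τ ^ n)) / (τ ^ (n - 1) - τ ^ n) := by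
  have hp : 1 ≤ p := by linarith
  have hs := hM.antitone_slope hτ0 hτ1 hr.le hp h1 h2 hη
  refine ⟨?_, fun n hn => ?_⟩
  · simpa using convexOn_Icc_of_antitone_slope (pow_right_anti₀ hτ0.le hτ1.le)
      (tendsto_pow_atTop_nhds_zero_of_lt_one hτ0.le hτ1)
      (hM.tendsto_node hτ0 hτ1 hr.le hp hη) hs hM.eq_add_mul_slope
  · obtain ⟨m, rfl⟩ := Nat.exists_eq_add_of_le' hn
    simpa [slope_def_field] using hs (Nat.le_succ m)
end

section
/- Let (n_k)_{k≥1} be a strictly increasing sequence of positive integers with n₁ = 1 and with the gaps n_{k+1} − n_k nondecreasing in k, and define ρ : {1,2,3,…} → {0,1} by ρ(i) = 0 if i = n_k for some k and ρ(i) = 1 otherwise. Then for all positive integers k and n: Σ_{i=1}^{n} ρ(i) ≤ Σ_{i=k+1}^{k+n} ρ(i). -/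
/-!
Reindex as `a j = n_{j+1}`, so `a 0 = 1`. Nondecreasing gaps make `a` superadditive up to the
constant `a 0`: `a i + a j ≤ a (i + j) + a 0`. If `a j₀` is the first term in the window
`[k+1, k+n]`, then `j ↦ j - j₀` sends the indices of the terms in that window injectively to
indices of terms in `[1, n]`. So `[1, n]` contains at least as many terms of the sequence as
`[k+1, k+n]`, i.e. at most as many ones of `ρ`.
-/

open Finset

theorem apply_add_apply_le_of_monotone_gaps {a : ℕ → ℕ} (ha : Monotone a)
    (hgaps : Monotone fun j => a (j + 1) - a j) (i j : ℕ) :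
    a i + a j ≤ a (i + j) + a 0 := by
  induction i with
  | zero => simp [add_comm]
  | succ i ih =>
    have hgap : a (i + 1) - a i ≤ a (i + j + 1) - a (i + j) := hgaps (Nat.le_add_right i j)
    have h₁ := ha (Nat.le_add_right i 1)
    have h₂ := ha (Nat.le_add_right (i + j) 1)
    rw [Nat.add_right_comm]
    omega

theorem ncard_preimage_Icc_le_of_superadditive {a : ℕ → ℕ} (ha : StrictMono a)
    (hsup : ∀ i j, a i + a j ≤ a (i + j) + a 0) (m L : ℕ) :
    (a ⁻¹' Set.Icc m (m + L)).ncard ≤ (a ⁻¹' Set.Icc (a 0) (a 0 + L)).ncard := by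
  set S := a ⁻¹' Set.Icc m (m + L)
  rcases S.eq_empty_or_nonempty with hS | hS
  · simp [hS]
  set j₀ := sInf S
  have hj₀ : m ≤ a j₀ := (Nat.sInf_mem hS).1
  refine Set.ncard_le_ncard_of_injOn (fun j => j - j₀) ?_ ?_
    ((Set.finite_Icc _ _).preimage ha.injective.injOn)
  · intro j hj
    have hle : j₀ ≤ j := Nat.sInf_le hj
    have hshift := hsup (j - j₀) j₀
    rw [Nat.sub_add_cancel hle] at hshift
    exact ⟨ha.monotone (Nat.zero_le _), by have := hj.2; omega⟩
  · intro j hj j' hj' h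
    have := Nat.sInf_le hj
    have := Nat.sInf_le hj'
    simp only at h
    omega

theorem sum_add_ncard_preimage_eq_card {a : ℕ → ℕ} (ha : a.Injective) {ρ : ℕ → ℕ}
    (hρ0 : ∀ i ∈ Set.range a, ρ i = 0) (hρ1 : ∀ i ∉ Set.range a, ρ i = 1) (s : Finset ℕ) :
    ∑ i ∈ s, ρ i + (a ⁻¹' s).ncard = #s := by
  classical
  have hsum : ∑ i ∈ s, ρ i = #{i ∈ s | i ∉ Set.range a} := by
    rw [card_filter]
    refine sum_congr rfl fun i _ => ?_
    split_ifs with h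
    exacts [hρ0 i h, hρ1 i h]
  have hhits : (a ⁻¹' s).ncard = #{i ∈ s | i ∈ Set.range a} := by
    rw [← Set.ncard_image_of_injective _ ha, Set.image_preimage_eq_inter_range,
      ← Set.ncard_coe_finset, coe_filter]
    rfl
  rw [hsum, hhits, add_comm, card_filter_add_card_filter_not]

/-- proof of Lemma 3.2. Let `(n_k)_{k ≥ 1}` be a strictly increasing
sequence of positive integers with `n 1 = 1` and nondecreasing gaps, and let
`ρ i = 0` if `i = n k` for some `k ≥ 1` and `ρ i = 1` otherwise. Then
`Σ_{i=1}^{n} ρ i ≤ Σ_{i=k+1}^{k+n} ρ i` for all positive integers `k, n`. -/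
theorem statement8 (nk : ℕ → ℕ) (h1 : nk 1 = 1)
    (hmono : ∀ k : ℕ, 1 ≤ k → nk k < nk (k + 1))
    (hgap : ∀ k : ℕ, 1 ≤ k → nk (k + 1) - nk k ≤ nk (k + 2) - nk (k + 1))
    (ρ : ℕ → ℕ)
    (hρ0 : ∀ k : ℕ, 1 ≤ k → ρ (nk k) = 0)
    (hρ1 : ∀ i : ℕ, (∀ k : ℕ, 1 ≤ k → nk k ≠ i) → ρ i = 1) :
    ∀ k n : ℕ, 1 ≤ k → 1 ≤ n →
      ∑ i ∈ Finset.Icc 1 n, ρ i ≤ ∑ i ∈ Finset.Icc (k + 1) (k + n), ρ i := by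
  intro k n _ hn
  set a : ℕ → ℕ := fun j => nk (j + 1)
  have ha : StrictMono a := strictMono_nat_of_lt_succ fun j => hmono (j + 1) (by omega)
  have hsup := apply_add_apply_le_of_monotone_gaps ha.monotone
    (monotone_nat_of_le_succ fun j => hgap (j + 1) (by omega))
  have hρa0 : ∀ i ∈ Set.range a, ρ i = 0 := by
    rintro _ ⟨j, rfl⟩
    exact hρ0 (j + 1) (by omega)
  have hρa1 : ∀ i ∉ Set.range a, ρ i = 1 := fun i hi =>
    hρ1 i fun k hk hki => hi ⟨k - 1, by simp only [a, Nat.sub_add_cancel hk, hki]⟩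
  obtain ⟨L, rfl⟩ : ∃ L, n = L + 1 := ⟨n - 1, by omega⟩
  have hwindow := ncard_preimage_Icc_le_of_superadditive ha hsup (k + 1) L
  have hstart := sum_add_ncard_preimage_eq_card ha.injective hρa0 hρa1 (Icc 1 (L + 1))
  have hshifted := sum_add_ncard_preimage_eq_card ha.injective hρa0 hρa1 (Icc (k + 1) (k + 1 + L))
  simp only [coe_Icc, Nat.card_Icc] at hstart hshifted
  rw [show a 0 = 1 from h1, add_comm 1 L] at hwindow
  rw [show k + (L + 1) = k + 1 + L by ring]
  omega
end

section
/- Fix 0 < τ < 1 and 1 < r < p < ∞. Let (n_k)_{k≥1} be a strictly increasing sequence of positive integers with n₁ = 1 and with the gaps n_{k+1} − n_k nondecreasing and tending to infinity; define ρ(i) = 0 if i = n_k for some k and ρ(i) = 1 otherwise, and let M := M_ρ. Then M(λ·t) ≤ τ^{−2p} · M(λ) · M(t) for all λ, t ∈ (0,1]. -/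
-- gaps nondecreasing, additive form
lemma nkGapMono (nk : ℕ → ℕ) (hmono : ∀ k : ℕ, 1 ≤ k → nk k < nk (k + 1))
    (hgap : ∀ k : ℕ, 1 ≤ k → nk (k + 1) - nk k ≤ nk (k + 2) - nk (k + 1)) :
    ∀ i, 1 ≤ i → ∀ j, i ≤ j → nk (i + 1) + nk j ≤ nk i + nk (j + 1) := by
  intro i hi j hij
  induction j, hij using Nat.le_induction with
  | base => omega
  | succ j hij ih =>
    have h1 := hmono j (le_trans hi hij)
    have h2 := hmono (j + 1) (by omega)
    have h3 := hgap j (le_trans hi hij)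
    show nk (i + 1) + nk (j + 1) ≤ nk i + nk (j + 2)
    omega

lemma nkKey (nk : ℕ → ℕ) (hnk1 : nk 1 = 1)
    (hmono : ∀ k : ℕ, 1 ≤ k → nk k < nk (k + 1))
    (hgap : ∀ k : ℕ, 1 ≤ k → nk (k + 1) - nk k ≤ nk (k + 2) - nk (k + 1)) :
    ∀ i j, 1 ≤ j → nk (i + 1) + nk j ≤ nk (i + j) + 1 := by
  intro i j hj
  induction j, hj using Nat.le_induction with
  | base => omega
  | succ j hj ih =>
    have h := nkGapMono nk hmono hgap j hj (i + j) (by omega)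
    have e : i + (j + 1) = (i + j) + 1 := by omega
    rw [e]
    omega

lemma nkLe (nk : ℕ → ℕ) (hmono : ∀ k : ℕ, 1 ≤ k → nk k < nk (k + 1)) :
    ∀ i, 1 ≤ i → ∀ j, i ≤ j → nk i ≤ nk j := by
  intro i hi j hij
  induction j, hij using Nat.le_induction with
  | base => exact le_refl _
  | succ j hij ih => exact le_trans ih (hmono j (le_trans hi hij)).le

lemma nkSelf (nk : ℕ → ℕ) (hnk1 : nk 1 = 1)
    (hmono : ∀ k : ℕ, 1 ≤ k → nk k < nk (k + 1)) :
    ∀ j, 1 ≤ j → j ≤ nk j := by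
  intro j hj
  induction j, hj using Nat.le_induction with
  | base => omega
  | succ j hj ih => have := hmono j hj; omega

lemma nkClow (nk : ℕ → ℕ) (hnk1 : nk 1 = 1)
    (hmono : ∀ k : ℕ, 1 ≤ k → nk k < nk (k + 1)) :
    ∀ k m, 1 ≤ m → m ≤ ((Finset.Icc 1 k).filter (fun j => nk j ≤ k)).card → nk m ≤ k := by
  intro k m hm hc
  by_contra h
  push_neg at h
  have hsub : (Finset.Icc 1 k).filter (fun j => nk j ≤ k) ⊆ Finset.Icc 1 (m - 1) := by
    intro j hj
    simp only [Finset.mem_filter, Finset.mem_Icc] at hj ⊢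
    obtain ⟨⟨hj1, _⟩, hjk⟩ := hj
    refine ⟨hj1, ?_⟩
    by_contra hjm
    push_neg at hjm
    have : nk m ≤ nk j := nkLe nk hmono m hm j (by omega)
    omega
  have := Finset.card_le_card hsub
  rw [Nat.card_Icc] at this
  omega

lemma nkCup (nk : ℕ → ℕ) (hnk1 : nk 1 = 1)
    (hmono : ∀ k : ℕ, 1 ≤ k → nk k < nk (k + 1)) :
    ∀ k, k < nk (((Finset.Icc 1 k).filter (fun j => nk j ≤ k)).card + 1) := by
  intro k
  set c := ((Finset.Icc 1 k).filter (fun j => nk j ≤ k)).card with hc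
  by_contra h
  push_neg at h
  have hsub : Finset.Icc 1 (c + 1) ⊆ (Finset.Icc 1 k).filter (fun j => nk j ≤ k) := by
    intro j hj
    simp only [Finset.mem_Icc] at hj
    have hj1 : 1 ≤ j := hj.1
    have hnkj : nk j ≤ k := le_trans (nkLe nk hmono j hj1 (c + 1) hj.2) h
    have hjk : j ≤ k := le_trans (nkSelf nk hnk1 hmono j hj1) hnkj
    simp only [Finset.mem_filter, Finset.mem_Icc]
    exact ⟨⟨hj1, hjk⟩, hnkj⟩
  have := Finset.card_le_card hsub
  rw [Nat.card_Icc] at this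
  omega

lemma nkCount (nk : ℕ → ℕ) (hnk1 : nk 1 = 1)
    (hmono : ∀ k : ℕ, 1 ≤ k → nk k < nk (k + 1))
    (hgap : ∀ k : ℕ, 1 ≤ k → nk (k + 1) - nk k ≤ nk (k + 2) - nk (k + 1)) :
    ∀ a b : ℕ,
    ((Finset.Icc 1 (a + b)).filter (fun j => nk j ≤ a + b)).card ≤
      ((Finset.Icc 1 a).filter (fun j => nk j ≤ a)).card +
      ((Finset.Icc 1 b).filter (fun j => nk j ≤ b)).card := by
  intro a b
  set i := ((Finset.Icc 1 a).filter (fun j => nk j ≤ a)).card with hi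
  set j := ((Finset.Icc 1 b).filter (fun j => nk j ≤ b)).card with hj
  by_contra h
  push_neg at h
  have h1 : nk (i + j + 1) ≤ a + b :=
    nkClow nk hnk1 hmono (a + b) (i + j + 1) (by omega) (by omega)
  have h2 : a < nk (i + 1) := nkCup nk hnk1 hmono a
  have h3 : b < nk (j + 1) := nkCup nk hnk1 hmono b
  have h4 : nk (i + 1) + nk (j + 1) ≤ nk (i + (j + 1)) + 1 :=
    nkKey nk hnk1 hmono hgap i (j + 1) (by omega)
  have e : i + (j + 1) = i + j + 1 := by omega
  rw [e] at h4
  omega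

-- the counting function, one step
lemma nkCstep (nk : ℕ → ℕ) (hnk1 : nk 1 = 1)
    (hmono : ∀ k : ℕ, 1 ≤ k → nk k < nk (k + 1)) (k : ℕ) :
    ((Finset.Icc 1 k).filter (fun j => nk j ≤ k)).card ≤
      ((Finset.Icc 1 (k+1)).filter (fun j => nk j ≤ k+1)).card ∧
    ((Finset.Icc 1 (k+1)).filter (fun j => nk j ≤ k+1)).card ≤
      ((Finset.Icc 1 k).filter (fun j => nk j ≤ k)).card + 1 := by
  constructor
  · apply Finset.card_le_card
    intro j hj
    simp only [Finset.mem_filter, Finset.mem_Icc] at hj ⊢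
    omega
  · by_contra h
    push_neg at h
    have h2 := nkClow nk hnk1 hmono (k+1)
      (((Finset.Icc 1 k).filter (fun j => nk j ≤ k)).card + 2) (by omega) (by omega)
    have h3 := nkCup nk hnk1 hmono k
    have h4 : nk (((Finset.Icc 1 k).filter (fun j => nk j ≤ k)).card + 1)
        < nk (((Finset.Icc 1 k).filter (fun j => nk j ≤ k)).card + 2) :=
      hmono (((Finset.Icc 1 k).filter (fun j => nk j ≤ k)).card + 1) (by omega)
    omega

-- sum formula: ∑_{n=1}^k ρ n = k - c k
lemma sumRho (nk : ℕ → ℕ) (hnk1 : nk 1 = 1)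
    (hmono : ∀ k : ℕ, 1 ≤ k → nk k < nk (k + 1))
    (ρ : ℕ → ℝ)
    (hρ0 : ∀ k : ℕ, 1 ≤ k → ρ (nk k) = 0)
    (hρ1 : ∀ i : ℕ, (∀ k : ℕ, 1 ≤ k → nk k ≠ i) → ρ i = 1) (k : ℕ) :
    ∑ n ∈ Finset.Icc 1 k, ρ n
      = (k : ℝ) - ((Finset.Icc 1 k).filter (fun j => nk j ≤ k)).card := by
  classical
  have hρval : ∀ n : ℕ, ρ n = if ∃ j, 1 ≤ j ∧ nk j = n then (0:ℝ) else 1 := by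
    intro n
    split_ifs with h
    · obtain ⟨j, hj, he⟩ := h
      rw [← he]; exact hρ0 j hj
    · exact hρ1 n (fun m hm he => h ⟨m, hm, he⟩)
  have himg : (Finset.Icc 1 k).filter (fun n => ∃ j, 1 ≤ j ∧ nk j = n)
      = Finset.image nk ((Finset.Icc 1 k).filter (fun j => nk j ≤ k)) := by
    ext n
    simp only [Finset.mem_filter, Finset.mem_image, Finset.mem_Icc]
    constructor
    · rintro ⟨⟨h1, h2⟩, j, hj1, rfl⟩
      exact ⟨j, ⟨⟨hj1, le_trans (nkSelf nk hnk1 hmono j hj1) h2⟩, h2⟩, rfl⟩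
    · rintro ⟨j, ⟨⟨hj1, hjk⟩, hnk⟩, rfl⟩
      have := nkSelf nk hnk1 hmono j hj1
      exact ⟨⟨by omega, hnk⟩, j, hj1, rfl⟩
  have hstrict : ∀ x y : ℕ, 1 ≤ x → x < y → nk x < nk y := fun x y hx hxy =>
    lt_of_lt_of_le (hmono x hx) (nkLe nk hmono (x+1) (by omega) y (by omega))
  have hinj : Set.InjOn nk ((Finset.Icc 1 k).filter (fun j => nk j ≤ k)) := by
    intro x hx y hy hxy
    simp only [Finset.coe_filter, Finset.mem_Icc, Set.mem_setOf_eq] at hx hy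
    rcases lt_trichotomy x y with h | h | h
    · exact absurd hxy (hstrict x y hx.1.1 h).ne
    · exact h
    · exact absurd hxy.symm (hstrict y x hy.1.1 h).ne
  have hcard : ((Finset.Icc 1 k).filter (fun n => ∃ j, 1 ≤ j ∧ nk j = n)).card
      = ((Finset.Icc 1 k).filter (fun j => nk j ≤ k)).card := by
    rw [himg, Finset.card_image_of_injOn hinj]
  have h1 : ∑ n ∈ Finset.Icc 1 k, ρ n
      = ∑ n ∈ Finset.Icc 1 k, (if ¬ ∃ j, 1 ≤ j ∧ nk j = n then (1:ℝ) else 0) := by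
    refine Finset.sum_congr rfl (fun n _ => ?_)
    rw [hρval n]
    by_cases h : ∃ j, 1 ≤ j ∧ nk j = n <;> simp [h]
  rw [h1, Finset.sum_boole]
  have h2 := Finset.card_filter_add_card_filter_not
    (s := Finset.Icc 1 k) (p := fun n => ∃ j, 1 ≤ j ∧ nk j = n)
  rw [Nat.card_Icc] at h2
  have hck : ((Finset.Icc 1 k).filter (fun j => nk j ≤ k)).card ≤ k := by
    have := Finset.card_filter_le (Finset.Icc 1 k) (fun j => nk j ≤ k)
    rw [Nat.card_Icc] at this
    omega
  have h3 : ((Finset.Icc 1 k).filter (fun n => ¬ ∃ j, 1 ≤ j ∧ nk j = n)).card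
      = k - ((Finset.Icc 1 k).filter (fun j => nk j ≤ k)).card := by omega
  rw [h3, Nat.cast_sub hck]


/-- proof of Lemma 3.8. For `M = M_ρ` with `ρ` vanishing exactly on a
set `{n_k}` with `n 1 = 1` and gaps nondecreasing and tending to infinity, one has
`M (λ t) ≤ τ^(-2p) M(λ) M(t)` for all `λ, t ∈ (0,1]`. -/
theorem statement9 (τ r p : ℝ) (hτ0 : 0 < τ) (hτ1 : τ < 1) (hr : 1 < r) (hrp : r < p)
    (h1 : τ ^ (r - 1) * (1 - τ ^ p) ≤ 1 - τ ^ r)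
    (h2 : τ ^ (p - 1) * (1 - τ ^ r) ≤ 1 - τ ^ p)
    (nk : ℕ → ℕ) (hnk1 : nk 1 = 1)
    (hmono : ∀ k : ℕ, 1 ≤ k → nk k < nk (k + 1))
    (hgap : ∀ k : ℕ, 1 ≤ k → nk (k + 1) - nk k ≤ nk (k + 2) - nk (k + 1))
    (hgap' : Filter.Tendsto (fun k => nk (k + 1) - nk k) Filter.atTop Filter.atTop)
    (ρ : ℕ → ℝ)
    (hρ0 : ∀ k : ℕ, 1 ≤ k → ρ (nk k) = 0)
    (hρ1 : ∀ i : ℕ, (∀ k : ℕ, 1 ≤ k → nk k ≠ i) → ρ i = 1)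
    (M : ℝ → ℝ) (hM : IsMeta τ r p ρ M) :
    ∀ lam t : ℝ, 0 < lam → lam ≤ 1 → 0 < t → t ≤ 1 →
      M (lam * t) ≤ τ ^ (-(2 * p)) * M lam * M t := by
    classical
  obtain ⟨hM0, hMk, hMaff⟩ := hM
  -- the counting function and the exponent function
  let c : ℕ → ℕ := fun k => ((Finset.Icc 1 k).filter (fun j => nk j ≤ k)).card
  let F : ℕ → ℝ := fun k => r * (k : ℝ) + (p - r) * ∑ n ∈ Finset.Icc 1 k, ρ n
  have hMF : ∀ k : ℕ, M (τ ^ k) = τ ^ (F k) := hMk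
  have hS : ∀ k : ℕ, ∑ n ∈ Finset.Icc 1 k, ρ n = (k : ℝ) - (c k : ℝ) := fun k =>
    sumRho nk hnk1 hmono ρ hρ0 hρ1 k
  have hF : ∀ k : ℕ, F k = r * (k : ℝ) + (p - r) * ((k : ℝ) - (c k : ℝ)) := by
    intro k
    show r * (k : ℝ) + (p - r) * ∑ n ∈ Finset.Icc 1 k, ρ n = _
    rw [hS k]
  -- step bounds for F
  have hprpos : (0:ℝ) < p - r := by linarith
  have hFstep : ∀ k : ℕ, F k ≤ F (k + 1) ∧ F (k + 1) ≤ F k + p := by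
    intro k
    have hcs := nkCstep nk hnk1 hmono k
    have hc1 : (c k : ℝ) ≤ (c (k+1) : ℝ) := by exact_mod_cast hcs.1
    have hc2 : (c (k+1) : ℝ) ≤ (c k : ℝ) + 1 := by push_cast; exact_mod_cast hcs.2
    rw [hF k, hF (k+1)]
    push_cast
    constructor <;> nlinarith
  have hFmono : Monotone F := monotone_nat_of_le_succ (fun k => (hFstep k).1)
  have hFsuper : ∀ a b : ℕ, F a + F b ≤ F (a + b) := by
    intro a b
    have hcc : (c (a + b) : ℝ) ≤ (c a : ℝ) + (c b : ℝ) := by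
      exact_mod_cast nkCount nk hnk1 hmono hgap a b
    rw [hF a, hF b, hF (a + b)]
    push_cast
    nlinarith
  -- piecewise-linear bounds for M on each interval
  have hMbound : ∀ (k : ℕ) (x : ℝ), τ ^ (k + 1) ≤ x → x ≤ τ ^ k →
      M (τ ^ (k + 1)) ≤ M x ∧ M x ≤ M (τ ^ k) := by
    intro k x hx1 hx2
    have hww : τ ^ (k + 1) < τ ^ k := pow_lt_pow_right_of_lt_one₀ hτ0 hτ1 (lt_add_one k)
    have hd : M (τ ^ (k + 1)) ≤ M (τ ^ k) := by
      rw [hMF, hMF]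
      exact Real.rpow_le_rpow_of_exponent_ge hτ0 hτ1.le (hFstep k).1
    have heq := hMaff k x ⟨hx1, hx2⟩
    have hwpos : (0:ℝ) < τ ^ k - τ ^ (k + 1) := by linarith
    constructor
    · rw [heq]
      have h0 : 0 ≤ (x - τ ^ (k + 1)) * (M (τ ^ k) - M (τ ^ (k + 1))) / (τ ^ k - τ ^ (k + 1)) :=
        div_nonneg (mul_nonneg (by linarith) (by linarith)) hwpos.le
      linarith
    · rw [heq]
      have hle : (x - τ ^ (k + 1)) * (M (τ ^ k) - M (τ ^ (k + 1))) / (τ ^ k - τ ^ (k + 1))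
          ≤ M (τ ^ k) - M (τ ^ (k + 1)) := by
        rw [div_le_iff₀ hwpos]
        nlinarith [mul_nonneg (sub_nonneg.mpr hd) (sub_nonneg.mpr hx2)]
      linarith
  -- locating a point in the dyadic-type grid
  have hloc : ∀ x : ℝ, 0 < x → x ≤ 1 →
      ∃ k : ℕ, τ ^ (k + 1) ≤ x ∧ x ≤ τ ^ k ∧ ∀ m : ℕ, x ≤ τ ^ m → m ≤ k := by
    intro x hx0 hx1
    have hex : ∃ n : ℕ, τ ^ n < x := exists_pow_lt_of_lt_one hx0 hτ1
    have hNs : τ ^ (Nat.find hex) < x := Nat.find_spec hex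
    have hN1 : 1 ≤ Nat.find hex := by
      by_contra h
      push_neg at h
      have h0 : Nat.find hex = 0 := by omega
      rw [h0, pow_zero] at hNs
      linarith
    refine ⟨Nat.find hex - 1, ?_, ?_, ?_⟩
    · have e : Nat.find hex - 1 + 1 = Nat.find hex := by omega
      rw [e]; exact hNs.le
    · exact not_lt.mp (Nat.find_min hex (m := Nat.find hex - 1) (by omega))
    · intro m hm
      by_contra hcon
      push_neg at hcon
      have : τ ^ m ≤ τ ^ (Nat.find hex) := pow_le_pow_of_le_one hτ0.le hτ1.le (by omega)
      linarith
  -- main argument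
  intro lam t hl0 hl1 ht0 ht1
  obtain ⟨a, ha1, ha2, _⟩ := hloc lam hl0 hl1
  obtain ⟨b, hb1, hb2, _⟩ := hloc t ht0 ht1
  obtain ⟨k, hk1, hk2, hkmax⟩ := hloc (lam * t) (mul_pos hl0 ht0) (by nlinarith)
  have hkab : a + b ≤ k := by
    apply hkmax
    rw [pow_add]
    exact mul_le_mul ha2 hb2 ht0.le (pow_nonneg hτ0.le a)
  have e1 : M (lam * t) ≤ τ ^ (F k) := by
    rw [← hMF]; exact (hMbound k _ hk1 hk2).2
  have hexp : F (a + 1) + F (b + 1) + -(2 * p) ≤ F k := by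
    have h5 := hFmono hkab
    have h6 := hFsuper a b
    have h7 := (hFstep a).2
    have h8 := (hFstep b).2
    linarith
  have e2 : τ ^ (F k) ≤ τ ^ (F (a + 1) + F (b + 1) + -(2 * p)) :=
    Real.rpow_le_rpow_of_exponent_ge hτ0 hτ1.le hexp
  have e3 : τ ^ (F (a + 1) + F (b + 1) + -(2 * p))
      = τ ^ (-(2 * p)) * τ ^ (F (a + 1)) * τ ^ (F (b + 1)) := by
    rw [Real.rpow_add hτ0, Real.rpow_add hτ0]; ring
  have hMl : τ ^ (F (a + 1)) ≤ M lam := by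
    rw [← hMF]; exact (hMbound a lam ha1 ha2).1
  have hMt : τ ^ (F (b + 1)) ≤ M t := by
    rw [← hMF]; exact (hMbound b t hb1 hb2).1
  have p1 : (0:ℝ) < τ ^ (-(2 * p)) := Real.rpow_pos_of_pos hτ0 _
  have p2 : (0:ℝ) ≤ τ ^ (F (b + 1)) := (Real.rpow_pos_of_pos hτ0 _).le
  have p3 : (0:ℝ) ≤ M lam := le_trans (Real.rpow_pos_of_pos hτ0 _).le hMl
  calc M (lam * t) ≤ τ ^ (F k) := e1
    _ ≤ τ ^ (-(2 * p)) * τ ^ (F (a + 1)) * τ ^ (F (b + 1)) := by rw [← e3]; exact e2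
    _ ≤ τ ^ (-(2 * p)) * M lam * M t :=
        mul_le_mul (mul_le_mul_of_nonneg_left hMl p1.le) hMt p2 (mul_nonneg p1.le p3)
end

section
/- Fix 0 < τ < 1 and 1 < r < p < ∞. Let (n_k)_{k≥1} be a strictly increasing sequence of positive integers with n₁ = 1 and with the gaps n_{k+1} − n_k nondecreasing and tending to infinity; define ρ(i) = 0 if i = n_k for some k and ρ(i) = 1 otherwise, and let M := M_ρ. Let C_{M,1} denote the closed convex hull in the Banach space C([0,1]) of the closure of the set of functions { t ↦ M(λt)/M(λ) : 0 < λ < 1 }. Then every N ∈ C_{M,1} satisfies N(t) ≤ τ^{−2p} M(t) for all t ∈ [0,1]. -/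
/-! Write `e k` for the exponent with `M (τ ^ k) = τ ^ e k`. It grows by `r` or `p` at each
step, and `M` is affine between consecutive nodes, so `τ ^ (e k + p) ≤ M t ≤ τ ^ e k` whenever
`τ ^ (k + 1) ≤ t ≤ τ ^ k`. Since the gaps of `(n_k)` are nondecreasing and `n₁ = 1`, no interval
`(j, j + k]` contains more of the `n_i` than `(0, k]`, so `e` is superadditive. With `λ` and `t`
in the brackets of `j` and `k`, this gives
`M (λ t) ≤ τ ^ e (j + k) ≤ τ ^ (e j + e k) ≤ τ ^ (-2p) M λ M t`.
The resulting pointwise bound cuts out a closed convex subset of `C([0,1])`, hence also holds on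
the closed convex hull. -/

open Finset Real

section GapMonotone

variable {s : ℕ → ℕ}

theorem add_le_add_of_monotone_gaps (hs : Monotone s) (hgap : Monotone fun i => s (i + 1) - s i)
    (a i : ℕ) : s i + s a ≤ s (a + i) + s 0 := by
  induction i with
  | zero => simp [add_comm]
  | succ i ih =>
    have hgi := hgap (Nat.le_add_left i a)
    have := hs (Nat.le_add_right i 1)
    have := hs (Nat.le_add_right (a + i) 1)
    simp only at hgi
    rw [← add_assoc]
    omega

theorem card_preimage_Ioc_le (hs : StrictMono s) (hgap : Monotone fun i => s (i + 1) - s i)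
    (hs0 : s 0 = 1) (j k : ℕ) :
    #((Ioc j (j + k)).preimage s hs.injective.injOn) ≤
      #((Ioc 0 k).preimage s hs.injective.injOn) := by
  set I := (Ioc j (j + k)).preimage s hs.injective.injOn
  rcases I.eq_empty_or_nonempty with hI | hI
  · simp [hI]
  obtain ⟨a, haI, hamin⟩ : ∃ a ∈ I, ∀ i ∈ I, a ≤ i := ⟨_, I.min'_mem hI, I.min'_le⟩
  refine card_le_card_of_injOn (· - a) (fun i hi => ?_) (fun i hi i' hi' hii' => ?_)
  · have hai := hamin i hi
    have hshift := add_le_add_of_monotone_gaps hs.monotone hgap a (i - a)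
    rw [Nat.add_sub_cancel' hai] at hshift
    have := hs.monotone (Nat.zero_le (i - a))
    simp only [I, coe_preimage, Set.mem_preimage, coe_Ioc, Set.mem_Ioc, mem_preimage,
      mem_Ioc] at haI hi ⊢
    omega
  · have := hamin i hi
    have := hamin i' hi'
    simp only at hii'
    omega

theorem sum_Ioc_indicator_range (hs : StrictMono s) (a b : ℕ) :
    ∑ n ∈ Ioc a b, (Set.range s).indicator (1 : ℕ → ℝ) n =
      #((Ioc a b).preimage s hs.injective.injOn) := by
  rw [← sum_preimage s _ hs.injective.injOn _ fun n _ hn => Set.indicator_of_notMem hn _]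
  simp

theorem sum_Ioc_indicator_compl_range_le (hs : StrictMono s)
    (hgap : Monotone fun i => s (i + 1) - s i) (hs0 : s 0 = 1) (j k : ℕ) :
    ∑ n ∈ Ioc 0 k, (Set.range s)ᶜ.indicator (1 : ℕ → ℝ) n ≤
      ∑ n ∈ Ioc j (j + k), (Set.range s)ᶜ.indicator 1 n := by
  simp only [Set.indicator_compl, Pi.sub_apply, sum_sub_distrib, sum_Ioc_indicator_range hs,
    Pi.one_apply, sum_const, Nat.card_Ioc, nsmul_one, Nat.add_sub_cancel_left, Nat.sub_zero]
  have := card_preimage_Ioc_le hs hgap hs0 j k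
  gcongr

end GapMonotone

def metaExponent (r p : ℝ) (η : ℕ → ℝ) (k : ℕ) : ℝ :=
  r * k + (p - r) * ∑ n ∈ Icc 1 k, η n

section MetaExponent

variable {r p : ℝ} {η : ℕ → ℝ}

theorem metaExponent_succ (k : ℕ) :
    metaExponent r p η (k + 1) = metaExponent r p η k + (r + (p - r) * η (k + 1)) := by
  simp only [metaExponent, sum_Icc_succ_top (Nat.le_add_left 1 k)]
  push_cast
  ring

theorem monotone_metaExponent (hr : 0 ≤ r) (hrp : r ≤ p) (hη : ∀ n, 0 ≤ η n) :
    Monotone (metaExponent r p η) :=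
  monotone_nat_of_le_succ fun k => by
    rw [metaExponent_succ]
    have := mul_nonneg (sub_nonneg.2 hrp) (hη (k + 1))
    linarith

theorem metaExponent_succ_le (hrp : r ≤ p) (hη : ∀ n, η n ≤ 1) (k : ℕ) :
    metaExponent r p η (k + 1) ≤ metaExponent r p η k + p := by
  rw [metaExponent_succ]
  have := mul_le_mul_of_nonneg_left (hη (k + 1)) (sub_nonneg.2 hrp)
  linarith

theorem metaExponent_add_le (hrp : r ≤ p)
    (hη : ∀ j k, ∑ n ∈ Ioc 0 k, η n ≤ ∑ n ∈ Ioc j (j + k), η n) (j k : ℕ) :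
    metaExponent r p η j + metaExponent r p η k ≤ metaExponent r p η (j + k) := by
  have hsplit := sum_Ioc_consecutive η (Nat.zero_le j) (Nat.le_add_right j k)
  have := mul_le_mul_of_nonneg_left (hη j k) (sub_nonneg.2 hrp)
  have hIcc (m : ℕ) : Icc 1 m = Ioc 0 m := Icc_add_one_left_eq_Ioc 0 m
  simp only [metaExponent, hIcc, ← hsplit]
  push_cast
  linarith

end MetaExponent

section IsMeta

variable {τ r p : ℝ} {η : ℕ → ℝ} {M : ℝ → ℝ}

theorem IsMeta.apply_mem_Icc (hM : IsMeta τ r p η M) (hτ0 : 0 < τ) (hτ1 : τ < 1)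
    (he : Monotone (metaExponent r p η)) {k : ℕ} {x : ℝ}
    (hx : x ∈ Set.Icc (τ ^ (k + 1)) (τ ^ k)) :
    M x ∈ Set.Icc (τ ^ metaExponent r p η (k + 1)) (τ ^ metaExponent r p η k) := by
  have hlen : 0 < τ ^ k - τ ^ (k + 1) :=
    sub_pos.2 (pow_lt_pow_right_of_lt_one₀ hτ0 hτ1 k.lt_succ_self)
  have hθ0 : 0 ≤ (x - τ ^ (k + 1)) / (τ ^ k - τ ^ (k + 1)) :=
    div_nonneg (sub_nonneg.2 hx.1) hlen.le
  have hθ1 : (x - τ ^ (k + 1)) / (τ ^ k - τ ^ (k + 1)) ≤ 1 :=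
    (div_le_one₀ hlen).2 (by linarith [hx.2])
  have hval : τ ^ metaExponent r p η (k + 1) ≤ τ ^ metaExponent r p η k :=
    rpow_le_rpow_of_exponent_ge hτ0 hτ1.le (he k.le_succ)
  have hnode (m : ℕ) : M (τ ^ m) = τ ^ metaExponent r p η m := hM.2.1 m
  rw [hM.2.2 k x hx, mul_div_right_comm, hnode, hnode]
  exact ⟨by nlinarith, by nlinarith⟩

theorem IsMeta.le_rpow_of_le_pow (hM : IsMeta τ r p η M) (hτ0 : 0 < τ) (hτ1 : τ < 1)
    (he : Monotone (metaExponent r p η)) {m : ℕ} {x : ℝ} (hx : 0 < x) (hxm : x ≤ τ ^ m) :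
    M x ≤ τ ^ metaExponent r p η m := by
  obtain ⟨k, hk1, hk⟩ :=
    exists_nat_pow_near_of_lt_one hx (hxm.trans (pow_le_one₀ hτ0.le hτ1.le)) hτ0 hτ1
  have hmk : m < k + 1 := (pow_lt_pow_iff_right_of_lt_one₀ hτ0 hτ1).1 (hk1.trans_le hxm)
  exact (hM.apply_mem_Icc hτ0 hτ1 he ⟨hk1.le, hk⟩).2.trans
    (rpow_le_rpow_of_exponent_ge hτ0 hτ1.le (he (Nat.lt_succ_iff.1 hmk)))

theorem IsMeta.exists_le_pow_rpow_add_le (hM : IsMeta τ r p η M) (hτ0 : 0 < τ) (hτ1 : τ < 1)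
    (he : Monotone (metaExponent r p η))
    (hp : ∀ k, metaExponent r p η (k + 1) ≤ metaExponent r p η k + p)
    {x : ℝ} (hx0 : 0 < x) (hx1 : x ≤ 1) :
    ∃ k : ℕ, x ≤ τ ^ k ∧ τ ^ (metaExponent r p η k + p) ≤ M x := by
  obtain ⟨k, hk1, hk⟩ := exists_nat_pow_near_of_lt_one hx0 hx1 hτ0 hτ1
  exact ⟨k, hk, (rpow_le_rpow_of_exponent_ge hτ0 hτ1.le (hp k)).trans
    (hM.apply_mem_Icc hτ0 hτ1 he ⟨hk1.le, hk⟩).1⟩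

theorem IsMeta.div_le_rpow_mul (hM : IsMeta τ r p η M) (hτ0 : 0 < τ) (hτ1 : τ < 1)
    (he : Monotone (metaExponent r p η))
    (hp : ∀ k, metaExponent r p η (k + 1) ≤ metaExponent r p η k + p)
    (hsup : ∀ j k, metaExponent r p η j + metaExponent r p η k ≤ metaExponent r p η (j + k))
    {lam t : ℝ} (hl0 : 0 < lam) (hl1 : lam < 1) (ht0 : 0 ≤ t) (ht1 : t ≤ 1) :
    M (lam * t) / M lam ≤ τ ^ (-(2 * p)) * M t := by
  obtain ⟨j, hj, hMlam⟩ := hM.exists_le_pow_rpow_add_le hτ0 hτ1 he hp hl0 hl1.le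
  have hMlam_pos : 0 < M lam := (rpow_pos_of_pos hτ0 _).trans_le hMlam
  rcases ht0.eq_or_lt with rfl | ht0
  · simp [hM.1]
  obtain ⟨k, hk, hMt⟩ := hM.exists_le_pow_rpow_add_le hτ0 hτ1 he hp ht0 ht1
  have hlamt : lam * t ≤ τ ^ (j + k) := by
    rw [pow_add]
    exact mul_le_mul hj hk ht0.le (pow_nonneg hτ0.le j)
  rw [div_le_iff₀ hMlam_pos]
  calc M (lam * t) ≤ τ ^ metaExponent r p η (j + k) :=
        hM.le_rpow_of_le_pow hτ0 hτ1 he (mul_pos hl0 ht0) hlamt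
    _ ≤ τ ^ (metaExponent r p η j + metaExponent r p η k) :=
        rpow_le_rpow_of_exponent_ge hτ0 hτ1.le (hsup j k)
    _ = τ ^ (-(2 * p)) * (τ ^ (metaExponent r p η k + p) * τ ^ (metaExponent r p η j + p)) := by
        rw [← rpow_add hτ0, ← rpow_add hτ0]
        ring_nf
    _ ≤ τ ^ (-(2 * p)) * (M t * M lam) := by
        gcongr
        exact (rpow_pos_of_pos hτ0 _).le.trans hMt
    _ = τ ^ (-(2 * p)) * M t * M lam := (mul_assoc _ _ _).symm

end IsMeta

namespace ContinuousMap

variable {X : Type*} [TopologicalSpace X]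

theorem isClosed_setOf_forall_apply_le (g : X → ℝ) :
    IsClosed {f : C(X, ℝ) | ∀ x, f x ≤ g x} := by
  simp only [Set.ofPred_forall]
  exact isClosed_iInter fun x => isClosed_le (continuous_eval_const x) continuous_const

theorem convex_setOf_forall_apply_le (g : X → ℝ) : Convex ℝ {f : C(X, ℝ) | ∀ x, f x ≤ g x} := by
  simp only [Set.ofPred_forall]
  exact convex_iInter fun x => convex_halfSpace_le (evalCLM ℝ x).isLinear (g x)

end ContinuousMap

theorem statement10_general (τ r p : ℝ) (hτ0 : 0 < τ) (hτ1 : τ < 1) (hr : 1 < r) (hrp : r < p)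
    (nk : ℕ → ℕ) (hnk1 : nk 1 = 1)
    (hmono : ∀ k : ℕ, 1 ≤ k → nk k < nk (k + 1))
    (hgap : ∀ k : ℕ, 1 ≤ k → nk (k + 1) - nk k ≤ nk (k + 2) - nk (k + 1))
    (ρ : ℕ → ℝ)
    (hρ0 : ∀ k : ℕ, 1 ≤ k → ρ (nk k) = 0)
    (hρ1 : ∀ i : ℕ, (∀ k : ℕ, 1 ≤ k → nk k ≠ i) → ρ i = 1)
    (M : ℝ → ℝ) (hM : IsMeta τ r p ρ M) :
    ∀ N : C(Set.Icc (0 : ℝ) 1, ℝ),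
      N ∈ closure (convexHull ℝ (closure
        {f : C(Set.Icc (0 : ℝ) 1, ℝ) | ∃ lam : ℝ, 0 < lam ∧ lam < 1 ∧
          ∀ t : Set.Icc (0 : ℝ) 1, f t = M (lam * (t : ℝ)) / M lam})) →
      ∀ t : Set.Icc (0 : ℝ) 1, N t ≤ τ ^ (-(2 * p)) * M (t : ℝ) := by
  intro N hN
  set s : ℕ → ℕ := fun i => nk (i + 1)
  have hs : StrictMono s := strictMono_nat_of_lt_succ fun i => hmono (i + 1) (Nat.le_add_left 1 i)
  have hsgap : Monotone fun i => s (i + 1) - s i :=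
    monotone_nat_of_le_succ fun i => hgap (i + 1) (Nat.le_add_left 1 i)
  have hρ : ρ = (Set.range s)ᶜ.indicator 1 := by
    ext n
    by_cases hn : n ∈ Set.range s
    · obtain ⟨i, rfl⟩ := hn
      simpa using hρ0 (i + 1) (Nat.le_add_left 1 i)
    · refine (hρ1 n fun k hk hkn => hn ⟨k - 1, ?_⟩).trans (Set.indicator_of_mem hn 1).symm
      simp only [s, Nat.sub_add_cancel hk, hkn]
  have hρ_nonneg : ∀ n, 0 ≤ ρ n := hρ ▸ Set.indicator_nonneg fun _ _ => zero_le_one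
  have hρ_le_one : ∀ n, ρ n ≤ 1 := hρ ▸ Set.indicator_le_self' fun _ _ => zero_le_one
  have hbound : {f : C(Set.Icc (0 : ℝ) 1, ℝ) | ∃ lam : ℝ, 0 < lam ∧ lam < 1 ∧
      ∀ t : Set.Icc (0 : ℝ) 1, f t = M (lam * (t : ℝ)) / M lam} ⊆
      {f | ∀ t : Set.Icc (0 : ℝ) 1, f t ≤ τ ^ (-(2 * p)) * M t} := by
    rintro f ⟨lam, hl0, hl1, hf⟩ t
    rw [hf t]
    exact hM.div_le_rpow_mul hτ0 hτ1 (monotone_metaExponent (by linarith) hrp.le hρ_nonneg)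
      (metaExponent_succ_le hrp.le hρ_le_one)
      (metaExponent_add_le hrp.le (hρ ▸ sum_Ioc_indicator_compl_range_le hs hsgap hnk1))
      hl0 hl1 t.2.1 t.2.2
  rw [← closedConvexHull_eq_closure_convexHull, closedConvexHull_closure_eq_closedConvexHull] at hN
  exact closedConvexHull_min hbound (ContinuousMap.convex_setOf_forall_apply_le _)
    (ContinuousMap.isClosed_setOf_forall_apply_le _) hN

/-- inequality (3.2) in the proof of Lemma 3.8. Every
`N ∈ C_{M,1}` — the closed convex hull in `C([0,1])` of the closure of
`{ t ↦ M(λ t)/M(λ) : 0 < λ < 1 }` — satisfies `N t ≤ τ^(-2p) M t` for `t ∈ [0,1]`. -/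
theorem statement10 (τ r p : ℝ) (hτ0 : 0 < τ) (hτ1 : τ < 1) (hr : 1 < r) (hrp : r < p)
    (h1 : τ ^ (r - 1) * (1 - τ ^ p) ≤ 1 - τ ^ r)
    (h2 : τ ^ (p - 1) * (1 - τ ^ r) ≤ 1 - τ ^ p)
    (nk : ℕ → ℕ) (hnk1 : nk 1 = 1)
    (hmono : ∀ k : ℕ, 1 ≤ k → nk k < nk (k + 1))
    (hgap : ∀ k : ℕ, 1 ≤ k → nk (k + 1) - nk k ≤ nk (k + 2) - nk (k + 1))
    (hgap' : Filter.Tendsto (fun k => nk (k + 1) - nk k) Filter.atTop Filter.atTop)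
    (ρ : ℕ → ℝ)
    (hρ0 : ∀ k : ℕ, 1 ≤ k → ρ (nk k) = 0)
    (hρ1 : ∀ i : ℕ, (∀ k : ℕ, 1 ≤ k → nk k ≠ i) → ρ i = 1)
    (M : ℝ → ℝ) (hM : IsMeta τ r p ρ M) :
    ∀ N : C(Set.Icc (0 : ℝ) 1, ℝ),
      N ∈ closure (convexHull ℝ (closure
        {f : C(Set.Icc (0 : ℝ) 1, ℝ) | ∃ lam : ℝ, 0 < lam ∧ lam < 1 ∧
          ∀ t : Set.Icc (0 : ℝ) 1, f t = M (lam * (t : ℝ)) / M lam})) →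
      ∀ t : Set.Icc (0 : ℝ) 1, N t ≤ τ ^ (-(2 * p)) * M (t : ℝ) :=
  statement10_general τ r p hτ0 hτ1 hr hrp nk hnk1 hmono hgap ρ hρ0 hρ1 M hM
end
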